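/- arXiv:2306.07645 — 4 statements merged into one kernel-verified Lean document; each statement's English description precedes it below -/
import Mathlib

section
/- There exists a constant C = C(α,c₀) such that for all m ∈ ℝ, all N, N₁, N₂, N₃ with 1 ≤ N₁, N₂, N₃ ≤ N, and every finitely supported function a : ℤ² → ℂ: (a) Σ_{(k₂,k₃)∈ℤ²} | Σ_{(k,k₁): (k,k₁,k₂,k₃)∈S} a(k,k₁) |² ≤ C·(min(N₂,N₃))^{2−α}·N₁^{2−α}·Σ_{(k,k₁)}|a(k,k₁)|²; (b) Σ_{(k₁,k₂)∈ℤ²} | Σ_{(k,k₃): (k,k₁,k₂,k₃)∈S} a(k,k₃) |² ≤ C·(min(N₁,N₂))^{2−α}·N₃^{2−α}·Σ_{(k,k₃)}|a(k,k₃)|²; (c) Σ_{(k₁,k₃)∈ℤ²} | Σ_{(k,k₂): (k,k₁,k₂,k₃)∈S} a(k,k₂) |² ≤ C·(min(N₁,N₃))^{1−α/2}·(min(N,N₂))^{1−α/2}·Σ_{(k,k₂)}|a(k,k₂)|². -/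
/-- The set `S ⊆ ℤ⁴` of frequencies `(k, k₁, k₂, k₃)` with `k = k₁ - k₂ + k₃`,
`k₂ ∉ {k₁, k₃}`, `| |k₁|^α - |k₂|^α + |k₃|^α - |k|^α - m | ≤ c₀`, `|k| ≤ N` and
`|kⱼ| ≤ Nⱼ` for `j = 1, 2, 3`. -/
def Sset (α c₀ m N N₁ N₂ N₃ : ℝ) : Set (ℤ × ℤ × ℤ × ℤ) :=
  {p | p.1 = p.2.1 - p.2.2.1 + p.2.2.2 ∧ p.2.2.1 ≠ p.2.1 ∧ p.2.2.1 ≠ p.2.2.2 ∧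
    |(|p.2.1| : ℝ) ^ α - (|p.2.2.1| : ℝ) ^ α + (|p.2.2.2| : ℝ) ^ α - (|p.1| : ℝ) ^ α - m| ≤ c₀ ∧
    (|p.1| : ℝ) ≤ N ∧ (|p.2.1| : ℝ) ≤ N₁ ∧ (|p.2.2.1| : ℝ) ≤ N₂ ∧ (|p.2.2.2| : ℝ) ≤ N₃}

section AllLemmas
open Real
/-- Tangent line inequality for convex `rpow`, `p ≥ 1`. -/
lemma my_tangent_ge {m y p : ℝ} (hm : 0 < m) (hy : 0 ≤ y) (hp : 1 ≤ p) :
    m ^ p + p * m ^ (p - 1) * (y - m) ≤ y ^ p := by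
  have hs : -1 ≤ y / m - 1 := by
    have : 0 ≤ y / m := div_nonneg hy hm.le
    linarith
  have h := one_add_mul_self_le_rpow_one_add hs hp
  rw [show 1 + (y/m - 1) = y/m by ring, Real.div_rpow hy hm.le] at h
  have hmp : 0 < m ^ p := rpow_pos_of_pos hm p
  have h2 := mul_le_mul_of_nonneg_left h hmp.le
  rw [mul_div_cancel₀ _ hmp.ne'] at h2
  have hmm : m ^ p = m ^ (p-1) * m := by
    rw [← Real.rpow_add_one hm.ne', sub_add_cancel]
  calc m ^ p + p * m ^ (p - 1) * (y - m)
      = m ^ p * (1 + p * (y / m - 1)) := by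
        rw [hmm]; field_simp
    _ ≤ y ^ p := h2

/-- Tangent line inequality for concave `rpow`, `0 ≤ p ≤ 1`. -/
lemma my_tangent_le {m y p : ℝ} (hm : 0 < m) (hy : 0 ≤ y) (hp0 : 0 ≤ p) (hp1 : p ≤ 1) :
    y ^ p ≤ m ^ p + p * m ^ (p - 1) * (y - m) := by
  have hs : -1 ≤ y / m - 1 := by
    have : 0 ≤ y / m := div_nonneg hy hm.le
    linarith
  have h := rpow_one_add_le_one_add_mul_self hs hp0 hp1
  rw [show 1 + (y/m - 1) = y/m by ring, Real.div_rpow hy hm.le] at h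
  have hmp : 0 < m ^ p := rpow_pos_of_pos hm p
  have h2 := mul_le_mul_of_nonneg_left h hmp.le
  rw [mul_div_cancel₀ _ hmp.ne'] at h2
  have hmm : m ^ p = m ^ (p-1) * m := by
    rw [← Real.rpow_add_one hm.ne', sub_add_cancel]
  calc y ^ p ≤ m ^ p * (1 + p * (y / m - 1)) := h2
    _ = m ^ p + p * m ^ (p - 1) * (y - m) := by rw [hmm]; field_simp

/-- Quantitative second-difference bound for `x ^ α`, `x ≥ 1`. -/
lemma sd_real {α : ℝ} (hα1 : 1 < α) (hα2 : α < 2) {x : ℝ} (hx : 1 ≤ x) :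
    α * (α - 1) * (x + 1) ^ (α - 2) ≤ (x + 1) ^ α - 2 * x ^ α + (x - 1) ^ α := by
  set β := α - 1 with hβ
  have hβ0 : 0 < β := by simp [hβ]; linarith
  have hβ1 : β < 1 := by simp [hβ]; linarith
  have hxpos : (0:ℝ) < x := by linarith
  -- integrability of the pieces on [x, x+1]
  have hc1 : ContinuousOn (fun t : ℝ => t ^ β) (Set.uIcc x (x+1)) := by
    apply ContinuousOn.rpow_const continuousOn_id
    intro t ht
    left
    intro h0
    simp only [id_eq] at h0
    rcases Set.mem_uIcc.1 ht with h | h <;> rw [h0] at h <;>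
      [exact absurd h.1 (by linarith); exact absurd h.2 (by linarith)]
  have hc2 : ContinuousOn (fun t : ℝ => (t - 1) ^ β) (Set.uIcc x (x+1)) := by
    apply ContinuousOn.rpow_const (by fun_prop)
    intro t ht
    right; exact hβ0.le
  have hi1 : IntervalIntegrable (fun t : ℝ => t ^ β) MeasureTheory.volume x (x+1) :=
    hc1.intervalIntegrable
  have hi2 : IntervalIntegrable (fun t : ℝ => (t - 1) ^ β) MeasureTheory.volume x (x+1) :=
    hc2.intervalIntegrable
  have hI1 : ∫ t in x..(x+1), t ^ β = ((x+1) ^ α - x ^ α) / α := by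
    rw [integral_rpow (Or.inl (by linarith))]
    rw [show β + 1 = α by simp [hβ]]
  have hI2 : ∫ t in x..(x+1), (t - 1) ^ β = (x ^ α - (x-1) ^ α) / α := by
    rw [intervalIntegral.integral_comp_sub_right (fun t => t ^ β) 1]
    rw [integral_rpow (Or.inl (by linarith))]
    rw [show β + 1 = α by simp [hβ]]
    norm_num
  have hptw : ∀ t ∈ Set.Icc x (x+1), β * (x+1) ^ (β - 1) ≤ t ^ β - (t - 1) ^ β := by
    intro t ht
    obtain ⟨ht1, ht2⟩ := ht
    have htpos : (0:ℝ) < t := by linarith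
    have h1 : (t - 1) ^ β ≤ t ^ β + β * t ^ (β - 1) * ((t-1) - t) :=
      my_tangent_le htpos (by linarith) hβ0.le hβ1.le
    have h2 : (x + 1) ^ (β - 1) ≤ t ^ (β - 1) :=
      Real.rpow_le_rpow_of_nonpos htpos (by linarith) (by linarith)
    nlinarith
  have hmono := intervalIntegral.integral_mono_on (by linarith : x ≤ x + 1)
    (intervalIntegrable_const) (hi1.sub hi2) hptw
  rw [intervalIntegral.integral_sub hi1 hi2, hI1, hI2, intervalIntegral.integral_const] at hmono
  simp only [add_sub_cancel_left, one_smul] at hmono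
  have hα0 : (0:ℝ) < α := by linarith
  have := mul_le_mul_of_nonneg_left hmono hα0.le
  have heq : β - 1 = α - 2 := by simp [hβ]; ring
  rw [heq] at this
  calc α * (α - 1) * (x + 1) ^ (α - 2) = α * (β * (x+1) ^ (α-2)) := by rw [hβ]; ring
    _ ≤ α * (((x+1)^α - x^α)/α - (x^α - (x-1)^α)/α) := this
    _ = (x + 1) ^ α - 2 * x ^ α + (x - 1) ^ α := by field_simp; ring

/-- Second-difference bound for `|·| ^ α` at integers. -/
lemma secdiff_int {α : ℝ} (hα1 : 1 < α) (hα2 : α < 2) (n : ℤ) :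
    α * (α - 1) * (|(n:ℝ)| + 1) ^ (α - 2) ≤
      |(n:ℝ) + 1| ^ α - 2 * |(n:ℝ)| ^ α + |(n:ℝ) - 1| ^ α := by
  rcases lt_trichotomy n 0 with hn | hn | hn
  · -- n ≤ -1 : use sd_real with y = -n
    have hy : (1:ℝ) ≤ -(n:ℝ) := by
      have h' : n ≤ -1 := by omega
      have h'' : (n:ℝ) ≤ ((-1:ℤ):ℝ) := Int.cast_le.mpr h'
      push_cast at h''; linarith
    have h := sd_real hα1 hα2 hy
    have e1 : |(n:ℝ) + 1| = -(n:ℝ) - 1 := by rw [abs_of_nonpos (by linarith)]; ring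
    have e2 : |(n:ℝ)| = -(n:ℝ) := by rw [abs_of_nonpos (by linarith)]
    have e3 : |(n:ℝ) - 1| = -(n:ℝ) + 1 := by rw [abs_of_nonpos (by linarith)]; ring
    rw [e1, e2, e3]
    calc α * (α - 1) * (-(n:ℝ) + 1) ^ (α - 2) ≤ (-(n:ℝ) + 1) ^ α - 2 * (-(n:ℝ)) ^ α + (-(n:ℝ) - 1) ^ α := h
      _ = (-(n:ℝ) - 1) ^ α - 2 * (-(n:ℝ)) ^ α + (-(n:ℝ) + 1) ^ α := by ring
  · subst hn
    simp only [Int.cast_zero, abs_zero, zero_add, zero_sub, abs_neg, abs_one, Real.one_rpow]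
    rw [Real.zero_rpow (show α ≠ 0 by intro h; rw [h] at hα1; linarith)]
    nlinarith
  · have hy : (1:ℝ) ≤ (n:ℝ) := by
      have : 1 ≤ n := hn
      exact_mod_cast this
    have h := sd_real hα1 hα2 hy
    have e1 : |(n:ℝ) + 1| = (n:ℝ) + 1 := abs_of_nonneg (by linarith)
    have e2 : |(n:ℝ)| = (n:ℝ) := abs_of_nonneg (by linarith)
    have e3 : |(n:ℝ) - 1| = (n:ℝ) - 1 := abs_of_nonneg (by linarith)
    rw [e1, e2, e3]; exact h

/-- Telescoping lower bound. -/
lemma tele {f : ℤ → ℝ} {δ : ℝ} {a : ℤ} :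
    ∀ b : ℤ, a ≤ b → (∀ j : ℤ, a ≤ j → j < b → δ ≤ f (j + 1) - f j) →
    ((b - a : ℤ) : ℝ) * δ ≤ f b - f a := by
  intro b hb
  refine Int.le_induction (motive := fun n _ => (∀ j : ℤ, a ≤ j → j < n → δ ≤ f (j + 1) - f j) →
      ((n - a : ℤ) : ℝ) * δ ≤ f n - f a) ?_ ?_ b hb
  · intro _; simp
  · intro n hn ih h
    have h1 := ih (fun j hj hj2 => h j hj (by omega))
    have h2 := h n hn (by omega)
    have e : ((n + 1 - a : ℤ) : ℝ) = ((n - a : ℤ) : ℝ) + 1 := by push_cast; ring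
    rw [e]
    calc (((n - a : ℤ):ℝ) + 1) * δ = ((n - a : ℤ):ℝ) * δ + δ := by ring
      _ ≤ (f n - f a) + (f (n+1) - f n) := by linarith
      _ = f (n + 1) - f a := by ring

lemma card_le_diam {E : Finset ℤ} {L : ℝ} (hL : 0 ≤ L)
    (h : ∀ a ∈ E, ∀ b ∈ E, (b : ℝ) - (a : ℝ) ≤ L) : (E.card : ℝ) ≤ L + 1 := by
  rcases E.eq_empty_or_nonempty with rfl | hne
  · simp; linarith
  have hmin := E.min'_mem hne
  have hmax := E.max'_mem hne
  set u := E.min' hne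
  set v := E.max' hne
  have hsub : E ⊆ Finset.Icc u v := fun x hx =>
    Finset.mem_Icc.2 ⟨E.min'_le x hx, E.le_max' x hx⟩
  have hcard := Finset.card_le_card hsub
  rw [Int.card_Icc] at hcard
  have huv : u ≤ v := E.min'_le v hmax
  have hd : (v:ℝ) - (u:ℝ) ≤ L := h u hmin v hmax
  have h0 : ((v + 1 - u).toNat : ℤ) = v + 1 - u := Int.toNat_of_nonneg (by omega)
  have h1 : ((v + 1 - u).toNat : ℝ) = ((v:ℝ) + 1 - (u:ℝ)) := by
    have := congrArg (fun z : ℤ => (z : ℝ)) h0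
    push_cast at this ⊢
    linarith
  calc (E.card : ℝ) ≤ ((v + 1 - u).toNat : ℝ) := by exact_mod_cast hcard
    _ = (v:ℝ) + 1 - (u:ℝ) := h1
    _ ≤ L + 1 := by linarith

/-- Counting lemma for functions with increments bounded below. -/
lemma key1 {f : ℤ → ℝ} {δ μ c₀ : ℝ} (hδ : 0 < δ) (hc : 0 ≤ c₀) {E : Finset ℤ}
    (hstep : ∀ j : ℤ, (∃ x ∈ E, x ≤ j) → (∃ y ∈ E, j + 1 ≤ y) → δ ≤ f (j + 1) - f j)
    (hE : ∀ n ∈ E, |f n - μ| ≤ c₀) :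
    (E.card : ℝ) ≤ 2 * c₀ / δ + 1 := by
  apply card_le_diam (by positivity)
  intro a ha b hb
  rcases le_or_gt b a with hba | hab
  · have : (b:ℝ) ≤ (a:ℝ) := by exact_mod_cast hba
    have h0 : 0 ≤ 2 * c₀ / δ := by positivity
    linarith
  · have ht := tele b hab.le (fun j hj hj2 => hstep j ⟨a, ha, hj⟩ ⟨b, hb, by omega⟩)
    have h1 := abs_le.1 (hE a ha)
    have h2 := abs_le.1 (hE b hb)
    have hba : ((b - a : ℤ):ℝ) * δ ≤ 2 * c₀ := by
      have : f b - f a ≤ 2 * c₀ := by linarith [h1.1, h2.2]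
      linarith
    have : ((b - a : ℤ):ℝ) ≤ 2 * c₀ / δ := (le_div_iff₀ hδ).2 hba
    push_cast at this
    linarith

/-- Convex counting, increasing-part version. -/
lemma key2pos {f : ℤ → ℝ} {δ μ c₀ : ℝ} (hδ : 0 < δ) (hc : 0 ≤ c₀) {E : Finset ℤ}
    (hconv : ∀ m : ℤ, (∃ x ∈ E, x - 1 ≤ m) → (∃ y ∈ E, m ≤ y + 1) →
      δ ≤ f (m + 1) - 2 * f m + f (m - 1))
    (hpos : ∀ n ∈ E, 0 ≤ f (n + 1) - f n)
    (hE : ∀ n ∈ E, |f n - μ| ≤ c₀) :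
    (E.card : ℝ) ≤ 2 * Real.sqrt (2 * c₀ / δ) + 2 := by
  have hsq : 0 ≤ Real.sqrt (2 * c₀ / δ) := Real.sqrt_nonneg _
  have main : ∀ a ∈ E, ∀ b ∈ E, (b : ℝ) - (a : ℝ) ≤ 2 * Real.sqrt (2 * c₀ / δ) + 1 := by
    intro a ha b hb
    rcases le_or_gt ((b:ℝ) - (a:ℝ)) 1 with h1 | h1
    · linarith
    -- now b ≥ a + 2
    have hab : a + 2 ≤ b := by
      have : (1:ℝ) < (b:ℝ) - (a:ℝ) := h1
      have : a < b := by exact_mod_cast (by linarith : (a:ℝ) < (b:ℝ))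
      by_contra hcon
      have : b = a + 1 := by omega
      subst this
      push_cast at h1
      linarith
    set r : ℤ := b - a with hr
    have hr2 : 2 ≤ r := by omega
    set t : ℤ := r / 2 with ht
    have ht1 : 1 ≤ t := by omega
    have htr : t ≤ r - t := by omega
    set c : ℤ := a + t with hc'
    have hcb : c < b := by omega
    -- increments of d along [a, b-1]
    have hd : ∀ j : ℤ, a ≤ j → j ≤ b - 1 → ((j - a : ℤ):ℝ) * δ ≤ (f (j+1) - f j) - (f (a+1) - f a) := by
      intro j hj hjb
      have := tele (f := fun n => f (n+1) - f n) (δ := δ) (a := a) j hj ?_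
      · exact this
      · intro i hi hij
        have h2 := hconv (i+1) ⟨a, ha, by omega⟩ ⟨b, hb, by omega⟩
        have e1 : (i + 1 + 1 : ℤ) = i + 2 := by ring
        have e2 : (i + 1 - 1 : ℤ) = i := by ring
        rw [e1, e2] at h2
        calc δ ≤ f (i+2) - 2 * f (i+1) + f i := h2
          _ = (f (i + 1 + 1) - f (i+1)) - (f (i+1) - f i) := by rw [show (i+1+1:ℤ) = i+2 by ring]; ring
    have hda : 0 ≤ f (a + 1) - f a := hpos a ha
    -- f c - f a ≥ 0
    have h2 : (0:ℝ) ≤ f c - f a := by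
      have := tele (f := f) (δ := 0) (a := a) c (by omega) ?_
      · calc (0:ℝ) = ((c - a : ℤ):ℝ) * 0 := by ring
          _ ≤ f c - f a := this
      · intro j hj hjc
        have := hd j hj (by omega)
        have hj0 : (0:ℝ) ≤ ((j - a : ℤ):ℝ) := by
          have : (0:ℤ) ≤ j - a := by omega
          exact_mod_cast this
        nlinarith
    -- f b - f c ≥ (b - c) * (t * δ)
    have h3 : ((b - c : ℤ):ℝ) * (((t:ℤ):ℝ) * δ) ≤ f b - f c := by
      apply tele (f := f) (δ := ((t:ℤ):ℝ) * δ) (a := c) b (by omega)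
      intro j hj hjb
      have := hd j (by omega) (by omega)
      have hj0 : ((t:ℤ):ℝ) ≤ ((j - a : ℤ):ℝ) := by
        have : t ≤ j - a := by omega
        exact_mod_cast this
      nlinarith [mul_le_mul_of_nonneg_right hj0 hδ.le]
    have h4 : f b - f a ≤ 2 * c₀ := by
      have ha' := abs_le.1 (hE a ha)
      have hb' := abs_le.1 (hE b hb)
      linarith [ha'.1, hb'.2]
    -- combine : t^2 δ ≤ 2 c₀
    have htreal : ((t:ℤ):ℝ) * ((t:ℤ):ℝ) * δ ≤ 2 * c₀ := by
      have hbc : ((t:ℤ):ℝ) ≤ ((b - c : ℤ):ℝ) := by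
        have : t ≤ b - c := by omega
        exact_mod_cast this
      have htpos : (0:ℝ) ≤ ((t:ℤ):ℝ) := by positivity
      nlinarith [mul_le_mul_of_nonneg_right hbc (mul_nonneg htpos hδ.le)]
    have htle : ((t:ℤ):ℝ) ≤ Real.sqrt (2 * c₀ / δ) := by
      rw [show ((t:ℤ):ℝ) = Real.sqrt (((t:ℤ):ℝ)^2) from (Real.sqrt_sq (by positivity)).symm]
      apply Real.sqrt_le_sqrt
      rw [le_div_iff₀ hδ]
      nlinarith
    -- r ≤ 2t + 1
    have hrt : ((r:ℤ):ℝ) ≤ 2 * ((t:ℤ):ℝ) + 1 := by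
      have : r ≤ 2 * t + 1 := by omega
      exact_mod_cast this
    have : ((r:ℤ):ℝ) = (b:ℝ) - (a:ℝ) := by push_cast [hr]; ring
    linarith

  have := card_le_diam (L := 2 * Real.sqrt (2 * c₀ / δ) + 1) (by linarith) main
  linarith

/-- Convex counting lemma. -/
lemma key2 {f : ℤ → ℝ} {δ μ c₀ : ℝ} (hδ : 0 < δ) (hc : 0 ≤ c₀) {E : Finset ℤ}
    (hconv : ∀ m : ℤ, (∃ x ∈ E, x - 1 ≤ m) → (∃ y ∈ E, m ≤ y + 1) →
      δ ≤ f (m + 1) - 2 * f m + f (m - 1))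
    (hE : ∀ n ∈ E, |f n - μ| ≤ c₀) :
    (E.card : ℝ) ≤ 4 * Real.sqrt (2 * c₀ / δ) + 4 := by
  classical
  set P : ℤ → Prop := fun n => 0 ≤ f (n + 1) - f n with hP
  have hsplit := Finset.card_filter_add_card_filter_not (s := E) P
  set Ep := E.filter P
  set Em := E.filter (fun n => ¬ P n)
  have hEpsub : Ep ⊆ E := Finset.filter_subset _ _
  have hEmsub : Em ⊆ E := Finset.filter_subset _ _
  have hbp : ((Ep.card : ℝ)) ≤ 2 * Real.sqrt (2 * c₀ / δ) + 2 := by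
    apply key2pos hδ hc (μ := μ)
    · intro m hx hy
      obtain ⟨x, hxm, hxle⟩ := hx
      obtain ⟨y, hym, hyle⟩ := hy
      exact hconv m ⟨x, hEpsub hxm, hxle⟩ ⟨y, hEpsub hym, hyle⟩
    · intro n hn
      exact (Finset.mem_filter.1 hn).2
    · intro n hn
      exact hE n (hEpsub hn)
  have hbm : ((Em.card : ℝ)) ≤ 2 * Real.sqrt (2 * c₀ / δ) + 2 := by
    -- reflect : g n = f (-n), E' = image of Em under neg
    set g : ℤ → ℝ := fun n => f (-n) with hg
    set E' : Finset ℤ := Em.image (fun n => -n) with hE'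
    have hcards : E'.card = Em.card := Finset.card_image_of_injective _ neg_injective
    have hmem : ∀ n, n ∈ E' ↔ -n ∈ Em := by
      intro n
      simp only [hE', Finset.mem_image]
      constructor
      · rintro ⟨x, hx, rfl⟩; simpa using hx
      · intro h; exact ⟨-n, h, by ring⟩
    rw [← hcards]
    apply key2pos (f := g) hδ hc (μ := μ)
    · intro m hx hy
      obtain ⟨x, hxm, hxle⟩ := hx
      obtain ⟨y, hym, hyle⟩ := hy
      have h2 := hconv (-m) ⟨-y, hEmsub ((hmem y).1 hym), by omega⟩
        ⟨-x, hEmsub ((hmem x).1 hxm), by omega⟩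
      have e1 : (-m + 1 : ℤ) = -(m - 1) := by ring
      have e2 : (-m - 1 : ℤ) = -(m + 1) := by ring
      rw [e1, e2] at h2
      calc δ ≤ f (-(m-1)) - 2 * f (-m) + f (-(m+1)) := h2
        _ = g (m + 1) - 2 * g m + g (m - 1) := by simp only [hg]; ring
    · intro n hn
      have h2 := (Finset.mem_filter.1 ((hmem n).1 hn)).2
      simp only [hP, not_le] at h2
      have h3 := hconv (-n) ⟨-n, hEmsub ((hmem n).1 hn), by omega⟩
        ⟨-n, hEmsub ((hmem n).1 hn), by omega⟩
      simp only [hg]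
      have e2 : (-(n + 1) : ℤ) = -n - 1 := by ring
      rw [e2]
      linarith
    · intro n hn
      exact hE (-n) (hEmsub ((hmem n).1 hn))
  have : (E.card : ℝ) = (Ep.card : ℝ) + (Em.card : ℝ) := by exact_mod_cast hsplit.symm
  linarith

section counting
variable {α c₀ : ℝ} (hα1 : 1 < α) (hα2 : α < 2) (hc₀ : 1 ≤ c₀)
include hα1 hα2 hc₀

/-- difference-type counting lemma -/
lemma P1 (h : ℤ) (hh : h ≠ 0) (μ M : ℝ) (hM : 1 ≤ M) (E : Finset ℤ)
    (hE : ∀ n ∈ E, |(n:ℝ)| ≤ M ∧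
      abs (|(n:ℝ)| ^ α - |(n:ℝ) + (h:ℝ)| ^ α - μ) ≤ c₀) :
    (E.card : ℝ) ≤ (6 * c₀ / (α * (α - 1)) + 1) * M ^ (2 - α) := by
  have hcα : 0 < α * (α - 1) := by nlinarith
  have hM2 : (0:ℝ) < M + 2 := by linarith
  set δ : ℝ := (α * (α - 1)) * (M + 2) ^ (α - 2) with hδdef
  have hδ : 0 < δ := by positivity
  have hc0 : (0:ℝ) ≤ c₀ := by linarith
  set φ : ℤ → ℝ := fun m => |(m:ℝ) + 1| ^ α - |(m:ℝ)| ^ α with hφ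
  have hφstep : ∀ m : ℤ, α * (α-1) * (|(m:ℝ)+1| + 1) ^ (α - 2) ≤ φ (m + 1) - φ m := by
    intro m
    have hs := secdiff_int hα1 hα2 (m + 1)
    have e1 : ((m + 1 : ℤ):ℝ) = (m:ℝ) + 1 := by push_cast; ring
    rw [e1] at hs
    have e3 : |(m:ℝ) + 1 - 1| = |(m:ℝ)| := by ring_nf
    rw [e3] at hs
    calc α * (α-1) * (|(m:ℝ)+1| + 1) ^ (α - 2)
        ≤ |(m:ℝ) + 1 + 1| ^ α - 2 * |(m:ℝ) + 1| ^ α + |(m:ℝ)| ^ α := hs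
      _ = φ (m + 1) - φ m := by
          simp only [hφ]
          push_cast
          ring_nf
  have hφmono : Monotone φ := by
    apply monotone_int_of_le_succ
    intro m
    have h1 := hφstep m
    have hp : 0 < α * (α-1) * (|(m:ℝ)+1| + 1) ^ (α - 2) := by positivity
    linarith
  have hbound : ∀ j : ℤ, -M ≤ (j:ℝ) → (j:ℝ) + 1 ≤ M → δ ≤ φ (j + 1) - φ j := by
    intro j hj1 hj2
    have habs : |(j:ℝ)+1| ≤ M + 1 := abs_le.2 ⟨by linarith, by linarith⟩
    have hrp : (M+2) ^ (α-2) ≤ (|(j:ℝ)+1| + 1) ^ (α-2) :=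
      Real.rpow_le_rpow_of_nonpos (by positivity) (by linarith) (by linarith)
    calc δ = α*(α-1) * (M+2)^(α-2) := rfl
      _ ≤ α*(α-1) * (|(j:ℝ)+1|+1)^(α-2) := mul_le_mul_of_nonneg_left hrp hcα.le
      _ ≤ φ (j+1) - φ j := hφstep j
  have hbound' : ∀ j : ℤ, -M ≤ (j:ℝ) → (j:ℝ) ≤ M → δ ≤ φ j - φ (j - 1) := by
    intro j hj1 hj2
    have hs := hφstep (j - 1)
    have e1 : ((j - 1 : ℤ):ℝ) = (j:ℝ) - 1 := by push_cast; ring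
    have e2 : (j - 1 + 1 : ℤ) = j := by ring
    rw [e1, e2] at hs
    have e3 : |(j:ℝ) - 1 + 1| = |(j:ℝ)| := by ring_nf
    rw [e3] at hs
    have habs : |(j:ℝ)| ≤ M + 1 := abs_le.2 ⟨by linarith, by linarith⟩
    have hrp : (M+2) ^ (α-2) ≤ (|(j:ℝ)| + 1) ^ (α-2) :=
      Real.rpow_le_rpow_of_nonpos (by positivity) (by linarith) (by linarith)
    calc δ = α*(α-1) * (M+2)^(α-2) := rfl
      _ ≤ α*(α-1) * (|(j:ℝ)|+1)^(α-2) := mul_le_mul_of_nonneg_left hrp hcα.le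
      _ ≤ φ j - φ (j-1) := hs
  -- bounds on j from membership
  have hjrange : ∀ j : ℤ, (∃ x ∈ E, x ≤ j) → (∃ y ∈ E, j + 1 ≤ y) →
      -M ≤ (j:ℝ) ∧ (j:ℝ) + 1 ≤ M := by
    rintro j ⟨x, hx, hxj⟩ ⟨y, hy, hjy⟩
    have h1 := abs_le.1 (hE x hx).1
    have h2 := abs_le.1 (hE y hy).1
    have hxr : (x:ℝ) ≤ (j:ℝ) := by exact_mod_cast hxj
    have hyr : (j:ℝ) + 1 ≤ (y:ℝ) := by
      have : ((j + 1 : ℤ):ℝ) ≤ (y:ℝ) := by exact_mod_cast hjy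
      push_cast at this; linarith
    exact ⟨by linarith [h1.1], by linarith [h2.2]⟩
  have hcard : (E.card : ℝ) ≤ 2 * c₀ / δ + 1 := by
    rcases lt_or_ge h 0 with hneg | hpos
    · -- h ≤ -1, use f directly
      apply key1 (f := fun n : ℤ => |(n:ℝ)| ^ α - |(n:ℝ) + (h:ℝ)| ^ α) (μ := μ) hδ hc0
      · intro j hx hy
        obtain ⟨hj1, hj2⟩ := hjrange j hx hy
        have heq : (fun n : ℤ => |(n:ℝ)| ^ α - |(n:ℝ) + (h:ℝ)| ^ α) (j+1) -
            (fun n : ℤ => |(n:ℝ)| ^ α - |(n:ℝ) + (h:ℝ)| ^ α) j = φ j - φ (j + h) := by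
          simp only [hφ]
          push_cast
          ring_nf
        rw [heq]
        have hmono : φ (j + h) ≤ φ (j - 1) := hφmono (by omega)
        have := hbound' j hj1 (by linarith)
        linarith
      · intro n hn; exact (hE n hn).2
    · -- h ≥ 1, use -f
      have hstep := key1 (f := fun n : ℤ => -(|(n:ℝ)| ^ α - |(n:ℝ) + (h:ℝ)| ^ α))
        (μ := -μ) hδ hc0 (E := E) ?_ ?_
      · exact hstep
      · intro j hx hy
        obtain ⟨hj1, hj2⟩ := hjrange j hx hy
        have heq : (fun n : ℤ => -(|(n:ℝ)| ^ α - |(n:ℝ) + (h:ℝ)| ^ α)) (j+1) -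
            (fun n : ℤ => -(|(n:ℝ)| ^ α - |(n:ℝ) + (h:ℝ)| ^ α)) j = φ (j + h) - φ j := by
          simp only [hφ]
          push_cast
          ring_nf
        rw [heq]
        have hmono : φ (j + 1) ≤ φ (j + h) := hφmono (by omega)
        have := hbound j hj1 hj2
        linarith
      · intro n hn
        have := (hE n hn).2
        calc abs (-(|(n:ℝ)| ^ α - |(n:ℝ) + (h:ℝ)| ^ α) - -μ)
            = abs (|(n:ℝ)| ^ α - |(n:ℝ) + (h:ℝ)| ^ α - μ) := by rw [← abs_neg]; ring_nf
          _ ≤ c₀ := this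
  -- arithmetic conclusion
  have e0 : (M+2) ^ (α-2) = ((M+2) ^ (2-α))⁻¹ := by
    rw [show α - 2 = -(2-α) by ring, Real.rpow_neg hM2.le]
  have h23 : (M+2) ^ (2-α) ≤ 3 * M ^ (2-α) := by
    have hstep1 : (M+2) ^ (2-α) ≤ (3*M) ^ (2-α) :=
      Real.rpow_le_rpow (by linarith) (by linarith) (by linarith)
    have hstep2 : ((3:ℝ)*M) ^ (2-α) = 3 ^ (2-α) * M ^ (2-α) :=
      Real.mul_rpow (by norm_num) (by linarith)
    have hstep3 : (3:ℝ) ^ (2-α) ≤ 3 := by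
      have := Real.rpow_le_rpow_of_exponent_le (show (1:ℝ) ≤ 3 by norm_num)
        (show 2 - α ≤ 1 by linarith)
      rwa [Real.rpow_one] at this
    have hMp : (0:ℝ) ≤ M ^ (2-α) := Real.rpow_nonneg (by linarith) _
    nlinarith
  have h1M : 1 ≤ M ^ (2-α) := by
    have := Real.rpow_le_rpow_of_exponent_le hM (show (0:ℝ) ≤ 2 - α by linarith)
    rwa [Real.rpow_zero] at this
  have hδinv : 2 * c₀ / δ = (2 * c₀ / (α * (α-1))) * (M+2) ^ (2-α) := by
    rw [hδdef, e0]
    have hne : ((M+2) ^ (2-α)) ≠ 0 := by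
      have : 0 < (M+2) ^ (2-α) := Real.rpow_pos_of_pos hM2 _
      linarith
    field_simp
  have hfin : 2 * c₀ / δ ≤ (6 * c₀ / (α * (α-1))) * M ^ (2-α) := by
    rw [hδinv]
    have hnn : 0 ≤ 2 * c₀ / (α * (α-1)) := by positivity
    calc (2 * c₀ / (α * (α-1))) * (M+2) ^ (2-α)
        ≤ (2 * c₀ / (α * (α-1))) * (3 * M ^ (2-α)) := mul_le_mul_of_nonneg_left h23 hnn
      _ = (6 * c₀ / (α * (α-1))) * M ^ (2-α) := by ring
  calc (E.card : ℝ) ≤ 2 * c₀ / δ + 1 := hcard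
    _ ≤ (6 * c₀ / (α * (α-1))) * M ^ (2-α) + M ^ (2-α) := by linarith
    _ = (6 * c₀ / (α * (α-1)) + 1) * M ^ (2-α) := by ring

/-- sum-type counting lemma -/
lemma P2 (s : ℤ) (μ M₁ M₂ : ℝ) (hM1 : 1 ≤ M₁) (hM2 : 1 ≤ M₂) (E : Finset ℤ)
    (hE : ∀ n ∈ E, |(n:ℝ)| ≤ M₁ ∧ |(s:ℝ) - (n:ℝ)| ≤ M₂ ∧
      abs (|(n:ℝ)| ^ α + |(s:ℝ) - (n:ℝ)| ^ α - μ) ≤ c₀) :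
    (E.card : ℝ) ≤ (8 * Real.sqrt (2 * c₀ / (α * (α - 1))) + 4) * (min M₁ M₂) ^ (1 - α/2) := by
  have hcα : 0 < α * (α - 1) := by nlinarith
  have hc0 : (0:ℝ) ≤ c₀ := by linarith
  set Mm : ℝ := min M₁ M₂ with hMm
  have hMm1 : 1 ≤ Mm := le_min hM1 hM2
  have hMm3 : (0:ℝ) < Mm + 3 := by linarith
  set δ : ℝ := (α * (α - 1)) * (Mm + 3) ^ (α - 2) with hδdef
  have hδ : 0 < δ := by positivity
  set f : ℤ → ℝ := fun n => |(n:ℝ)| ^ α + |(s:ℝ) - (n:ℝ)| ^ α with hf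
  -- convexity hypothesis
  have hconv : ∀ m : ℤ, (∃ x ∈ E, x - 1 ≤ m) → (∃ y ∈ E, m ≤ y + 1) →
      δ ≤ f (m + 1) - 2 * f m + f (m - 1) := by
    rintro m ⟨x, hx, hxm⟩ ⟨y, hy, hmy⟩
    obtain ⟨hx1, hx2, -⟩ := hE x hx
    obtain ⟨hy1, hy2, -⟩ := hE y hy
    have hxr : (x:ℝ) - 1 ≤ (m:ℝ) := by
      have : ((x - 1 : ℤ):ℝ) ≤ (m:ℝ) := by exact_mod_cast hxm
      push_cast at this; linarith
    have hyr : (m:ℝ) ≤ (y:ℝ) + 1 := by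
      have : ((m:ℤ):ℝ) ≤ ((y + 1 : ℤ):ℝ) := by exact_mod_cast hmy
      push_cast at this; linarith
    have hax := abs_le.1 hx1
    have hay := abs_le.1 hy1
    have hax2 := abs_le.1 hx2
    have hay2 := abs_le.1 hy2
    -- second differences of both pieces
    have hs1 := secdiff_int hα1 hα2 m
    have hs2 := secdiff_int hα1 hα2 (s - m)
    have e1 : ((s - m : ℤ):ℝ) = (s:ℝ) - (m:ℝ) := by push_cast; ring
    rw [e1] at hs2
    have hp1 : 0 < α * (α-1) * (|(m:ℝ)| + 1) ^ (α - 2) := by positivity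
    have hp2 : 0 < α * (α-1) * (|(s:ℝ) - (m:ℝ)| + 1) ^ (α - 2) := by positivity
    have heq : f (m + 1) - 2 * f m + f (m - 1) =
        (|(m:ℝ) + 1| ^ α - 2 * |(m:ℝ)| ^ α + |(m:ℝ) - 1| ^ α) +
        (|(s:ℝ) - (m:ℝ) + 1| ^ α - 2 * |(s:ℝ) - (m:ℝ)| ^ α + |(s:ℝ) - (m:ℝ) - 1| ^ α) := by
      simp only [hf]
      push_cast
      ring_nf
    rw [heq]
    rcases le_total M₁ M₂ with hm12 | hm12
    · -- Mm = M₁, use the first piece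
      have hMmeq : Mm = M₁ := min_eq_left hm12
      have habs : |(m:ℝ)| ≤ M₁ + 1 := abs_le.2 ⟨by linarith, by linarith⟩
      have hrp : (Mm+3) ^ (α-2) ≤ (|(m:ℝ)| + 1) ^ (α-2) :=
        Real.rpow_le_rpow_of_nonpos (by positivity) (by rw [hMmeq]; linarith) (by linarith)
      have hδle : δ ≤ α * (α-1) * (|(m:ℝ)| + 1) ^ (α - 2) :=
        mul_le_mul_of_nonneg_left hrp hcα.le
      linarith
    · -- Mm = M₂, use the second piece
      have hMmeq : Mm = M₂ := min_eq_right hm12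
      have habs : |(s:ℝ) - (m:ℝ)| ≤ M₂ + 1 := by
        apply abs_le.2
        constructor
        · -- s - m ≥ s - y - 1 ≥ -M₂ - 1
          have := hay2.1
          linarith
        · have := hax2.2
          linarith
      have hrp : (Mm+3) ^ (α-2) ≤ (|(s:ℝ) - (m:ℝ)| + 1) ^ (α-2) :=
        Real.rpow_le_rpow_of_nonpos (by positivity) (by rw [hMmeq]; linarith) (by linarith)
      have hδle : δ ≤ α * (α-1) * (|(s:ℝ) - (m:ℝ)| + 1) ^ (α - 2) :=
        mul_le_mul_of_nonneg_left hrp hcα.le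
      linarith
  have hcard : (E.card : ℝ) ≤ 4 * Real.sqrt (2 * c₀ / δ) + 4 := by
    apply key2 hδ hc0 hconv
    intro n hn; exact (hE n hn).2.2
  -- arithmetic
  have e0 : (Mm+3) ^ (α-2) = ((Mm+3) ^ (2-α))⁻¹ := by
    rw [show α - 2 = -(2-α) by ring, Real.rpow_neg hMm3.le]
  have hδinv : 2 * c₀ / δ = (2 * c₀ / (α * (α-1))) * (Mm+3) ^ (2-α) := by
    rw [hδdef, e0]
    have : 0 < (Mm+3) ^ (2-α) := Real.rpow_pos_of_pos hMm3 _
    field_simp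
  have hsqrt : Real.sqrt (2 * c₀ / δ) ≤
      Real.sqrt (2 * c₀ / (α * (α-1))) * (2 * Mm ^ (1 - α/2)) := by
    rw [hδinv, Real.sqrt_mul (by positivity)]
    apply mul_le_mul_of_nonneg_left _ (Real.sqrt_nonneg _)
    -- sqrt ((Mm+3)^(2-α)) ≤ 2 * Mm^(1-α/2)
    have h1 : Real.sqrt ((Mm+3) ^ (2-α)) = (Mm+3) ^ (1-α/2) := by
      rw [Real.sqrt_eq_rpow, ← Real.rpow_mul hMm3.le,
        show (2-α) * (1/2) = 1 - α/2 by ring]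
    rw [h1]
    have h2 : (Mm+3) ^ (1-α/2) ≤ (4*Mm) ^ (1-α/2) :=
      Real.rpow_le_rpow (by linarith) (by linarith) (by linarith)
    have h3 : ((4:ℝ)*Mm) ^ (1-α/2) = 4 ^ (1-α/2) * Mm ^ (1-α/2) :=
      Real.mul_rpow (by norm_num) (by linarith)
    have h4 : (4:ℝ) ^ (1-α/2) ≤ 2 := by
      have ha : (4:ℝ) ^ (1-α/2) ≤ 4 ^ ((1:ℝ)/2) :=
        Real.rpow_le_rpow_of_exponent_le (by norm_num) (by linarith)
      have hb : (4:ℝ) ^ ((1:ℝ)/2) = 2 := by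
        rw [show (4:ℝ) = 2^(2:ℕ) by norm_num, ← Real.rpow_natCast (2:ℝ) 2,
          ← Real.rpow_mul (by norm_num : (0:ℝ) ≤ 2)]
        norm_num
      linarith
    have hMp : (0:ℝ) ≤ Mm ^ (1-α/2) := Real.rpow_nonneg (by linarith) _
    nlinarith
  have h1M : 1 ≤ Mm ^ (1-α/2) := by
    have := Real.rpow_le_rpow_of_exponent_le hMm1 (show (0:ℝ) ≤ 1 - α/2 by linarith)
    rwa [Real.rpow_zero] at this
  have hsn : 0 ≤ Real.sqrt (2 * c₀ / (α * (α-1))) := Real.sqrt_nonneg _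
  calc (E.card : ℝ) ≤ 4 * Real.sqrt (2 * c₀ / δ) + 4 := hcard
    _ ≤ 4 * (Real.sqrt (2 * c₀ / (α * (α-1))) * (2 * Mm ^ (1-α/2))) + 4 := by
        have := mul_le_mul_of_nonneg_left hsqrt (show (0:ℝ) ≤ 4 by norm_num)
        linarith
    _ ≤ (8 * Real.sqrt (2 * c₀ / (α * (α-1))) + 4) * Mm ^ (1-α/2) := by nlinarith

end counting

/-- Schur-type test for 0-1 kernels, in finsum form. -/
lemma schur {ι κ : Type*} (S : κ → Set ι) (a : ι → ℂ) (ha : (Function.support a).Finite)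
    (A B : ℝ) (hA : 0 ≤ A) (hB : 0 ≤ B)
    (row : ∀ q : κ, ∃ F : Finset ι, S q ⊆ ↑F ∧ (F.card : ℝ) ≤ A)
    (col : ∀ p : ι, ∃ G : Finset κ, {q | p ∈ S q} ⊆ ↑G ∧ (G.card : ℝ) ≤ B) :
    ∑ᶠ q, ‖∑ᶠ p ∈ S q, a p‖ ^ 2 ≤ A * B * ∑ᶠ p, ‖a p‖ ^ 2 := by
  classical
  set T : Finset ι := ha.toFinset with hT
  have hTmem : ∀ p, p ∈ T ↔ a p ≠ 0 := by
    intro p; simp [hT, Function.mem_support]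
  choose g hg hgB using col
  set Q : Finset κ := T.biUnion g with hQ
  -- inner sums as finset sums
  have hinner : ∀ q, (∑ᶠ p ∈ S q, a p) = ∑ p ∈ T.filter (· ∈ S q), a p := by
    intro q
    apply finsum_mem_eq_sum_of_inter_support_eq
    ext p
    simp only [Set.mem_inter_iff, Function.mem_support, Finset.coe_filter, Set.mem_setOf_eq]
    constructor
    · rintro ⟨hp, hap⟩
      exact ⟨⟨(hTmem p).2 hap, hp⟩, hap⟩
    · rintro ⟨⟨_, hp⟩, hap⟩
      exact ⟨hp, hap⟩
  -- outer sum as finset sum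
  have houter : ∑ᶠ q, ‖∑ᶠ p ∈ S q, a p‖ ^ 2 = ∑ q ∈ Q, ‖∑ p ∈ T.filter (· ∈ S q), a p‖ ^ 2 := by
    rw [finsum_congr (fun q => by rw [hinner q])]
    apply finsum_eq_sum_of_support_subset
    intro q hq
    simp only [Function.mem_support] at hq
    have hne : (T.filter (· ∈ S q)).Nonempty := by
      by_contra hcon
      rw [Finset.not_nonempty_iff_eq_empty] at hcon
      rw [hcon] at hq
      simp at hq
    obtain ⟨p, hp⟩ := hne
    rw [Finset.mem_filter] at hp
    have : q ∈ g p := hg p hp.2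
    simp only [hQ, Finset.coe_biUnion, Set.mem_iUnion, Finset.mem_coe]
    exact ⟨p, hp.1, this⟩
  -- rhs sum as finset sum
  have hrhs : ∑ᶠ p, ‖a p‖ ^ 2 = ∑ p ∈ T, ‖a p‖ ^ 2 := by
    apply finsum_eq_sum_of_support_subset
    intro p hp
    simp only [Function.mem_support] at hp
    rw [Finset.mem_coe, hTmem]
    intro h0
    simp [h0] at hp
  rw [houter, hrhs]
  -- Cauchy-Schwarz on each row
  have hrowbound : ∀ q ∈ Q, ‖∑ p ∈ T.filter (· ∈ S q), a p‖ ^ 2 ≤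
      A * ∑ p ∈ T.filter (· ∈ S q), ‖a p‖ ^ 2 := by
    intro q _
    obtain ⟨F, hF, hFA⟩ := row q
    have h1 : ‖∑ p ∈ T.filter (· ∈ S q), a p‖ ≤ ∑ p ∈ T.filter (· ∈ S q), ‖a p‖ :=
      norm_sum_le _ _
    have h2 : ‖∑ p ∈ T.filter (· ∈ S q), a p‖ ^ 2 ≤ (∑ p ∈ T.filter (· ∈ S q), ‖a p‖) ^ 2 := by
      apply pow_le_pow_left₀ (norm_nonneg _) h1
    have h3 : (∑ p ∈ T.filter (· ∈ S q), ‖a p‖) ^ 2 ≤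
        ((T.filter (· ∈ S q)).card : ℝ) * ∑ p ∈ T.filter (· ∈ S q), ‖a p‖ ^ 2 :=
      sq_sum_le_card_mul_sum_sq
    have hsub : T.filter (· ∈ S q) ⊆ F := by
      intro p hp
      rw [Finset.mem_filter] at hp
      exact_mod_cast hF hp.2
    have h4 : ((T.filter (· ∈ S q)).card : ℝ) ≤ A := by
      calc ((T.filter (· ∈ S q)).card : ℝ) ≤ (F.card : ℝ) := by
            exact_mod_cast Finset.card_le_card hsub
        _ ≤ A := hFA
    have h5 : 0 ≤ ∑ p ∈ T.filter (· ∈ S q), ‖a p‖ ^ 2 :=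
      Finset.sum_nonneg (fun p _ => by positivity)
    nlinarith
  calc ∑ q ∈ Q, ‖∑ p ∈ T.filter (· ∈ S q), a p‖ ^ 2
      ≤ ∑ q ∈ Q, A * ∑ p ∈ T.filter (· ∈ S q), ‖a p‖ ^ 2 :=
        Finset.sum_le_sum hrowbound
    _ = A * ∑ q ∈ Q, ∑ p ∈ T.filter (· ∈ S q), ‖a p‖ ^ 2 := by
        rw [Finset.mul_sum]
    _ = A * ∑ p ∈ T, ((Q.filter (fun q => p ∈ S q)).card : ℝ) * ‖a p‖ ^ 2 := by
        congr 1
        have e1 : ∀ q, ∑ p ∈ T.filter (· ∈ S q), ‖a p‖ ^ 2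
            = ∑ p ∈ T, if p ∈ S q then ‖a p‖ ^ 2 else 0 :=
          fun q => Finset.sum_filter _ _
        rw [Finset.sum_congr rfl (fun q _ => e1 q), Finset.sum_comm]
        apply Finset.sum_congr rfl
        intro p _
        rw [← Finset.sum_filter, Finset.sum_const, nsmul_eq_mul]
    _ ≤ A * ∑ p ∈ T, B * ‖a p‖ ^ 2 := by
        apply mul_le_mul_of_nonneg_left _ hA
        apply Finset.sum_le_sum
        intro p _
        apply mul_le_mul_of_nonneg_right _ (by positivity)
        calc ((Q.filter (fun q => p ∈ S q)).card : ℝ) ≤ ((g p).card : ℝ) := by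
              exact_mod_cast Finset.card_le_card (by
                intro q hq
                rw [Finset.mem_filter] at hq
                exact hg p hq.2)
          _ ≤ B := hgB p
    _ = A * B * ∑ p ∈ T, ‖a p‖ ^ 2 := by
        rw [← Finset.mul_sum]; ring

section helpers2
variable {α c₀ : ℝ} (hα1 : 1 < α) (hα2 : α < 2) (hc₀ : 1 ≤ c₀)

include hα1 hα2 hc₀ in
lemma exists_row_fin (h₀ : ℤ) (hh₀ : h₀ ≠ 0) (μ M : ℝ) (hM : 1 ≤ M)
    (P : Set (ℤ × ℤ)) (φmap : ℤ → ℤ × ℤ)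
    (hsub : ∀ p ∈ P, ∃ n : ℤ, φmap n = p ∧ |(n:ℝ)| ≤ M ∧
      abs (|(n:ℝ)| ^ α - |(n:ℝ) + (h₀:ℝ)| ^ α - μ) ≤ c₀) :
    ∃ F : Finset (ℤ × ℤ), P ⊆ ↑F ∧
      (F.card : ℝ) ≤ (6 * c₀ / (α * (α - 1)) + 1) * M ^ (2 - α) := by
  classical
  set E : Finset ℤ := (Finset.Icc (-⌈M⌉) ⌈M⌉).filter
    (fun n => |(n:ℝ)| ≤ M ∧ abs (|(n:ℝ)| ^ α - |(n:ℝ) + (h₀:ℝ)| ^ α - μ) ≤ c₀) with hEdef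
  refine ⟨E.image φmap, ?_, ?_⟩
  · intro p hp
    obtain ⟨n, hn, h1, h2⟩ := hsub p hp
    have hceil : |n| ≤ ⌈M⌉ := by
      have h' : |(n:ℝ)| ≤ (⌈M⌉ : ℝ) := le_trans h1 (Int.le_ceil M)
      exact_mod_cast h'
    have hmem : n ∈ E := by
      rw [hEdef, Finset.mem_filter, Finset.mem_Icc]
      have := abs_le.1 hceil
      exact ⟨⟨this.1, this.2⟩, h1, h2⟩
    exact Finset.mem_coe.2 (Finset.mem_image.2 ⟨n, hmem, hn⟩)
  · calc ((E.image φmap).card : ℝ) ≤ (E.card : ℝ) := by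
          exact_mod_cast Finset.card_image_le
      _ ≤ (6 * c₀ / (α * (α - 1)) + 1) * M ^ (2 - α) := by
          apply P1 hα1 hα2 hc₀ h₀ hh₀ μ M hM
          intro n hn
          exact (Finset.mem_filter.1 hn).2

include hα1 hα2 hc₀ in
lemma exists_conv_fin (s : ℤ) (μ M₁ M₂ : ℝ) (hM1 : 1 ≤ M₁) (hM2 : 1 ≤ M₂)
    (P : Set (ℤ × ℤ)) (φmap : ℤ → ℤ × ℤ)
    (hsub : ∀ p ∈ P, ∃ n : ℤ, φmap n = p ∧ |(n:ℝ)| ≤ M₁ ∧ |(s:ℝ) - (n:ℝ)| ≤ M₂ ∧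
      abs (|(n:ℝ)| ^ α + |(s:ℝ) - (n:ℝ)| ^ α - μ) ≤ c₀) :
    ∃ F : Finset (ℤ × ℤ), P ⊆ ↑F ∧
      (F.card : ℝ) ≤ (8 * Real.sqrt (2 * c₀ / (α * (α - 1))) + 4) * (min M₁ M₂) ^ (1 - α/2) := by
  classical
  set E : Finset ℤ := (Finset.Icc (-⌈M₁⌉) ⌈M₁⌉).filter
    (fun n => |(n:ℝ)| ≤ M₁ ∧ |(s:ℝ) - (n:ℝ)| ≤ M₂ ∧
      abs (|(n:ℝ)| ^ α + |(s:ℝ) - (n:ℝ)| ^ α - μ) ≤ c₀) with hEdef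
  refine ⟨E.image φmap, ?_, ?_⟩
  · intro p hp
    obtain ⟨n, hn, h1, h2, h3⟩ := hsub p hp
    have hceil : |n| ≤ ⌈M₁⌉ := by
      have h' : |(n:ℝ)| ≤ (⌈M₁⌉ : ℝ) := le_trans h1 (Int.le_ceil M₁)
      exact_mod_cast h'
    have hmem : n ∈ E := by
      rw [hEdef, Finset.mem_filter, Finset.mem_Icc]
      have := abs_le.1 hceil
      exact ⟨⟨this.1, this.2⟩, h1, h2, h3⟩
    exact Finset.mem_coe.2 (Finset.mem_image.2 ⟨n, hmem, hn⟩)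
  · calc ((E.image φmap).card : ℝ) ≤ (E.card : ℝ) := by
          exact_mod_cast Finset.card_image_le
      _ ≤ _ := by
          apply P2 hα1 hα2 hc₀ s μ M₁ M₂ hM1 hM2
          intro n hn
          exact (Finset.mem_filter.1 hn).2

end helpers2
end AllLemmas

/-- `ℓ² → ℓ²` operator norm bounds for the base tensor
`T^{b,m} = 1_S`, for the splittings `(k,k₁) → (k₂,k₃)`, `(k,k₃) → (k₁,k₂)` and
`(k,k₂) → (k₁,k₃)`, written in applied (quadratic-form) form. -/
theorem base_tensor_two_two (α c₀ : ℝ) (hα : α ∈ Set.Ioo (1 : ℝ) 2) (hc₀ : 1 ≤ c₀) :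
    ∃ C : ℝ, 0 < C ∧ ∀ m N N₁ N₂ N₃ : ℝ,
      1 ≤ N₁ → 1 ≤ N₂ → 1 ≤ N₃ → N₁ ≤ N → N₂ ≤ N → N₃ ≤ N →
      ∀ a : ℤ × ℤ → ℂ, (Function.support a).Finite →
      ((∑ᶠ q : ℤ × ℤ,
          ‖∑ᶠ p ∈ {p : ℤ × ℤ | (p.1, p.2, q.1, q.2) ∈ Sset α c₀ m N N₁ N₂ N₃}, a p‖ ^ 2 ≤
        C * (min N₂ N₃) ^ (2 - α) * N₁ ^ (2 - α) * ∑ᶠ p : ℤ × ℤ, ‖a p‖ ^ 2) ∧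
      (∑ᶠ q : ℤ × ℤ,
          ‖∑ᶠ p ∈ {p : ℤ × ℤ | (p.1, q.1, q.2, p.2) ∈ Sset α c₀ m N N₁ N₂ N₃}, a p‖ ^ 2 ≤
        C * (min N₁ N₂) ^ (2 - α) * N₃ ^ (2 - α) * ∑ᶠ p : ℤ × ℤ, ‖a p‖ ^ 2) ∧
      (∑ᶠ q : ℤ × ℤ,
          ‖∑ᶠ p ∈ {p : ℤ × ℤ | (p.1, q.1, p.2, q.2) ∈ Sset α c₀ m N N₁ N₂ N₃}, a p‖ ^ 2 ≤
        C * (min N₁ N₃) ^ (1 - α / 2) * (min N N₂) ^ (1 - α / 2) *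
          ∑ᶠ p : ℤ × ℤ, ‖a p‖ ^ 2)) := by
  obtain ⟨hα1, hα2⟩ := hα
  have hcα : 0 < α * (α - 1) := by nlinarith
  set C1 : ℝ := 6 * c₀ / (α * (α - 1)) + 1 with hC1
  set C2 : ℝ := 8 * Real.sqrt (2 * c₀ / (α * (α - 1))) + 4 with hC2
  have hC1p : 0 < C1 := by
    have h6 : 0 < 6 * c₀ / (α * (α - 1)) := div_pos (by linarith) hcα
    simp only [hC1]; linarith
  have hC2p : 0 < C2 := by
    have := Real.sqrt_nonneg (2 * c₀ / (α * (α - 1)))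
    simp only [hC2]; linarith
  refine ⟨C1 ^ 2 + C2 ^ 2, ?_, ?_⟩
  · positivity
  intro m N N₁ N₂ N₃ hN₁ hN₂ hN₃ hN₁N hN₂N hN₃N a ha
  have hN : 1 ≤ N := le_trans hN₁ hN₁N
  have hSig : 0 ≤ ∑ᶠ p : ℤ × ℤ, ‖a p‖ ^ 2 := finsum_nonneg (fun p => sq_nonneg ‖a p‖)
  have hmin23 : 1 ≤ min N₂ N₃ := le_min hN₂ hN₃
  have hmin12 : 1 ≤ min N₁ N₂ := le_min hN₁ hN₂
  have hmin13 : 1 ≤ min N₁ N₃ := le_min hN₁ hN₃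
  have hminN2 : 1 ≤ min N N₂ := le_min hN hN₂
  refine ⟨?_, ?_, ?_⟩
  · -- part (a)
    have hX0 : (0:ℝ) ≤ (min N₂ N₃) ^ (2 - α) := Real.rpow_nonneg (by linarith) _
    have hY0 : (0:ℝ) ≤ N₁ ^ (2 - α) := Real.rpow_nonneg (by linarith) _
    have hmain := schur
      (fun q : ℤ × ℤ => {p : ℤ × ℤ | (p.1, p.2, q.1, q.2) ∈ Sset α c₀ m N N₁ N₂ N₃}) a ha
      (C1 * N₁ ^ (2 - α)) (C1 * (min N₂ N₃) ^ (2 - α))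
      (mul_nonneg hC1p.le hY0) (mul_nonneg hC1p.le hX0) ?_ ?_
    · calc ∑ᶠ q : ℤ × ℤ,
          ‖∑ᶠ p ∈ {p : ℤ × ℤ | (p.1, p.2, q.1, q.2) ∈ Sset α c₀ m N N₁ N₂ N₃}, a p‖ ^ 2
          ≤ (C1 * N₁ ^ (2 - α)) * (C1 * (min N₂ N₃) ^ (2 - α)) * ∑ᶠ p : ℤ × ℤ, ‖a p‖ ^ 2 :=
            hmain
        _ = C1 ^ 2 * ((min N₂ N₃) ^ (2 - α) * N₁ ^ (2 - α)) * ∑ᶠ p : ℤ × ℤ, ‖a p‖ ^ 2 := by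
            ring
        _ ≤ (C1 ^ 2 + C2 ^ 2) * ((min N₂ N₃) ^ (2 - α) * N₁ ^ (2 - α)) *
              ∑ᶠ p : ℤ × ℤ, ‖a p‖ ^ 2 := by
            apply mul_le_mul_of_nonneg_right _ hSig
            apply mul_le_mul_of_nonneg_right _ (mul_nonneg hX0 hY0)
            nlinarith [sq_nonneg C2]
        _ = (C1 ^ 2 + C2 ^ 2) * (min N₂ N₃) ^ (2 - α) * N₁ ^ (2 - α) *
              ∑ᶠ p : ℤ × ℤ, ‖a p‖ ^ 2 := by ring
    · -- rows
      intro q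
      by_cases hq : q.1 = q.2
      · refine ⟨∅, ?_, by simp; positivity⟩
        intro p hp
        simp only [Sset, Set.mem_setOf_eq] at hp
        exact absurd hq hp.2.2.1
      · apply exists_row_fin hα1 hα2 hc₀ (q.2 - q.1) (by omega)
          (m + |(q.1:ℝ)| ^ α - |(q.2:ℝ)| ^ α) N₁ hN₁ _ (fun n => (n + (q.2 - q.1), n))
        intro p hp
        simp only [Sset, Set.mem_setOf_eq] at hp
        obtain ⟨he, hn1, hn2, hw, hbN, hb1, hb2, hb3⟩ := hp
        refine ⟨p.2, ?_, hb1, ?_⟩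
        · show (p.2 + (q.2 - q.1), p.2) = p
          rw [show p.2 + (q.2 - q.1) = p.1 by omega]
        · have hpe : (p.1 : ℝ) = (p.2:ℝ) + ((q.2 - q.1 : ℤ):ℝ) := by
            have h' : ((p.1:ℤ):ℝ) = ((p.2 - q.1 + q.2 : ℤ):ℝ) := congrArg (fun z : ℤ => (z:ℝ)) he
            push_cast at h' ⊢
            linarith
          rw [← hpe]
          rw [show |(p.2:ℝ)| ^ α - |(p.1:ℝ)| ^ α - (m + |(q.1:ℝ)| ^ α - |(q.2:ℝ)| ^ α) =
            |(p.2:ℝ)| ^ α - |(q.1:ℝ)| ^ α + |(q.2:ℝ)| ^ α - |(p.1:ℝ)| ^ α - m by ring]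
          exact hw
    · -- columns
      intro p
      by_cases hp12 : p.1 = p.2
      · refine ⟨∅, ?_, by simp; positivity⟩
        intro q hq
        simp only [Set.mem_setOf_eq, Sset] at hq
        obtain ⟨he, hn1, hn2, -⟩ := hq
        exact absurd (by omega : q.1 = q.2) hn2
      · rcases le_total N₂ N₃ with h23 | h23
        · rw [min_eq_left h23]
          apply exists_row_fin hα1 hα2 hc₀ (p.1 - p.2) (by omega)
            (|(p.2:ℝ)| ^ α - |(p.1:ℝ)| ^ α - m) N₂ hN₂ _ (fun n => (n, n + (p.1 - p.2)))
          intro q hq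
          simp only [Set.mem_setOf_eq, Sset] at hq
          obtain ⟨he, hn1, hn2, hw, hbN, hb1, hb2, hb3⟩ := hq
          refine ⟨q.1, ?_, hb2, ?_⟩
          · show (q.1, q.1 + (p.1 - p.2)) = q
            rw [show q.1 + (p.1 - p.2) = q.2 by omega]
          · have hpe : (q.2 : ℝ) = (q.1:ℝ) + ((p.1 - p.2 : ℤ):ℝ) := by
              have h' : ((q.2:ℤ):ℝ) = ((q.1 + p.1 - p.2 : ℤ):ℝ) := by
                exact_mod_cast congrArg (fun z : ℤ => (z:ℝ)) (by omega : q.2 = q.1 + p.1 - p.2)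
              push_cast at h' ⊢
              linarith
            rw [← hpe]
            rw [show |(q.1:ℝ)| ^ α - |(q.2:ℝ)| ^ α - (|(p.2:ℝ)| ^ α - |(p.1:ℝ)| ^ α - m) =
              -(|(p.2:ℝ)| ^ α - |(q.1:ℝ)| ^ α + |(q.2:ℝ)| ^ α - |(p.1:ℝ)| ^ α - m) by ring,
              abs_neg]
            exact hw
        · rw [min_eq_right h23]
          apply exists_row_fin hα1 hα2 hc₀ (p.2 - p.1) (by omega)
            (m + |(p.1:ℝ)| ^ α - |(p.2:ℝ)| ^ α) N₃ hN₃ _ (fun n => (n + (p.2 - p.1), n))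
          intro q hq
          simp only [Set.mem_setOf_eq, Sset] at hq
          obtain ⟨he, hn1, hn2, hw, hbN, hb1, hb2, hb3⟩ := hq
          refine ⟨q.2, ?_, hb3, ?_⟩
          · show (q.2 + (p.2 - p.1), q.2) = q
            rw [show q.2 + (p.2 - p.1) = q.1 by omega]
          · have hpe : (q.1 : ℝ) = (q.2:ℝ) + ((p.2 - p.1 : ℤ):ℝ) := by
              have h' : ((q.1:ℤ):ℝ) = ((q.2 + p.2 - p.1 : ℤ):ℝ) := by
                exact_mod_cast congrArg (fun z : ℤ => (z:ℝ)) (by omega : q.1 = q.2 + p.2 - p.1)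
              push_cast at h' ⊢
              linarith
            rw [← hpe]
            rw [show |(q.2:ℝ)| ^ α - |(q.1:ℝ)| ^ α - (m + |(p.1:ℝ)| ^ α - |(p.2:ℝ)| ^ α) =
              |(p.2:ℝ)| ^ α - |(q.1:ℝ)| ^ α + |(q.2:ℝ)| ^ α - |(p.1:ℝ)| ^ α - m by ring]
            exact hw
  · -- part (b)
    have hX0 : (0:ℝ) ≤ (min N₁ N₂) ^ (2 - α) := Real.rpow_nonneg (by linarith) _
    have hY0 : (0:ℝ) ≤ N₃ ^ (2 - α) := Real.rpow_nonneg (by linarith) _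
    have hmain := schur
      (fun q : ℤ × ℤ => {p : ℤ × ℤ | (p.1, q.1, q.2, p.2) ∈ Sset α c₀ m N N₁ N₂ N₃}) a ha
      (C1 * N₃ ^ (2 - α)) (C1 * (min N₁ N₂) ^ (2 - α))
      (mul_nonneg hC1p.le hY0) (mul_nonneg hC1p.le hX0) ?_ ?_
    · calc ∑ᶠ q : ℤ × ℤ,
          ‖∑ᶠ p ∈ {p : ℤ × ℤ | (p.1, q.1, q.2, p.2) ∈ Sset α c₀ m N N₁ N₂ N₃}, a p‖ ^ 2
          ≤ (C1 * N₃ ^ (2 - α)) * (C1 * (min N₁ N₂) ^ (2 - α)) * ∑ᶠ p : ℤ × ℤ, ‖a p‖ ^ 2 :=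
            hmain
        _ = C1 ^ 2 * ((min N₁ N₂) ^ (2 - α) * N₃ ^ (2 - α)) * ∑ᶠ p : ℤ × ℤ, ‖a p‖ ^ 2 := by
            ring
        _ ≤ (C1 ^ 2 + C2 ^ 2) * ((min N₁ N₂) ^ (2 - α) * N₃ ^ (2 - α)) *
              ∑ᶠ p : ℤ × ℤ, ‖a p‖ ^ 2 := by
            apply mul_le_mul_of_nonneg_right _ hSig
            apply mul_le_mul_of_nonneg_right _ (mul_nonneg hX0 hY0)
            nlinarith [sq_nonneg C2]
        _ = (C1 ^ 2 + C2 ^ 2) * (min N₁ N₂) ^ (2 - α) * N₃ ^ (2 - α) *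
              ∑ᶠ p : ℤ × ℤ, ‖a p‖ ^ 2 := by ring
    · -- rows
      intro q
      by_cases hq : q.1 = q.2
      · refine ⟨∅, ?_, by simp; positivity⟩
        intro p hp
        simp only [Sset, Set.mem_setOf_eq] at hp
        exact absurd hq.symm hp.2.1
      · apply exists_row_fin hα1 hα2 hc₀ (q.1 - q.2) (by omega)
          (m + |(q.2:ℝ)| ^ α - |(q.1:ℝ)| ^ α) N₃ hN₃ _ (fun n => (n + (q.1 - q.2), n))
        intro p hp
        simp only [Sset, Set.mem_setOf_eq] at hp
        obtain ⟨he, hn1, hn2, hw, hbN, hb1, hb2, hb3⟩ := hp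
        refine ⟨p.2, ?_, hb3, ?_⟩
        · show (p.2 + (q.1 - q.2), p.2) = p
          rw [show p.2 + (q.1 - q.2) = p.1 by omega]
        · have hpe : (p.1 : ℝ) = (p.2:ℝ) + ((q.1 - q.2 : ℤ):ℝ) := by
            have h' : ((p.1:ℤ):ℝ) = ((p.2 + q.1 - q.2 : ℤ):ℝ) :=
              congrArg (fun z : ℤ => (z:ℝ)) (by omega : p.1 = p.2 + q.1 - q.2)
            push_cast at h' ⊢
            linarith
          rw [← hpe]
          rw [show |(p.2:ℝ)| ^ α - |(p.1:ℝ)| ^ α - (m + |(q.2:ℝ)| ^ α - |(q.1:ℝ)| ^ α) =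
            |(q.1:ℝ)| ^ α - |(q.2:ℝ)| ^ α + |(p.2:ℝ)| ^ α - |(p.1:ℝ)| ^ α - m by ring]
          exact hw
    · -- columns
      intro p
      by_cases hp12 : p.1 = p.2
      · refine ⟨∅, ?_, by simp; positivity⟩
        intro q hq
        simp only [Set.mem_setOf_eq, Sset] at hq
        obtain ⟨he, hn1, -⟩ := hq
        exact absurd (by omega : q.2 = q.1) hn1
      · rcases le_total N₁ N₂ with h12 | h12
        · rw [min_eq_left h12]
          apply exists_row_fin hα1 hα2 hc₀ (p.2 - p.1) (by omega)
            (m + |(p.1:ℝ)| ^ α - |(p.2:ℝ)| ^ α) N₁ hN₁ _ (fun n => (n, n + (p.2 - p.1)))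
          intro q hq
          simp only [Set.mem_setOf_eq, Sset] at hq
          obtain ⟨he, hn1, hn2, hw, hbN, hb1, hb2, hb3⟩ := hq
          refine ⟨q.1, ?_, hb1, ?_⟩
          · show (q.1, q.1 + (p.2 - p.1)) = q
            rw [show q.1 + (p.2 - p.1) = q.2 by omega]
          · have hpe : (q.2 : ℝ) = (q.1:ℝ) + ((p.2 - p.1 : ℤ):ℝ) := by
              have h' : ((q.2:ℤ):ℝ) = ((q.1 + p.2 - p.1 : ℤ):ℝ) :=
                congrArg (fun z : ℤ => (z:ℝ)) (by omega : q.2 = q.1 + p.2 - p.1)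
              push_cast at h' ⊢
              linarith
            rw [← hpe]
            rw [show |(q.1:ℝ)| ^ α - |(q.2:ℝ)| ^ α - (m + |(p.1:ℝ)| ^ α - |(p.2:ℝ)| ^ α) =
              |(q.1:ℝ)| ^ α - |(q.2:ℝ)| ^ α + |(p.2:ℝ)| ^ α - |(p.1:ℝ)| ^ α - m by ring]
            exact hw
        · rw [min_eq_right h12]
          apply exists_row_fin hα1 hα2 hc₀ (p.1 - p.2) (by omega)
            (|(p.2:ℝ)| ^ α - |(p.1:ℝ)| ^ α - m) N₂ hN₂ _ (fun n => (n + (p.1 - p.2), n))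
          intro q hq
          simp only [Set.mem_setOf_eq, Sset] at hq
          obtain ⟨he, hn1, hn2, hw, hbN, hb1, hb2, hb3⟩ := hq
          refine ⟨q.2, ?_, hb2, ?_⟩
          · show (q.2 + (p.1 - p.2), q.2) = q
            rw [show q.2 + (p.1 - p.2) = q.1 by omega]
          · have hpe : (q.1 : ℝ) = (q.2:ℝ) + ((p.1 - p.2 : ℤ):ℝ) := by
              have h' : ((q.1:ℤ):ℝ) = ((q.2 + p.1 - p.2 : ℤ):ℝ) :=
                congrArg (fun z : ℤ => (z:ℝ)) (by omega : q.1 = q.2 + p.1 - p.2)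
              push_cast at h' ⊢
              linarith
            rw [← hpe]
            rw [show |(q.2:ℝ)| ^ α - |(q.1:ℝ)| ^ α - (|(p.2:ℝ)| ^ α - |(p.1:ℝ)| ^ α - m) =
              -(|(q.1:ℝ)| ^ α - |(q.2:ℝ)| ^ α + |(p.2:ℝ)| ^ α - |(p.1:ℝ)| ^ α - m) by ring,
              abs_neg]
            exact hw
  · -- part (c)
    have hX0 : (0:ℝ) ≤ (min N₁ N₃) ^ (1 - α/2) := Real.rpow_nonneg (by linarith) _
    have hY0 : (0:ℝ) ≤ (min N N₂) ^ (1 - α/2) := Real.rpow_nonneg (by linarith) _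
    have hmain := schur
      (fun q : ℤ × ℤ => {p : ℤ × ℤ | (p.1, q.1, p.2, q.2) ∈ Sset α c₀ m N N₁ N₂ N₃}) a ha
      (C2 * (min N N₂) ^ (1 - α/2)) (C2 * (min N₁ N₃) ^ (1 - α/2))
      (mul_nonneg hC2p.le hY0) (mul_nonneg hC2p.le hX0) ?_ ?_
    · calc ∑ᶠ q : ℤ × ℤ,
          ‖∑ᶠ p ∈ {p : ℤ × ℤ | (p.1, q.1, p.2, q.2) ∈ Sset α c₀ m N N₁ N₂ N₃}, a p‖ ^ 2
          ≤ (C2 * (min N N₂) ^ (1 - α/2)) * (C2 * (min N₁ N₃) ^ (1 - α/2)) *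
              ∑ᶠ p : ℤ × ℤ, ‖a p‖ ^ 2 := hmain
        _ = C2 ^ 2 * ((min N₁ N₃) ^ (1 - α/2) * (min N N₂) ^ (1 - α/2)) *
              ∑ᶠ p : ℤ × ℤ, ‖a p‖ ^ 2 := by ring
        _ ≤ (C1 ^ 2 + C2 ^ 2) * ((min N₁ N₃) ^ (1 - α/2) * (min N N₂) ^ (1 - α/2)) *
              ∑ᶠ p : ℤ × ℤ, ‖a p‖ ^ 2 := by
            apply mul_le_mul_of_nonneg_right _ hSig
            apply mul_le_mul_of_nonneg_right _ (mul_nonneg hX0 hY0)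
            nlinarith [sq_nonneg C1]
        _ = (C1 ^ 2 + C2 ^ 2) * (min N₁ N₃) ^ (1 - α/2) * (min N N₂) ^ (1 - α/2) *
              ∑ᶠ p : ℤ × ℤ, ‖a p‖ ^ 2 := by ring
    · -- rows
      intro q
      apply exists_conv_fin hα1 hα2 hc₀ (q.1 + q.2)
        (|(q.1:ℝ)| ^ α + |(q.2:ℝ)| ^ α - m) N N₂ hN hN₂ _ (fun n => (n, q.1 + q.2 - n))
      intro p hp
      simp only [Sset, Set.mem_setOf_eq] at hp
      obtain ⟨he, hn1, hn2, hw, hbN, hb1, hb2, hb3⟩ := hp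
      have hse : ((q.1 + q.2 : ℤ):ℝ) - (p.1:ℝ) = (p.2:ℝ) := by
        have h' : ((q.1 + q.2 - p.1 : ℤ):ℝ) = ((p.2:ℤ):ℝ) :=
          congrArg (fun z : ℤ => (z:ℝ)) (by omega : q.1 + q.2 - p.1 = p.2)
        push_cast at h' ⊢
        linarith
      refine ⟨p.1, ?_, hbN, ?_, ?_⟩
      · show (p.1, q.1 + q.2 - p.1) = p
        rw [show q.1 + q.2 - p.1 = p.2 by omega]
      · rw [hse]; exact hb2
      · rw [hse]
        rw [show |(p.1:ℝ)| ^ α + |(p.2:ℝ)| ^ α - (|(q.1:ℝ)| ^ α + |(q.2:ℝ)| ^ α - m) =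
          -(|(q.1:ℝ)| ^ α - |(p.2:ℝ)| ^ α + |(q.2:ℝ)| ^ α - |(p.1:ℝ)| ^ α - m) by ring,
          abs_neg]
        exact hw
    · -- columns
      intro p
      apply exists_conv_fin hα1 hα2 hc₀ (p.1 + p.2)
        (m + |(p.1:ℝ)| ^ α + |(p.2:ℝ)| ^ α) N₁ N₃ hN₁ hN₃ _ (fun n => (n, p.1 + p.2 - n))
      intro q hq
      simp only [Set.mem_setOf_eq, Sset] at hq
      obtain ⟨he, hn1, hn2, hw, hbN, hb1, hb2, hb3⟩ := hq
      have hse : ((p.1 + p.2 : ℤ):ℝ) - (q.1:ℝ) = (q.2:ℝ) := by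
        have h' : ((p.1 + p.2 - q.1 : ℤ):ℝ) = ((q.2:ℤ):ℝ) :=
          congrArg (fun z : ℤ => (z:ℝ)) (by omega : p.1 + p.2 - q.1 = q.2)
        push_cast at h' ⊢
        linarith
      refine ⟨q.1, ?_, hb1, ?_, ?_⟩
      · show (q.1, p.1 + p.2 - q.1) = q
        rw [show p.1 + p.2 - q.1 = q.2 by omega]
      · rw [hse]; exact hb3
      · rw [hse]
        rw [show |(q.1:ℝ)| ^ α + |(q.2:ℝ)| ^ α - (m + |(p.1:ℝ)| ^ α + |(p.2:ℝ)| ^ α) =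
          |(q.1:ℝ)| ^ α - |(p.2:ℝ)| ^ α + |(q.2:ℝ)| ^ α - |(p.1:ℝ)| ^ α - m by ring]
        exact hw
end

section
/- There exists a constant C = C(α,c₀) such that for all m ∈ ℝ and all N, N₁, N₂, N₃ with 1 ≤ N₁, N₂, N₃ ≤ N, the set S' = {(k,k₁,k₂,k₃) ∈ S : |k₁ + k₃| < |k₂|} satisfies: (a) #S' ≤ C·N₁·N₃; (b) for every finitely supported a : ℤ² → ℂ, Σ_{(k₁,k₃)∈ℤ²} | Σ_{(k,k₂): (k,k₁,k₂,k₃)∈S'} a(k,k₂) |² ≤ C·(min(N₁,N₃))^{1−α/2}·Σ_{(k,k₂)}|a(k,k₂)|²; (c) for every fixed k₁ ∈ ℤ, the fiber {(k,k₂,k₃) : (k,k₁,k₂,k₃) ∈ S'} has at most C·N₃ elements; (d) for every fixed k₃ ∈ ℤ, the fiber {(k,k₁,k₂) : (k,k₁,k₂,k₃) ∈ S'} has at most C·N₁ elements. -/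
set_option maxHeartbeats 1600000

open Real

section Aux
/-- Convex gradient inequality for `x ^ p`, `p ≥ 1`. -/
lemma bern_convex {p : ℝ} (hp : 1 ≤ p) {x y : ℝ} (hx : 0 < x) (hy : 0 ≤ y) :
    x ^ p + p * x ^ (p - 1) * (y - x) ≤ y ^ p := by
  have hb : -1 ≤ y / x - 1 := by
    have : 0 ≤ y / x := div_nonneg hy hx.le
    linarith
  have h := one_add_mul_self_le_rpow_one_add hb hp
  rw [add_sub_cancel] at h
  have h2 : (y / x) ^ p = y ^ p / x ^ p := Real.div_rpow hy hx.le p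
  rw [h2] at h
  have hxp : 0 < x ^ p := Real.rpow_pos_of_pos hx p
  have h3 := (mul_le_mul_of_nonneg_left h hxp.le)
  have hxp1 : x ^ (p - 1) = x ^ p / x := by
    rw [Real.rpow_sub hx, Real.rpow_one]
  rw [hxp1]
  have h4 : x ^ p * (y ^ p / x ^ p) = y ^ p := by field_simp
  rw [h4] at h3
  calc x ^ p + p * (x ^ p / x) * (y - x)
      = x ^ p * (1 + p * (y / x - 1)) := by field_simp
    _ ≤ y ^ p := h3

/-- Concave gradient inequality for `x ^ p`, `0 ≤ p ≤ 1`. -/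
lemma bern_concave {p : ℝ} (hp0 : 0 ≤ p) (hp1 : p ≤ 1) {x y : ℝ} (hx : 0 < x) (hy : 0 ≤ y) :
    y ^ p ≤ x ^ p + p * x ^ (p - 1) * (y - x) := by
  have hb : -1 ≤ y / x - 1 := by
    have : 0 ≤ y / x := div_nonneg hy hx.le
    linarith
  have h := rpow_one_add_le_one_add_mul_self hb hp0 hp1
  rw [add_sub_cancel] at h
  rw [Real.div_rpow hy hx.le p] at h
  have hxp : 0 < x ^ p := Real.rpow_pos_of_pos hx p
  have h3 := (mul_le_mul_of_nonneg_left h hxp.le)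
  have h4 : x ^ p * (y ^ p / x ^ p) = y ^ p := by field_simp
  rw [h4] at h3
  have hxp1 : x ^ (p - 1) = x ^ p / x := by
    rw [Real.rpow_sub hx, Real.rpow_one]
  rw [hxp1]
  calc y ^ p ≤ x ^ p * (1 + p * (y / x - 1)) := h3
    _ = x ^ p + p * (x ^ p / x) * (y - x) := by field_simp

noncomputable def cA (α : ℝ) : ℝ := min (1 - 2 ^ (1 - α)) (α * (α - 1) / 2)

lemma cA_pos {α : ℝ} (h1 : 1 < α) (h2 : α < 2) : 0 < cA α := by
  have : (2:ℝ) ^ (1 - α) < 1 :=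
    Real.rpow_lt_one_of_one_lt_of_neg one_lt_two (by linarith)
  have h3 : 0 < α * (α - 1) / 2 := by nlinarith
  exact lt_min (by linarith) h3

lemma cA_le_one {α : ℝ} : cA α ≤ 1 := by
  have : (0:ℝ) < 2 ^ (1 - α) := Real.rpow_pos_of_pos two_pos _
  calc cA α ≤ 1 - 2 ^ (1-α) := min_le_left _ _
    _ ≤ 1 := by linarith

/-- second difference lower bound, nonnegative case -/
lemma secdiff_aux {α : ℝ} (h1 : 1 < α) (h2 : α < 2) {t : ℝ} (ht : 0 ≤ t) :
    cA α * (1 + t) ^ (α - 2) ≤ |t - 1| ^ α + (t + 1) ^ α - 2 * t ^ α := by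
  have h1t : (0:ℝ) < 1 + t := by linarith
  rcases le_total t 1 with hle | hge
  · -- 0 ≤ t ≤ 1
    have habs : |t - 1| = 1 - t := by rw [abs_of_nonpos (by linarith)]; ring
    have hexp : (1 + t) ^ (α - 2) ≤ 1 :=
      Real.rpow_le_one_of_one_le_of_nonpos (by linarith) (by linarith)
    have hca : 0 < cA α := cA_pos h1 h2
    have key : cA α ≤ (1 - t) ^ α + (t + 1) ^ α - 2 * t ^ α := by
      rcases le_total t (1/2) with hhalf | hhalf
      · have b1 : 1 + α * t ≤ (1 + t) ^ α := one_add_mul_self_le_rpow_one_add (by linarith) h1.le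
        have b2 : 1 + α * (-t) ≤ (1 + (-t)) ^ α :=
          one_add_mul_self_le_rpow_one_add (by linarith) h1.le
        have heq : (1 : ℝ) + (-t) = 1 - t := by ring
        rw [heq] at b2
        have b3 : t ^ α ≤ t := by
          calc t ^ α ≤ t ^ (1:ℝ) :=
                Real.rpow_le_rpow_of_exponent_ge' ht hle (by norm_num) h1.le
            _ = t := Real.rpow_one t
        have b1' : 1 + α * t ≤ (t + 1) ^ α := by rw [add_comm t 1]; exact b1
        have : cA α ≤ 1 := cA_le_one
        linarith
      · have b0 : (0:ℝ) ≤ (1 - t) ^ α := Real.rpow_nonneg (by linarith) _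
        have b1 : (2*t) ^ α ≤ (t + 1) ^ α :=
          Real.rpow_le_rpow (by linarith) (by linarith) (by linarith)
        have b2 : (2*t) ^ α = 2 ^ α * t ^ α := Real.mul_rpow (by norm_num) ht
        have b3 : ((1:ℝ)/2) ^ α ≤ t ^ α := Real.rpow_le_rpow (by norm_num) hhalf (by linarith)
        have hhp : ((1:ℝ)/2) ^ α = 2 ^ (-α) := by
          rw [one_div, ← Real.rpow_neg_one 2, ← Real.rpow_mul (by norm_num : (0:ℝ) ≤ 2)]
          norm_num
        have h2a : (2:ℝ) ≤ 2 ^ α := by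
          calc (2:ℝ) = 2 ^ (1:ℝ) := (Real.rpow_one 2).symm
            _ ≤ 2 ^ α := Real.rpow_le_rpow_of_exponent_le one_le_two h1.le
        have e1 : (2:ℝ)^α * 2^(-α) = 1 := by
          rw [← Real.rpow_add two_pos]; simp
        have e2 : (2:ℝ)^(1-α) = 2 * 2^(-α) := by
          rw [show (1:ℝ) - α = 1 + (-α) by ring, Real.rpow_add two_pos, Real.rpow_one]
        rw [hhp] at b3
        have hge0 : (0:ℝ) ≤ 2^α - 2 := by linarith
        have step : (2^α - 2) * (2:ℝ)^(-α) ≤ (2^α - 2) * t^α :=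
          mul_le_mul_of_nonneg_left b3 hge0
        have hca1 : cA α ≤ 1 - 2^(1-α) := min_le_left _ _
        nlinarith [step]
    calc cA α * (1 + t) ^ (α - 2) ≤ cA α * 1 := mul_le_mul_of_nonneg_left hexp hca.le
      _ = cA α := mul_one _
      _ ≤ |t - 1| ^ α + (t + 1) ^ α - 2 * t ^ α := by rw [habs]; exact key
  · -- t ≥ 1
    have habs : |t - 1| = t - 1 := abs_of_nonneg (by linarith)
    have hxp : (0:ℝ) < t + 1/2 := by linarith
    have hxm : (0:ℝ) < t - 1/2 := by linarith
    have ht0 : (0:ℝ) < t := by linarith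
    have a1 : (t + 1/2) ^ α + α * (t + 1/2) ^ (α-1) * ((t+1) - (t+1/2)) ≤ (t+1) ^ α :=
      bern_convex h1.le hxp (by linarith)
    have a2 : t ^ α + α * t ^ (α-1) * ((t+1/2) - t) ≤ (t+1/2) ^ α :=
      bern_convex h1.le ht0 (by linarith)
    have b1 : (t - 1/2) ^ α + α * (t - 1/2) ^ (α-1) * ((t-1) - (t-1/2)) ≤ (t-1) ^ α :=
      bern_convex h1.le hxm (by linarith)
    have b2 : t ^ α + α * t ^ (α-1) * ((t-1/2) - t) ≤ (t-1/2) ^ α :=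
      bern_convex h1.le ht0 (by linarith)
    have c1 : (t-1/2) ^ (α-1) ≤ (t+1/2) ^ (α-1) + (α-1) * (t+1/2) ^ ((α-1)-1) * ((t-1/2) - (t+1/2)) :=
      bern_concave (by linarith) (by linarith) hxp hxm.le
    have hee : (α - 1) - 1 = α - 2 := by ring
    rw [hee] at c1
    have hmono : (1 + t) ^ (α-2) ≤ (t + 1/2) ^ (α-2) :=
      Real.rpow_le_rpow_of_nonpos hxp (by linarith) (by linarith)
    have hca2 : cA α ≤ α * (α-1) / 2 := min_le_right _ _
    have hca0 : 0 < cA α := cA_pos h1 h2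
    have hpos : (0:ℝ) ≤ (t + 1/2) ^ (α - 2) := Real.rpow_nonneg hxp.le _
    have hposs : (0:ℝ) ≤ (1 + t) ^ (α - 2) := Real.rpow_nonneg h1t.le _
    rw [habs]
    have key : α * (α-1) / 2 * (t + 1/2)^(α-2) ≤ (t-1)^α + (t+1)^α - 2 * t^α := by
      nlinarith [a1, a2, b1, b2, c1]
    have h5 : cA α * (1+t) ^ (α-2) ≤ α * (α-1)/2 * (t+1/2)^(α-2) :=
      mul_le_mul hca2 hmono hposs (by nlinarith)
    linarith

/-- second difference lower bound for `|·| ^ α`, all real t -/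
lemma secdiff {α : ℝ} (h1 : 1 < α) (h2 : α < 2) (t : ℝ) :
    cA α * (1 + |t|) ^ (α - 2) ≤ |t - 1| ^ α + |t + 1| ^ α - 2 * |t| ^ α := by
  rcases le_total 0 t with ht | ht
  · have := secdiff_aux h1 h2 (abs_nonneg t)
    rw [abs_of_nonneg ht] at *
    have habs : |t + 1| = t + 1 := abs_of_nonneg (by linarith)
    rw [habs]
    calc cA α * (1+t)^(α-2) ≤ |t-1|^α + (t+1)^α - 2*t^α := by
          have h := secdiff_aux h1 h2 ht
          exact h
      _ = |t-1|^α + (t+1)^α - 2*t^α := rfl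
  · have h := secdiff_aux h1 h2 (neg_nonneg.mpr ht)
    have e1 : |-t - 1| = |t + 1| := by rw [show -t - 1 = -(t+1) by ring, abs_neg]
    have e2 : (-t + 1) = |t - 1| := by rw [show t - 1 = -(-t+1) by ring, abs_neg,
      abs_of_nonneg (by linarith)]
    have e3 : |t| = -t := abs_of_nonpos ht
    rw [e1, e2] at h
    rw [e3]
    linarith [h]

/-- monotonicity of `(u+σ)^α + |u-σ|^α` in `u ≥ 0`. -/
lemma mono_pair {α : ℝ} (h1 : 1 < α) {σ u v : ℝ} (hσ : 0 ≤ σ) (hu : 0 ≤ u) (huv : u ≤ v) :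
    (u + σ) ^ α + |u - σ| ^ α ≤ (v + σ) ^ α + |v - σ| ^ α := by
  rcases le_or_gt |u - σ| |v - σ| with h | h
  · have g1 : (u + σ) ^ α ≤ (v + σ) ^ α :=
      Real.rpow_le_rpow (by linarith) (by linarith) (by linarith)
    have g2 : |u - σ| ^ α ≤ |v - σ| ^ α :=
      Real.rpow_le_rpow (abs_nonneg _) h (by linarith)
    linarith
  · -- |v - σ| < |u - σ|
    have husi : u < σ := by
      by_contra hc
      push_neg at hc
      have : |u - σ| = u - σ := abs_of_nonneg (by linarith)
      have h2 : |v - σ| = v - σ := abs_of_nonneg (by linarith)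
      rw [this, h2] at h; linarith
    have hb1 : |u - σ| = σ - u := by rw [abs_of_nonpos (by linarith)]; ring
    have hb1pos : 0 < σ - u := by
      have := (abs_nonneg (v - σ)).trans_lt (hb1 ▸ h)
      linarith
    have hbb : σ - v ≤ |v - σ| := by
      rw [abs_sub_comm]; exact le_abs_self _
    have husp : 0 < u + σ := by linarith
    -- B' = b1^α - b2^α ≤ α b1^(α-1) (b1 - b2)
    have hB : |v - σ| ^ α ≥ (σ - u) ^ α + α * (σ - u)^(α-1) * (|v - σ| - (σ - u)) :=
      bern_convex h1.le hb1pos (abs_nonneg _)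
    -- A ≥ α (u+σ)^(α-1) (v-u)
    have hA : (v + σ) ^ α ≥ (u + σ) ^ α + α * (u + σ)^(α-1) * ((v + σ) - (u + σ)) :=
      bern_convex h1.le husp (by linarith)
    have hble : σ - u ≤ u + σ := by linarith
    have hpow : (σ - u)^(α-1) ≤ (u + σ)^(α-1) :=
      Real.rpow_le_rpow hb1pos.le hble (by linarith)
    have hd : (σ - u) - |v - σ| ≤ v - u := by linarith
    have hα0 : 0 < α := by linarith
    -- combine
    have hdpos : 0 ≤ (σ - u) - |v - σ| := by rw [hb1] at h; linarith
    have step1 : α * (σ - u)^(α-1) * ((σ - u) - |v - σ|) ≤ α * (u + σ)^(α-1) * (v - u) := by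
      apply mul_le_mul
      · exact mul_le_mul_of_nonneg_left hpow hα0.le
      · exact hd
      · exact hdpos
      · positivity
    rw [hb1]
    nlinarith [hA, hB, step1]

/-- monotonicity of `h(x) = |x|^α + |x-s|^α` for `x ≥ s/2`. -/
lemma mono_h {α : ℝ} (h1 : 1 < α) {s x y : ℝ} (hx : s ≤ 2 * x) (hxy : x ≤ y) :
    |x| ^ α + |x - s| ^ α ≤ |y| ^ α + |y - s| ^ α := by
  rcases le_or_gt 0 s with hs | hs
  · have hx0 : 0 ≤ x := by linarith
    have key := mono_pair h1 (σ := s/2) (u := x - s/2) (v := y - s/2)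
      (by linarith) (by linarith) (by linarith)
    have e1 : x - s/2 + s/2 = x := by ring
    have e2 : x - s/2 - s/2 = x - s := by ring
    have e3 : y - s/2 + s/2 = y := by ring
    have e4 : y - s/2 - s/2 = y - s := by ring
    rw [e1, e2, e3, e4] at key
    rw [abs_of_nonneg hx0, abs_of_nonneg (by linarith : (0:ℝ) ≤ y)]
    exact key
  · have hxs : 0 ≤ x - s := by linarith
    have key := mono_pair h1 (σ := -s/2) (u := x - s/2) (v := y - s/2)
      (by linarith) (by linarith) (by linarith)
    have e1 : x - s/2 + -s/2 = x - s := by ring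
    have e2 : x - s/2 - -s/2 = x := by ring
    have e3 : y - s/2 + -s/2 = y - s := by ring
    have e4 : y - s/2 - -s/2 = y := by ring
    rw [e1, e2, e3, e4] at key
    rw [abs_of_nonneg hxs, abs_of_nonneg (by linarith : (0:ℝ) ≤ y - s)]
    linarith [key]

/-- discrete quadratic growth from second differences -/
lemma discrete_growth (H : ℤ → ℝ) (μ : ℝ) (x y : ℤ) (hxy : x ≤ y)
    (h0 : H x ≤ H (x + 1))
    (hd : ∀ i : ℤ, x < i → i < y → μ ≤ H (i + 1) + H (i - 1) - 2 * H i) :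
    μ * ((y : ℝ) - x) * ((y : ℝ) - x - 1) / 2 ≤ H y - H x := by
  have claim1 : ∀ n : ℕ, x + n < y → μ * n ≤ H (x + n + 1) - H (x + n) := by
    intro n
    induction n with
    | zero => intro _; simpa using h0
    | succ n ih =>
      intro hn
      have hcast : ((n + 1 : ℕ) : ℤ) = (n : ℤ) + 1 := by push_cast; ring
      have hcast2 : ((n + 1 : ℕ) : ℝ) = (n : ℝ) + 1 := by push_cast; ring
      rw [hcast, ← add_assoc, hcast2]
      have hn' : x + n < y := by omega
      have h1 := ih hn'
      have h2 := hd (x + n + 1) (by omega) (by omega)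
      have e2 : (x + n + 1 : ℤ) - 1 = x + n := by ring
      rw [e2] at h2
      linarith
  have claim2 : ∀ n : ℕ, x + n ≤ y → μ * n * (n - 1) / 2 ≤ H (x + n) - H x := by
    intro n
    induction n with
    | zero => intro _; simp
    | succ n ih =>
      intro hn
      have hcast : ((n + 1 : ℕ) : ℤ) = (n : ℤ) + 1 := by push_cast; ring
      have hcast2 : ((n + 1 : ℕ) : ℝ) = (n : ℝ) + 1 := by push_cast; ring
      rw [hcast, ← add_assoc, hcast2]
      have hn' : x + n < y := by omega
      have h1 := ih (by omega)
      have h2 := claim1 n hn'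
      nlinarith [h1, h2]
  have hn : x + ((y - x).toNat : ℤ) = y := by omega
  have := claim2 (y - x).toNat (by omega)
  rw [hn] at this
  have hc : (((y - x).toNat : ℤ) : ℝ) = (y : ℝ) - x := by
    rw [Int.toNat_of_nonneg (by omega)]; push_cast; ring
  push_cast at this hc ⊢
  rw [hc] at this
  linarith

/-- a set of integers with pairwise real-distance ≤ D is finite with ≤ 2D+3 elements -/
lemma ncard_of_pairwise (T : Set ℤ) (D : ℝ) (hD : 0 ≤ D)
    (h : ∀ x ∈ T, ∀ y ∈ T, |(x : ℝ) - (y : ℝ)| ≤ D) :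
    T.Finite ∧ (T.ncard : ℝ) ≤ 2 * D + 3 := by
  rcases T.eq_empty_or_nonempty with rfl | ⟨a, ha⟩
  · simp; linarith
  · have hsub : T ⊆ Set.Icc (a - ⌈D⌉) (a + ⌈D⌉) := by
      intro b hb
      have hab := h b hb a ha
      have h1 : |(b : ℝ) - a| ≤ (⌈D⌉ : ℝ) := hab.trans (Int.le_ceil D)
      have h2 : ((|b - a| : ℤ) : ℝ) ≤ ((⌈D⌉ : ℤ) : ℝ) := by push_cast; exact h1
      have h3 : |b - a| ≤ ⌈D⌉ := by exact_mod_cast h2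
      rw [abs_le] at h3
      constructor <;> omega
    have hfin : T.Finite := (Set.finite_Icc _ _).subset hsub
    refine ⟨hfin, ?_⟩
    have hcard : T.ncard ≤ (Set.Icc (a - ⌈D⌉) (a + ⌈D⌉)).ncard :=
      Set.ncard_le_ncard hsub (Set.finite_Icc _ _)
    have hicc : (Set.Icc (a - ⌈D⌉) (a + ⌈D⌉)).ncard = (Finset.Icc (a - ⌈D⌉) (a + ⌈D⌉)).card := by
      rw [← Set.ncard_coe_finset]; congr 1; simp
    have hcc : (Finset.Icc (a - ⌈D⌉) (a + ⌈D⌉)).card = (2 * ⌈D⌉ + 1).toNat := by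
      rw [Int.card_Icc]; congr 1; ring
    have hD0 : (0:ℤ) ≤ ⌈D⌉ := Int.ceil_nonneg hD
    have hthis : (((2 * ⌈D⌉ + 1).toNat : ℤ) : ℝ) = 2 * (⌈D⌉ : ℝ) + 1 := by
      rw [Int.toNat_of_nonneg (by omega)]; push_cast; ring
    have hceil : (⌈D⌉ : ℝ) ≤ D + 1 := by
      have := Int.ceil_lt_add_one D; linarith
    calc (T.ncard : ℝ) ≤ (((2 * ⌈D⌉ + 1).toNat : ℤ) : ℝ) := by
          exact_mod_cast (hcard.trans_eq (hicc.trans hcc))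
      _ = 2 * (⌈D⌉ : ℝ) + 1 := hthis
      _ ≤ 2 * D + 3 := by linarith

/-- fiber counting for subsets of a product -/
lemma ncard_fiber_bound {β γ : Type*} [DecidableEq β] [DecidableEq γ]
    (V : Set (β × γ)) (B : Finset β) (κ : ℝ) (hκ : 0 ≤ κ)
    (hproj : ∀ v ∈ V, v.1 ∈ B)
    (hfib : ∀ b, ({c | (b, c) ∈ V}).Finite ∧ (({c | (b, c) ∈ V}).ncard : ℝ) ≤ κ) :
    V.Finite ∧ (V.ncard : ℝ) ≤ B.card * κ := by
  classical
  set W : Finset (β × γ) :=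
    B.biUnion (fun b => ((hfib b).1.toFinset).image (fun c => (b, c))) with hW
  have hsub : V ⊆ ↑W := by
    intro v hv
    rcases v with ⟨b, c⟩
    simp only [hW, Finset.coe_biUnion, Set.mem_iUnion, Finset.mem_coe, Finset.mem_image,
      Finset.mem_biUnion]
    exact ⟨b, hproj _ hv, by simp [Set.Finite.mem_toFinset]; exact hv⟩
  have hfin : V.Finite := Set.Finite.subset (W.finite_toSet) hsub
  refine ⟨hfin, ?_⟩
  have h1 : V.ncard ≤ W.card := by
    have := Set.ncard_le_ncard hsub (W.finite_toSet)
    rwa [Set.ncard_coe_finset] at this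
  have h2 : W.card ≤ ∑ b ∈ B, ((hfib b).1.toFinset).card := by
    refine (Finset.card_biUnion_le).trans ?_
    exact Finset.sum_le_sum fun b _ => Finset.card_image_le
  have h3 : ∀ b, (((hfib b).1.toFinset.card : ℝ)) ≤ κ := by
    intro b
    have := (hfib b).2
    rwa [Set.ncard_eq_toFinset_card _ (hfib b).1] at this
  calc (V.ncard : ℝ) ≤ (W.card : ℝ) := by exact_mod_cast h1
    _ ≤ ((∑ b ∈ B, ((hfib b).1.toFinset).card : ℕ) : ℝ) := by exact_mod_cast h2
    _ = ∑ b ∈ B, (((hfib b).1.toFinset).card : ℝ) := by push_cast; ring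
    _ ≤ ∑ _b ∈ B, κ := Finset.sum_le_sum fun b _ => h3 b
    _ = B.card * κ := by rw [Finset.sum_const]; simp [mul_comm]

/-- the band value function -/
noncomputable def bv (α : ℝ) (s : ℤ) (x : ℤ) : ℝ := |(x:ℝ)| ^ α + |(x:ℝ) - (s:ℝ)| ^ α

lemma bv_neg (α : ℝ) (s x : ℤ) : bv α (-s) (-x) = bv α s x := by
  unfold bv
  push_cast
  rw [show -(x:ℝ) - -(s:ℝ) = -((x:ℝ) - s) by ring, abs_neg, abs_neg]

lemma bv_refl (α : ℝ) (s x : ℤ) : bv α s (s - x) = bv α s x := by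
  unfold bv
  push_cast
  rw [show (s:ℝ) - x - s = -(x:ℝ) by ring, show (s:ℝ) - (x:ℝ) = -((x:ℝ) - s) by ring,
    abs_neg, abs_neg]
  ring

/-- one step of growth: for `t ≥ 1`, `t^α + 1 ≤ (t+1)^α` -/
lemma step_one {α : ℝ} (h1 : 1 < α) {t : ℝ} (ht : 1 ≤ t) : t ^ α + 1 ≤ (t + 1) ^ α := by
  have h := bern_convex h1.le (show (0:ℝ) < t by linarith) (show (0:ℝ) ≤ t + 1 by linarith)
  have hp : (1:ℝ) ≤ t ^ (α - 1) := by
    calc (1:ℝ) = t ^ (0:ℝ) := (Real.rpow_zero t).symm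
      _ ≤ t ^ (α - 1) := Real.rpow_le_rpow_of_exponent_le ht (by linarith)
  have hprod : (1:ℝ) ≤ α * t ^ (α - 1) := by
    calc (1:ℝ) = 1 * 1 := by ring
      _ ≤ α * t ^ (α - 1) := mul_le_mul h1.le hp zero_le_one (by linarith)
  linarith [h, hprod]

/-- pairwise bound for the positive branch of the A-count -/
lemma pairA {α c₀ : ℝ} (h1 : 1 < α) (hc₀ : 1 ≤ c₀) (s : ℤ) (r : ℝ) (x y : ℤ)
    (hx : |s| < x) (hy : |s| < y)
    (hbx : |bv α s x - r| ≤ c₀) (hby : |bv α s y - r| ≤ c₀) :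
    |(x:ℝ) - (y:ℝ)| ≤ 2 * c₀ := by
  -- wlog x ≤ y
  have main : ∀ u v : ℤ, |s| < u → u ≤ v → |bv α s u - r| ≤ c₀ → |bv α s v - r| ≤ c₀ →
      (v:ℝ) - (u:ℝ) ≤ 2 * c₀ := by
    intro u v hu huv hbu hbv
    have grow : ∀ n : ℕ, bv α s u + n ≤ bv α s (u + n) := by
      intro n
      induction n with
      | zero => simp
      | succ n ih =>
        have hcast : ((n + 1 : ℕ) : ℤ) = (n : ℤ) + 1 := by push_cast; ring
        have hcast2 : ((n + 1 : ℕ) : ℝ) = (n : ℝ) + 1 := by push_cast; ring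
        rw [hcast, ← add_assoc, hcast2]
        have hstep : bv α s (u + n) + 1 ≤ bv α s (u + n + 1) := by
          set t : ℝ := ((u + n : ℤ) : ℝ) with hts
          have habs : (1:ℝ) ≤ t := by
            have : 1 ≤ u + (n:ℤ) := by
              have := abs_nonneg s; omega
            rw [hts]; exact_mod_cast this
          have hts' : (1:ℝ) ≤ t - s := by
            have : (s:ℤ) + 1 ≤ u + n := by
              have := le_abs_self s; omega
            have h2 : ((s + 1 : ℤ) : ℝ) ≤ t := by rw [hts]; exact_mod_cast this
            push_cast at h2; linarith
          unfold bv
          have e1 : ((u + n + 1 : ℤ) : ℝ) = t + 1 := by rw [hts]; push_cast; ring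
          rw [e1]
          have e2 : |t| = t := abs_of_nonneg (by linarith)
          have e3 : |t + 1| = t + 1 := abs_of_nonneg (by linarith)
          have e4 : |t - s| = t - s := abs_of_nonneg (by linarith)
          have e5 : |t + 1 - s| = t + 1 - s := abs_of_nonneg (by linarith)
          rw [e2, e3, e4, e5]
          have s1 : t ^ α + 1 ≤ (t + 1) ^ α := step_one h1 habs
          have s2 : (t - s) ^ α ≤ (t + 1 - s) ^ α :=
            Real.rpow_le_rpow (by linarith) (by linarith) (by linarith)
          linarith
        linarith [ih]
    have hnn : u ≤ v := huv
    have := grow (v - u).toNat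
    have huv2 : u + ((v - u).toNat : ℤ) = v := by omega
    rw [huv2] at this
    have hc : (((v - u).toNat : ℤ) : ℝ) = (v : ℝ) - u := by
      rw [Int.toNat_of_nonneg (by omega)]; push_cast; ring
    have h2 : (((v-u).toNat : ℕ) : ℝ) = (v:ℝ) - u := by exact_mod_cast hc
    rw [h2] at this
    have b1 : bv α s u - r ≥ -c₀ := by have := abs_le.mp hbu; linarith [this.1]
    have b2 : bv α s v - r ≤ c₀ := (abs_le.mp hbv).2
    linarith
  rcases le_total x y with hxy | hxy
  · rw [abs_sub_comm, abs_of_nonneg (by exact_mod_cast sub_nonneg.mpr hxy)]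
    have := main x y hx hxy hbx hby
    linarith
  · rw [abs_of_nonneg (by exact_mod_cast sub_nonneg.mpr hxy)]
    exact main y x hy hxy hby hbx

/-- the A-count set -/
def TA (α c₀ : ℝ) (s : ℤ) (r : ℝ) : Set ℤ := {x : ℤ | |s| < |x| ∧ |bv α s x - r| ≤ c₀}

lemma countA {α c₀ : ℝ} (h1 : 1 < α) (hc₀ : 1 ≤ c₀) (s : ℤ) (r : ℝ) :
    (TA α c₀ s r).Finite ∧ ((TA α c₀ s r).ncard : ℝ) ≤ 14 * c₀ := by
  have hc0 : (0:ℝ) < c₀ := by linarith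
  set TP : Set ℤ := {x : ℤ | |s| < x ∧ |bv α s x - r| ≤ c₀} with hTP
  set TN : Set ℤ := {x : ℤ | x < -|s| ∧ |bv α s x - r| ≤ c₀} with hTN
  have hunion : TA α c₀ s r ⊆ TP ∪ TN := by
    intro x hx
    rcases hx with ⟨h1x, h2x⟩
    rcases abs_cases x with ⟨he, _⟩ | ⟨he, _⟩
    · left; exact ⟨by omega, h2x⟩
    · right; exact ⟨by omega, h2x⟩
  have hP := ncard_of_pairwise TP (2 * c₀) (by linarith) (by
    rintro x ⟨hx1, hx2⟩ y ⟨hy1, hy2⟩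
    exact pairA h1 hc₀ s r x y hx1 hy1 hx2 hy2)
  have hN := ncard_of_pairwise TN (2 * c₀) (by linarith) (by
    rintro x ⟨hx1, hx2⟩ y ⟨hy1, hy2⟩
    have hx' : |(-s)| < -x := by rw [abs_neg]; omega
    have hy' : |(-s)| < -y := by rw [abs_neg]; omega
    have hbx : |bv α (-s) (-x) - r| ≤ c₀ := by rw [bv_neg]; exact hx2
    have hby : |bv α (-s) (-y) - r| ≤ c₀ := by rw [bv_neg]; exact hy2
    have := pairA h1 hc₀ (-s) r (-x) (-y) hx' hy' hbx hby
    have e : |(-x:ℤ) - (-y:ℤ)| = |x - y| := by rw [show (-x:ℤ) - (-y) = -(x-y) by ring, abs_neg]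
    push_cast at this ⊢
    rw [show -(x:ℝ) - -(y:ℝ) = -((x:ℝ) - y) by ring, abs_neg] at this
    exact this)
  have hfin : (TA α c₀ s r).Finite := (hP.1.union hN.1).subset hunion
  refine ⟨hfin, ?_⟩
  have step1 : (TA α c₀ s r).ncard ≤ (TP ∪ TN).ncard :=
    Set.ncard_le_ncard hunion (hP.1.union hN.1)
  have step2 : (TP ∪ TN).ncard ≤ TP.ncard + TN.ncard := Set.ncard_union_le TP TN
  have : ((TA α c₀ s r).ncard : ℝ) ≤ (TP.ncard : ℝ) + (TN.ncard : ℝ) := by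
    exact_mod_cast step1.trans step2
  calc ((TA α c₀ s r).ncard : ℝ) ≤ (TP.ncard : ℝ) + (TN.ncard : ℝ) := this
    _ ≤ (2 * (2*c₀) + 3) + (2 * (2*c₀) + 3) := by linarith [hP.2, hN.2]
    _ ≤ 14 * c₀ := by linarith

noncomputable def KB (α c₀ : ℝ) : ℝ := max 1 (Real.sqrt (8 * c₀ * 2 ^ ((2:ℝ) - α) / cA α))

lemma KB_one {α c₀ : ℝ} : 1 ≤ KB α c₀ := le_max_left _ _

lemma KB_sq {α c₀ : ℝ} (h1 : 1 < α) (h2 : α < 2) (hc₀ : 1 ≤ c₀) :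
    8 * c₀ * 2 ^ ((2:ℝ) - α) / cA α ≤ KB α c₀ * KB α c₀ := by
  have hX : 0 ≤ 8 * c₀ * 2 ^ ((2:ℝ) - α) / cA α := by
    have := cA_pos h1 h2
    have : (0:ℝ) < 2 ^ ((2:ℝ) - α) := Real.rpow_pos_of_pos two_pos _
    positivity
  have hle : Real.sqrt (8 * c₀ * 2 ^ ((2:ℝ) - α) / cA α) ≤ KB α c₀ := le_max_right _ _
  have h0 : 0 ≤ Real.sqrt (8 * c₀ * 2 ^ ((2:ℝ) - α) / cA α) := Real.sqrt_nonneg _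
  calc 8 * c₀ * 2 ^ ((2:ℝ) - α) / cA α
      = Real.sqrt (8 * c₀ * 2 ^ ((2:ℝ) - α) / cA α) * Real.sqrt (8 * c₀ * 2 ^ ((2:ℝ) - α) / cA α) := 
        (Real.mul_self_sqrt hX).symm
    _ ≤ KB α c₀ * KB α c₀ := mul_le_mul hle hle h0 (h0.trans hle)

/-- pairwise bound for one branch of the B-count -/
lemma pairB {α c₀ : ℝ} (h1 : 1 < α) (h2 : α < 2) (hc₀ : 1 ≤ c₀) {N₁ N₃ : ℝ}
    (hN₁ : 1 ≤ N₁) (hN₃ : 1 ≤ N₃) (s : ℤ) (r : ℝ) (x y : ℤ)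
    (hsx : s ≤ 2 * x) (hsy : s ≤ 2 * y)
    (hx1 : |(x:ℝ)| ≤ N₁) (hx3 : |(x:ℝ) - s| ≤ N₃) (hbx : |bv α s x - r| ≤ c₀)
    (hy1 : |(y:ℝ)| ≤ N₁) (hy3 : |(y:ℝ) - s| ≤ N₃) (hby : |bv α s y - r| ≤ c₀) :
    |(x:ℝ) - (y:ℝ)| ≤ KB α c₀ * (min N₁ N₃) ^ (1 - α/2) := by
  have hc0 : (0:ℝ) < c₀ := by linarith
  obtain ⟨M, hM⟩ : ∃ M : ℝ, M = min N₁ N₃ := ⟨_, rfl⟩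
  rw [← hM]
  have hM1 : 1 ≤ M := by rw [hM]; exact le_min hN₁ hN₃
  have hM0 : 0 < M := by linarith
  obtain ⟨ME, hME⟩ : ∃ t : ℝ, t = M ^ (1 - α/2) := ⟨_, rfl⟩
  rw [← hME]
  have hMe : (1:ℝ) ≤ ME := by
    rw [hME]
    calc (1:ℝ) = 1 ^ (1 - α/2) := (Real.one_rpow _).symm
      _ ≤ M ^ (1 - α/2) := Real.rpow_le_rpow zero_le_one hM1 (by linarith)
  have hcA := cA_pos h1 h2
  obtain ⟨A2, hA2⟩ : ∃ t : ℝ, t = (2:ℝ) ^ (α - 2) := ⟨_, rfl⟩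
  obtain ⟨MA, hMA⟩ : ∃ t : ℝ, t = M ^ (α - 2) := ⟨_, rfl⟩
  have hA2pos : (0:ℝ) < A2 := by rw [hA2]; exact Real.rpow_pos_of_pos two_pos _
  have hMApos : (0:ℝ) < MA := by rw [hMA]; exact Real.rpow_pos_of_pos hM0 _
  obtain ⟨μ, hμ⟩ : ∃ t : ℝ, t = cA α * A2 * MA := ⟨_, rfl⟩
  have hμpos : 0 < μ := by rw [hμ]; positivity
  have main : ∀ u v : ℤ, u ≤ v → s ≤ 2*u →
      |(u:ℝ)| ≤ N₁ → |(u:ℝ) - s| ≤ N₃ → |bv α s u - r| ≤ c₀ →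
      |(v:ℝ)| ≤ N₁ → |(v:ℝ) - s| ≤ N₃ → |bv α s v - r| ≤ c₀ →
      (v:ℝ) - u ≤ KB α c₀ * ME := by
    intro u v huv hsu hu1 hu3 hbu hv1 hv3 hbv
    have h0 : bv α s u ≤ bv α s (u + 1) := by
      unfold bv
      push_cast
      exact mono_h h1 (by exact_mod_cast hsu) (by linarith)
    have hd : ∀ i : ℤ, u < i → i < v →
        μ ≤ bv α s (i + 1) + bv α s (i - 1) - 2 * bv α s i := by
      intro i hui hiv
      have hiu : (u:ℝ) ≤ i := by exact_mod_cast hui.le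
      have hiv' : (i:ℝ) ≤ v := by exact_mod_cast hiv.le
      have hi1 : |(i:ℝ)| ≤ N₁ := by
        rw [abs_le] at *
        constructor <;> linarith [hu1.1, hv1.2]
      have hi3 : |(i:ℝ) - s| ≤ N₃ := by
        rw [abs_le] at *
        constructor <;> linarith [hu3.1, hv3.2]
      have s1 := secdiff h1 h2 (i:ℝ)
      have s2 := secdiff h1 h2 ((i:ℝ) - s)
      have t1 : (2*N₁) ^ (α-2) ≤ (1 + |(i:ℝ)|) ^ (α-2) :=
        Real.rpow_le_rpow_of_nonpos (by positivity) (by linarith) (by linarith)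
      have t2 : (2*N₃) ^ (α-2) ≤ (1 + |(i:ℝ) - s|) ^ (α-2) :=
        Real.rpow_le_rpow_of_nonpos (by positivity) (by linarith) (by linarith)
      have e1 : (2*N₁) ^ (α-2) = 2^(α-2) * N₁^(α-2) := Real.mul_rpow (by norm_num) (by linarith)
      have e2 : (2*N₃) ^ (α-2) = 2^(α-2) * N₃^(α-2) := Real.mul_rpow (by norm_num) (by linarith)
      have hbv1 : bv α s (i+1) = |(i:ℝ)+1|^α + |((i:ℝ) - s)+1|^α := by
        unfold bv; push_cast; ring_nf
      have hbv2 : bv α s (i-1) = |(i:ℝ)-1|^α + |((i:ℝ) - s)-1|^α := by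
        unfold bv; push_cast; ring_nf
      have hbv0 : bv α s i = |(i:ℝ)|^α + |(i:ℝ) - s|^α := rfl
      have hnn1 : 0 ≤ cA α * (1 + |(i:ℝ)|) ^ (α-2) := by positivity
      have hnn2 : 0 ≤ cA α * (1 + |(i:ℝ) - s|) ^ (α-2) := by positivity
      rw [hbv1, hbv2, hbv0]
      rcases le_total N₁ N₃ with hmin | hmin
      · have hMeq : M = N₁ := by rw [hM]; exact min_eq_left hmin
        have c1 : μ ≤ cA α * (1 + |(i:ℝ)|) ^ (α-2) := by
          rw [hμ, hA2, hMA, hMeq]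
          calc cA α * 2^(α-2) * N₁^(α-2) = cA α * ((2*N₁)^(α-2)) := by rw [e1]; ring
            _ ≤ cA α * (1 + |(i:ℝ)|) ^ (α-2) := mul_le_mul_of_nonneg_left t1 hcA.le
        linarith [s1, s2, c1, hnn2]
      · have hMeq : M = N₃ := by rw [hM]; exact min_eq_right hmin
        have c1 : μ ≤ cA α * (1 + |(i:ℝ) - s|) ^ (α-2) := by
          rw [hμ, hA2, hMA, hMeq]
          calc cA α * 2^(α-2) * N₃^(α-2) = cA α * ((2*N₃)^(α-2)) := by rw [e2]; ring
            _ ≤ cA α * (1 + |(i:ℝ) - s|) ^ (α-2) := mul_le_mul_of_nonneg_left t2 hcA.le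
        linarith [s1, s2, c1, hnn1]
    have grow := discrete_growth (bv α s) μ u v huv h0 hd
    have hband : bv α s v - bv α s u ≤ 2 * c₀ := by
      have b1 := (abs_le.mp hbu).1
      have b2 := (abs_le.mp hbv).2
      linarith
    obtain ⟨d, hd'⟩ : ∃ t : ℝ, t = (v:ℝ) - u := ⟨_, rfl⟩
    rw [← hd'] at grow ⊢
    have hd0 : 0 ≤ d := by
      rw [hd']
      have : (u:ℝ) ≤ v := by exact_mod_cast huv
      linarith
    rcases le_or_gt d 1 with hdle | hdgt
    · calc d ≤ 1 := hdle
        _ ≤ KB α c₀ * ME := by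
            have h := mul_le_mul (KB_one (α := α) (c₀ := c₀)) hMe zero_le_one
              (le_trans zero_le_one (KB_one (α := α) (c₀ := c₀)))
            linarith
    · have hd2 : (2:ℝ) ≤ d := by
        have huv1 : u + 1 < v := by
          by_contra hcc
          push_neg at hcc
          have : (v:ℝ) ≤ (u:ℝ) + 1 := by exact_mod_cast hcc
          rw [hd'] at hdgt; linarith
        have : u + 2 ≤ v := by omega
        have : ((u:ℝ) + 2) ≤ v := by exact_mod_cast this
        rw [hd']; linarith
      have key1 : μ * (d * d) ≤ 8 * c₀ := by
        have e : μ * d * (d/2) ≤ μ * d * (d - 1) :=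
          mul_le_mul_of_nonneg_left (by linarith) (mul_nonneg hμpos.le hd0)
        linarith [grow, hband, e]
      obtain ⟨B2, hB2⟩ : ∃ t : ℝ, t = (2:ℝ) ^ ((2:ℝ) - α) := ⟨_, rfl⟩
      obtain ⟨MB, hMB⟩ : ∃ t : ℝ, t = M ^ ((2:ℝ) - α) := ⟨_, rfl⟩
      have hsq : ME * ME = MB := by
        rw [hME, hMB, ← Real.rpow_add hM0]
        norm_num
        ring_nf
      have hinv : MA * MB = 1 := by
        rw [hMA, hMB, ← Real.rpow_add hM0]; norm_num
      have hinv2 : A2 * B2 = 1 := by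
        rw [hA2, hB2, ← Real.rpow_add two_pos]; norm_num
      have hB2pos : (0:ℝ) < B2 := by rw [hB2]; exact Real.rpow_pos_of_pos two_pos _
      have hKBsq : 8 * c₀ * B2 / cA α ≤ KB α c₀ * KB α c₀ := by
        rw [hB2]; exact KB_sq h1 h2 hc₀
      have hKB0 : (0:ℝ) < KB α c₀ := lt_of_lt_of_le one_pos KB_one
      have key2 : 8 * c₀ ≤ μ * ((KB α c₀ * ME) * (KB α c₀ * ME)) := by
        have expand : μ * ((KB α c₀ * ME) * (KB α c₀ * ME))
            = (cA α * A2) * (KB α c₀ * KB α c₀) * (MA * (ME * ME)) := by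
          rw [hμ]; ring
        rw [expand, hsq, hinv, mul_one]
        have hc2 : 8 * c₀ ≤ (cA α * A2) * (8 * c₀ * B2 / cA α) := by
          have : (cA α * A2) * (8 * c₀ * B2 / cA α) = 8 * c₀ * (A2 * B2) * (cA α / cA α) := by
            ring
          rw [this, hinv2, div_self hcA.ne']
          linarith
        calc (8:ℝ) * c₀ ≤ (cA α * A2) * (8 * c₀ * B2 / cA α) := hc2
          _ ≤ (cA α * A2) * (KB α c₀ * KB α c₀) := by
              apply mul_le_mul_of_nonneg_left hKBsq (by positivity)
      have hDpos : 0 < KB α c₀ * ME := by positivity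
      have hd2' : d * d ≤ (KB α c₀ * ME) * (KB α c₀ * ME) := by
        have h := key1.trans key2
        exact le_of_mul_le_mul_left h hμpos
      by_contra hcon
      push_neg at hcon
      have hlt : (KB α c₀ * ME) * (KB α c₀ * ME) < d * d :=
        mul_lt_mul'' hcon hcon hDpos.le hDpos.le
      linarith
  rcases le_total x y with hxy | hxy
  · rw [abs_sub_comm, abs_of_nonneg (by exact_mod_cast sub_nonneg.mpr hxy)]
    exact main x y hxy hsx hx1 hx3 hbx hy1 hy3 hby
  · rw [abs_of_nonneg (by exact_mod_cast sub_nonneg.mpr hxy)]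
    exact main y x hxy hsy hy1 hy3 hby hx1 hx3 hbx

/-- the B-count set -/
def TBset (α c₀ N₁ N₃ : ℝ) (s : ℤ) (r : ℝ) : Set ℤ :=
  {x : ℤ | |(x:ℝ)| ≤ N₁ ∧ |(x:ℝ) - s| ≤ N₃ ∧ |bv α s x - r| ≤ c₀}

lemma countB {α c₀ : ℝ} (h1 : 1 < α) (h2 : α < 2) (hc₀ : 1 ≤ c₀) {N₁ N₃ : ℝ}
    (hN₁ : 1 ≤ N₁) (hN₃ : 1 ≤ N₃) (s : ℤ) (r : ℝ) :
    (TBset α c₀ N₁ N₃ s r).Finite ∧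
      ((TBset α c₀ N₁ N₃ s r).ncard : ℝ) ≤ (4 * KB α c₀ + 6) * (min N₁ N₃) ^ (1 - α/2) := by
  have hM1 : (1:ℝ) ≤ min N₁ N₃ := le_min hN₁ hN₃
  have hMe : (1:ℝ) ≤ (min N₁ N₃) ^ (1 - α/2) := by
    calc (1:ℝ) = 1 ^ (1 - α/2) := (Real.one_rpow _).symm
      _ ≤ (min N₁ N₃) ^ (1 - α/2) := Real.rpow_le_rpow zero_le_one hM1 (by linarith)
  have hKB0 : (0:ℝ) < KB α c₀ := lt_of_lt_of_le one_pos KB_one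
  set D : ℝ := KB α c₀ * (min N₁ N₃) ^ (1 - α/2) with hD
  have hD0 : 0 ≤ D := by positivity
  set TP : Set ℤ := {x : ℤ | x ∈ TBset α c₀ N₁ N₃ s r ∧ s ≤ 2*x} with hTP
  set TN : Set ℤ := {x : ℤ | x ∈ TBset α c₀ N₁ N₃ s r ∧ 2*x ≤ s} with hTN
  have hunion : TBset α c₀ N₁ N₃ s r ⊆ TP ∪ TN := by
    intro x hx
    rcases le_total s (2*x) with h | h
    · exact Or.inl ⟨hx, h⟩
    · exact Or.inr ⟨hx, h⟩
  have hP := ncard_of_pairwise TP D hD0 (by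
    rintro x ⟨⟨hx1, hx3, hxb⟩, hxs⟩ y ⟨⟨hy1, hy3, hyb⟩, hys⟩
    exact pairB h1 h2 hc₀ hN₁ hN₃ s r x y hxs hys hx1 hx3 hxb hy1 hy3 hyb)
  have hN := ncard_of_pairwise TN D hD0 (by
    rintro x ⟨⟨hx1, hx3, hxb⟩, hxs⟩ y ⟨⟨hy1, hy3, hyb⟩, hys⟩
    have e1 : ∀ z : ℤ, ((s - z : ℤ) : ℝ) = (s:ℝ) - z := by intro z; push_cast; ring
    have m1 : |((s - x : ℤ) : ℝ)| ≤ N₃ := by rw [e1, abs_sub_comm]; exact hx3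
    have m3 : |((s - x : ℤ) : ℝ) - s| ≤ N₁ := by
      rw [e1, show (s:ℝ) - x - s = -(x:ℝ) by ring, abs_neg]; exact hx1
    have mb : |bv α s (s - x) - r| ≤ c₀ := by rw [bv_refl]; exact hxb
    have n1 : |((s - y : ℤ) : ℝ)| ≤ N₃ := by rw [e1, abs_sub_comm]; exact hy3
    have n3 : |((s - y : ℤ) : ℝ) - s| ≤ N₁ := by
      rw [e1, show (s:ℝ) - y - s = -(y:ℝ) by ring, abs_neg]; exact hy1
    have nb : |bv α s (s - y) - r| ≤ c₀ := by rw [bv_refl]; exact hyb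
    have key := pairB h1 h2 hc₀ hN₃ hN₁ s r (s - x) (s - y)
      (by omega) (by omega) m1 m3 mb n1 n3 nb
    rw [e1, e1] at key
    rw [show (s:ℝ) - x - ((s:ℝ) - y) = -((x:ℝ) - y) by ring, abs_neg, min_comm] at key
    exact key)
  have hfin : (TBset α c₀ N₁ N₃ s r).Finite := (hP.1.union hN.1).subset hunion
  refine ⟨hfin, ?_⟩
  have step1 : (TBset α c₀ N₁ N₃ s r).ncard ≤ (TP ∪ TN).ncard :=
    Set.ncard_le_ncard hunion (hP.1.union hN.1)
  have step2 : (TP ∪ TN).ncard ≤ TP.ncard + TN.ncard := Set.ncard_union_le TP TN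
  have hcast : ((TBset α c₀ N₁ N₃ s r).ncard : ℝ) ≤ (TP.ncard : ℝ) + (TN.ncard : ℝ) := by
    exact_mod_cast step1.trans step2
  have hfinal : (4 * D + 6 : ℝ) ≤ (4 * KB α c₀ + 6) * (min N₁ N₃) ^ (1 - α/2) := by
    have h6 : (6:ℝ) ≤ 6 * (min N₁ N₃) ^ (1 - α/2) := by linarith
    have expand : (4 * KB α c₀ + 6) * (min N₁ N₃) ^ (1 - α/2)
        = 4 * (KB α c₀ * (min N₁ N₃) ^ (1 - α/2)) + 6 * (min N₁ N₃) ^ (1 - α/2) := by ring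
    rw [hD, expand]
    linarith [h6]
  calc ((TBset α c₀ N₁ N₃ s r).ncard : ℝ) ≤ (TP.ncard : ℝ) + (TN.ncard : ℝ) := hcast
    _ ≤ (2 * D + 3) + (2 * D + 3) := by linarith [hP.2, hN.2]
    _ = 4 * D + 6 := by ring
    _ ≤ (4 * KB α c₀ + 6) * (min N₁ N₃) ^ (1 - α/2) := hfinal

end Aux



/-- The subset `S' = {(k,k₁,k₂,k₃) ∈ S : |k₁ + k₃| < |k₂|}`. -/
def Sset' (α c₀ m N N₁ N₂ N₃ : ℝ) : Set (ℤ × ℤ × ℤ × ℤ) :=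
  {p ∈ Sset α c₀ m N N₁ N₂ N₃ | |p.2.1 + p.2.2.2| < |p.2.2.1|}


section Aux2
/-- the `k₂`-fiber embeds in a `TA` set -/
lemma fiberA {α c₀ m N N₁ N₂ N₃ : ℝ} {p : ℤ × ℤ × ℤ × ℤ}
    (h : p ∈ Sset' α c₀ m N N₁ N₂ N₃) :
    p.2.2.1 ∈ TA α c₀ (p.2.1 + p.2.2.2) ((|(p.2.1 : ℝ)|) ^ α + (|(p.2.2.2 : ℝ)|) ^ α - m) := by
  obtain ⟨hS, hlt⟩ := h
  obtain ⟨hk, _, _, hres, _⟩ := hS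
  constructor
  · exact hlt
  · unfold bv
    have e0 : ((p.2.1 + p.2.2.2 : ℤ) : ℝ) = (p.2.1 : ℝ) + (p.2.2.2 : ℝ) := by push_cast; ring
    have e1 : |(p.2.2.1 : ℝ) - ((p.2.1 + p.2.2.2 : ℤ) : ℝ)| = |(p.1 : ℝ)| := by
      rw [e0, hk]
      push_cast
      rw [show (p.2.2.1 : ℝ) - ((p.2.1 : ℝ) + (p.2.2.2 : ℝ))
          = -((p.2.1 : ℝ) - (p.2.2.1:ℝ) + (p.2.2.2:ℝ)) by ring, abs_neg]
    rw [e1]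
    rw [show |(p.2.2.1:ℝ)| ^ α + |(p.1:ℝ)| ^ α - (|(p.2.1:ℝ)| ^ α + |(p.2.2.2:ℝ)| ^ α - m)
        = -(|(p.2.1:ℝ)| ^ α - |(p.2.2.1:ℝ)| ^ α + |(p.2.2.2:ℝ)| ^ α - |(p.1:ℝ)| ^ α - m)
        by ring, abs_neg]
    exact hres

/-- the `k₁`-fiber embeds in a `TBset` set -/
lemma fiberB {α c₀ m N N₁ N₂ N₃ : ℝ} {p : ℤ × ℤ × ℤ × ℤ}
    (h : p ∈ Sset' α c₀ m N N₁ N₂ N₃) :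
    p.2.1 ∈ TBset α c₀ N₁ N₃ (p.1 + p.2.2.1) ((|(p.1 : ℝ)|) ^ α + (|(p.2.2.1 : ℝ)|) ^ α + m) := by
  obtain ⟨hS, hlt⟩ := h
  obtain ⟨hk, _, _, hres, _, hb1, _, hb3⟩ := hS
  refine ⟨hb1, ?_, ?_⟩
  · have e1 : (p.2.1 : ℝ) - ((p.1 + p.2.2.1 : ℤ) : ℝ) = -(p.2.2.2 : ℝ) := by
      rw [hk]; push_cast; ring
    rw [e1, abs_neg]
    exact hb3
  · unfold bv
    have e1 : (p.2.1 : ℝ) - ((p.1 + p.2.2.1 : ℤ) : ℝ) = -(p.2.2.2 : ℝ) := by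
      rw [hk]; push_cast; ring
    rw [e1, abs_neg]
    rw [show |(p.2.1:ℝ)| ^ α + |(p.2.2.2:ℝ)| ^ α - (|(p.1:ℝ)| ^ α + |(p.2.2.1:ℝ)| ^ α + m)
        = |(p.2.1:ℝ)| ^ α - |(p.2.2.1:ℝ)| ^ α + |(p.2.2.2:ℝ)| ^ α - |(p.1:ℝ)| ^ α - m by ring]
    exact hres

/-- integer interval card bound -/
lemma cardIcc_le {Nr : ℝ} (hN : 1 ≤ Nr) :
    ((Finset.Icc (-⌈Nr⌉) ⌈Nr⌉).card : ℝ) ≤ 5 * Nr := by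
  rw [Int.card_Icc]
  have h0 : (0:ℤ) ≤ ⌈Nr⌉ := Int.ceil_nonneg (by linarith)
  have h1 : (((⌈Nr⌉ + 1 - -⌈Nr⌉).toNat : ℤ) : ℝ) = 2 * (⌈Nr⌉ : ℝ) + 1 := by
    rw [Int.toNat_of_nonneg (by omega)]; push_cast; ring
  have h2 : (⌈Nr⌉ : ℝ) ≤ Nr + 1 := by linarith [Int.ceil_lt_add_one Nr]
  calc (((⌈Nr⌉ + 1 - -⌈Nr⌉).toNat : ℕ) : ℝ) = (((⌈Nr⌉ + 1 - -⌈Nr⌉).toNat : ℤ) : ℝ) := by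
        push_cast; ring
    _ = 2 * (⌈Nr⌉ : ℝ) + 1 := h1
    _ ≤ 5 * Nr := by linarith

lemma mem_Icc_of_abs_le {k : ℤ} {Nr : ℝ} (h : (|k| : ℝ) ≤ Nr) :
    k ∈ Finset.Icc (-⌈Nr⌉) ⌈Nr⌉ := by
  have h1 : (|k| : ℝ) ≤ (⌈Nr⌉ : ℝ) := h.trans (Int.le_ceil Nr)
  have h2 : |k| ≤ ⌈Nr⌉ := by exact_mod_cast h1
  rw [Finset.mem_Icc]
  rcases abs_cases k with ⟨he, _⟩ | ⟨he, _⟩ <;> omega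


end Aux2

/-- Counting and operator norm bounds for the restricted tensor
`1_{|k₁+k₃| < |k₂|} · T^{b,m}`. -/
theorem restricted_tensor_bounds (α c₀ : ℝ) (hα : α ∈ Set.Ioo (1 : ℝ) 2) (hc₀ : 1 ≤ c₀) :
    ∃ C : ℝ, 0 < C ∧ ∀ m N N₁ N₂ N₃ : ℝ,
      1 ≤ N₁ → 1 ≤ N₂ → 1 ≤ N₃ → N₁ ≤ N → N₂ ≤ N → N₃ ≤ N →
      (((Sset' α c₀ m N N₁ N₂ N₃).ncard : ℝ) ≤ C * N₁ * N₃) ∧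
      (∀ a : ℤ × ℤ → ℂ, (Function.support a).Finite →
        ∑ᶠ q : ℤ × ℤ,
            ‖∑ᶠ p ∈ {p : ℤ × ℤ | (p.1, q.1, p.2, q.2) ∈ Sset' α c₀ m N N₁ N₂ N₃}, a p‖ ^ 2 ≤
          C * (min N₁ N₃) ^ (1 - α / 2) * ∑ᶠ p : ℤ × ℤ, ‖a p‖ ^ 2) ∧
      (∀ k₁ : ℤ,
        (({q : ℤ × ℤ × ℤ | (q.1, k₁, q.2.1, q.2.2) ∈ Sset' α c₀ m N N₁ N₂ N₃}.ncard : ℝ) ≤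
          C * N₃)) ∧
      (∀ k₃ : ℤ,
        (({q : ℤ × ℤ × ℤ | (q.1, q.2.1, q.2.2, k₃) ∈ Sset' α c₀ m N N₁ N₂ N₃}.ncard : ℝ) ≤
          C * N₁)) := by
  classical
  obtain ⟨hα1, hα2⟩ := hα
  have hc0 : (0:ℝ) < c₀ := by linarith
  have hKB1 : (1:ℝ) ≤ KB α c₀ := KB_one
  refine ⟨350 * c₀ * (1 + KB α c₀), by nlinarith, ?_⟩
  intro m N N₁ N₂ N₃ hN₁ hN₂ hN₃ h1N h2N h3N
  set C : ℝ := 350 * c₀ * (1 + KB α c₀) with hC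
  have hC70 : 70 * c₀ ≤ C := by nlinarith
  set S : Set (ℤ × ℤ × ℤ × ℤ) := Sset' α c₀ m N N₁ N₂ N₃ with hSdef
  -- membership info
  have hmem : ∀ p ∈ S, p.1 = p.2.1 - p.2.2.1 + p.2.2.2 ∧ (|(p.1 : ℝ)| ≤ N ∧
      |(p.2.1 : ℝ)| ≤ N₁ ∧ |(p.2.2.1 : ℝ)| ≤ N₂ ∧ |(p.2.2.2 : ℝ)| ≤ N₃) := by
    rintro p ⟨⟨h1, _, _, _, h5⟩, _⟩
    exact ⟨h1, h5⟩
  ---- Part (a)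
  have parta : S.Finite ∧ ((S.ncard : ℝ)) ≤ C * N₁ * N₃ := by
    set f : ℤ × ℤ × ℤ × ℤ → (ℤ × ℤ) × ℤ := fun p => ((p.2.1, p.2.2.2), p.2.2.1) with hf
    have hinj : Set.InjOn f S := by
      rintro p hp q hq hpq
      have hp1 := (hmem p hp).1
      have hq1 := (hmem q hq).1
      rw [hf] at hpq
      simp only [Prod.mk.injEq] at hpq
      obtain ⟨⟨e1, e3⟩, e2⟩ := hpq
      have e0 : p.1 = q.1 := by rw [hp1, hq1, e1, e2, e3]
      exact Prod.ext e0 (Prod.ext e1 (Prod.ext e2 e3))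
    have hbnd := ncard_fiber_bound (f '' S)
      ((Finset.Icc (-⌈N₁⌉) ⌈N₁⌉) ×ˢ (Finset.Icc (-⌈N₃⌉) ⌈N₃⌉)) (14 * c₀) (by linarith)
      (by
        rintro v ⟨p, hp, rfl⟩
        rw [Finset.mem_product]
        exact ⟨mem_Icc_of_abs_le (hmem p hp).2.2.1, mem_Icc_of_abs_le (hmem p hp).2.2.2.2⟩)
      (by
        rintro ⟨b1, b2⟩
        have hsub : {c | ((b1, b2), c) ∈ f '' S} ⊆
            TA α c₀ (b1 + b2) ((|(b1 : ℝ)|) ^ α + (|(b2 : ℝ)|) ^ α - m) := by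
          rintro c ⟨p, hp, hpe⟩
          rw [hf] at hpe
          simp only [Prod.mk.injEq] at hpe
          obtain ⟨⟨e1, e3⟩, e2⟩ := hpe
          have := fiberA (α := α) (c₀ := c₀) (m := m) (N := N) (N₁ := N₁) (N₂ := N₂)
            (N₃ := N₃) hp
          rw [e1, e2, e3] at this
          exact this
        have hTA := countA hα1 hc₀ (b1 + b2) ((|(b1 : ℝ)|) ^ α + (|(b2 : ℝ)|) ^ α - m)
        refine ⟨hTA.1.subset hsub, ?_⟩
        have := Set.ncard_le_ncard hsub hTA.1
        calc ({c | ((b1, b2), c) ∈ f '' S}.ncard : ℝ) ≤ _ := by exact_mod_cast this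
          _ ≤ 14 * c₀ := hTA.2)
    have hfin : S.Finite := Set.Finite.of_finite_image hbnd.1 hinj
    refine ⟨hfin, ?_⟩
    have hcard : (S.ncard : ℝ) = ((f '' S).ncard : ℝ) := by
      rw [Set.ncard_image_of_injOn hinj]
    have hBcard : ((((Finset.Icc (-⌈N₁⌉) ⌈N₁⌉) ×ˢ (Finset.Icc (-⌈N₃⌉) ⌈N₃⌉)).card : ℕ) : ℝ)
        ≤ 5 * N₁ * (5 * N₃) := by
      rw [Finset.card_product]
      push_cast
      exact mul_le_mul (cardIcc_le hN₁) (cardIcc_le hN₃) (by positivity) (by positivity)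
    calc (S.ncard : ℝ) = ((f '' S).ncard : ℝ) := hcard
      _ ≤ (((Finset.Icc (-⌈N₁⌉) ⌈N₁⌉) ×ˢ (Finset.Icc (-⌈N₃⌉) ⌈N₃⌉)).card : ℝ) * (14 * c₀) :=
          hbnd.2
      _ ≤ (5 * N₁ * (5 * N₃)) * (14 * c₀) := by
          apply mul_le_mul_of_nonneg_right hBcard (by linarith)
      _ = 350 * c₀ * N₁ * N₃ := by ring
      _ ≤ C * N₁ * N₃ := by
          have : 350 * c₀ ≤ C := by nlinarith
          have h3 : (0:ℝ) < N₁ * N₃ := by nlinarith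
          nlinarith [this, h3]
  ---- Part (c)
  have partc : ∀ k₁ : ℤ, (({q : ℤ × ℤ × ℤ | (q.1, k₁, q.2.1, q.2.2) ∈ S}.ncard : ℝ) ≤ C * N₃) := by
    intro k₁
    set Qc : Set (ℤ × ℤ × ℤ) := {q : ℤ × ℤ × ℤ | (q.1, k₁, q.2.1, q.2.2) ∈ S} with hQc
    set g : ℤ × ℤ × ℤ → ℤ × ℤ := fun q => (q.2.2, q.2.1) with hg
    have hinj : Set.InjOn g Qc := by
      rintro q hq q' hq' hqq
      have h1 := (hmem _ hq).1
      have h2 := (hmem _ hq').1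
      simp only [hg, Prod.mk.injEq] at hqq
      obtain ⟨e3, e2⟩ := hqq
      simp only at h1 h2
      have e0 : q.1 = q'.1 := by rw [h1, h2, e2, e3]
      exact Prod.ext e0 (Prod.ext e2 e3)
    have hbnd := ncard_fiber_bound (g '' Qc) (Finset.Icc (-⌈N₃⌉) ⌈N₃⌉) (14 * c₀) (by linarith)
      (by
        rintro v ⟨q, hq, rfl⟩
        exact mem_Icc_of_abs_le (hmem _ hq).2.2.2.2)
      (by
        intro b
        have hsub : {c | (b, c) ∈ g '' Qc} ⊆
            TA α c₀ (k₁ + b) ((|(k₁ : ℝ)|) ^ α + (|(b : ℝ)|) ^ α - m) := by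
          rintro c ⟨q, hq, hqe⟩
          simp only [hg, Prod.mk.injEq] at hqe
          obtain ⟨e3, e2⟩ := hqe
          have := fiberA (α := α) (c₀ := c₀) (m := m) (N := N) (N₁ := N₁) (N₂ := N₂)
            (N₃ := N₃) hq
          simp only at this
          rw [e2, e3] at this
          exact this
        have hTA := countA hα1 hc₀ (k₁ + b) ((|(k₁ : ℝ)|) ^ α + (|(b : ℝ)|) ^ α - m)
        refine ⟨hTA.1.subset hsub, ?_⟩
        have := Set.ncard_le_ncard hsub hTA.1
        calc ({c | (b, c) ∈ g '' Qc}.ncard : ℝ) ≤ _ := by exact_mod_cast this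
          _ ≤ 14 * c₀ := hTA.2)
    have hcard : (Qc.ncard : ℝ) = ((g '' Qc).ncard : ℝ) := by
      rw [Set.ncard_image_of_injOn hinj]
    calc (Qc.ncard : ℝ) = ((g '' Qc).ncard : ℝ) := hcard
      _ ≤ ((Finset.Icc (-⌈N₃⌉) ⌈N₃⌉).card : ℝ) * (14 * c₀) := hbnd.2
      _ ≤ (5 * N₃) * (14 * c₀) := by
          apply mul_le_mul_of_nonneg_right (cardIcc_le hN₃) (by linarith)
      _ = 70 * c₀ * N₃ := by ring
      _ ≤ C * N₃ := by nlinarith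
  ---- Part (d)
  have partd : ∀ k₃ : ℤ, (({q : ℤ × ℤ × ℤ | (q.1, q.2.1, q.2.2, k₃) ∈ S}.ncard : ℝ) ≤ C * N₁) := by
    intro k₃
    set Qd : Set (ℤ × ℤ × ℤ) := {q : ℤ × ℤ × ℤ | (q.1, q.2.1, q.2.2, k₃) ∈ S} with hQd
    set g : ℤ × ℤ × ℤ → ℤ × ℤ := fun q => (q.2.1, q.2.2) with hg
    have hinj : Set.InjOn g Qd := by
      rintro q hq q' hq' hqq
      have h1 := (hmem _ hq).1
      have h2 := (hmem _ hq').1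
      simp only [hg, Prod.mk.injEq] at hqq
      obtain ⟨e1, e2⟩ := hqq
      simp only at h1 h2
      have e0 : q.1 = q'.1 := by rw [h1, h2, e1, e2]
      exact Prod.ext e0 (Prod.ext e1 e2)
    have hbnd := ncard_fiber_bound (g '' Qd) (Finset.Icc (-⌈N₁⌉) ⌈N₁⌉) (14 * c₀) (by linarith)
      (by
        rintro v ⟨q, hq, rfl⟩
        exact mem_Icc_of_abs_le (hmem _ hq).2.2.1)
      (by
        intro b
        have hsub : {c | (b, c) ∈ g '' Qd} ⊆
            TA α c₀ (b + k₃) ((|(b : ℝ)|) ^ α + (|(k₃ : ℝ)|) ^ α - m) := by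
          rintro c ⟨q, hq, hqe⟩
          simp only [hg, Prod.mk.injEq] at hqe
          obtain ⟨e1, e2⟩ := hqe
          have := fiberA (α := α) (c₀ := c₀) (m := m) (N := N) (N₁ := N₁) (N₂ := N₂)
            (N₃ := N₃) hq
          simp only at this
          rw [e1, e2] at this
          exact this
        have hTA := countA hα1 hc₀ (b + k₃) ((|(b : ℝ)|) ^ α + (|(k₃ : ℝ)|) ^ α - m)
        refine ⟨hTA.1.subset hsub, ?_⟩
        have := Set.ncard_le_ncard hsub hTA.1
        calc ({c | (b, c) ∈ g '' Qd}.ncard : ℝ) ≤ _ := by exact_mod_cast this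
          _ ≤ 14 * c₀ := hTA.2)
    have hcard : (Qd.ncard : ℝ) = ((g '' Qd).ncard : ℝ) := by
      rw [Set.ncard_image_of_injOn hinj]
    calc (Qd.ncard : ℝ) = ((g '' Qd).ncard : ℝ) := hcard
      _ ≤ ((Finset.Icc (-⌈N₁⌉) ⌈N₁⌉).card : ℝ) * (14 * c₀) := hbnd.2
      _ ≤ (5 * N₁) * (14 * c₀) := by
          apply mul_le_mul_of_nonneg_right (cardIcc_le hN₁) (by linarith)
      _ = 70 * c₀ * N₁ := by ring
      _ ≤ C * N₁ := by nlinarith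
  refine ⟨parta.2, ?_, partc, partd⟩
  ---- Part (b)
  intro a ha
  have hSfin : S.Finite := parta.1
  set Me : ℝ := (min N₁ N₃) ^ (1 - α / 2) with hMe
  have hMe1 : (1:ℝ) ≤ Me := by
    rw [hMe]
    calc (1:ℝ) = 1 ^ (1 - α/2) := (Real.one_rpow _).symm
      _ ≤ (min N₁ N₃) ^ (1 - α/2) :=
          Real.rpow_le_rpow zero_le_one (le_min hN₁ hN₃) (by linarith)
  set F : ℤ × ℤ → Set (ℤ × ℤ) := fun q => {p : ℤ × ℤ | (p.1, q.1, p.2, q.2) ∈ S} with hF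
  have hFfin : ∀ q, (F q).Finite := by
    intro q
    have : F q = (fun p : ℤ × ℤ => (p.1, q.1, p.2, q.2)) ⁻¹' S := rfl
    rw [this]
    apply Set.Finite.preimage _ hSfin
    intro p _ p' _ he
    simp only [Prod.mk.injEq] at he
    exact Prod.ext he.1 he.2.2.1
  have hFcard : ∀ q, ((F q).ncard : ℝ) ≤ 14 * c₀ := by
    intro q
    have hinj : Set.InjOn Prod.snd (F q) := by
      rintro p hp p' hp' he
      have h1 := (hmem _ hp).1
      have h2 := (hmem _ hp').1
      simp only at h1 h2
      exact Prod.ext (by rw [h1, h2, he]) he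
    have hsub : Prod.snd '' (F q) ⊆
        TA α c₀ (q.1 + q.2) ((|(q.1 : ℝ)|) ^ α + (|(q.2 : ℝ)|) ^ α - m) := by
      rintro c ⟨p, hp, rfl⟩
      simp only [hF, Set.mem_setOf_eq, hSdef] at hp
      exact fiberA (p := (p.1, q.1, p.2, q.2)) hp
    have hTA := countA hα1 hc₀ (q.1 + q.2) ((|(q.1 : ℝ)|) ^ α + (|(q.2 : ℝ)|) ^ α - m)
    have h1 : (F q).ncard = (Prod.snd '' (F q)).ncard := (Set.ncard_image_of_injOn hinj).symm
    have h2 := Set.ncard_le_ncard hsub hTA.1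
    calc ((F q).ncard : ℝ) = ((Prod.snd '' (F q)).ncard : ℝ) := by exact_mod_cast h1
      _ ≤ ((TA α c₀ (q.1 + q.2) ((|(q.1 : ℝ)|) ^ α + (|(q.2 : ℝ)|) ^ α - m)).ncard : ℝ) := by
          exact_mod_cast h2
      _ ≤ 14 * c₀ := hTA.2
  set G : ℤ × ℤ → Set (ℤ × ℤ) := fun p => {q : ℤ × ℤ | (p.1, q.1, p.2, q.2) ∈ S} with hG
  have hGfin : ∀ p, (G p).Finite := by
    intro p
    have : G p = (fun q : ℤ × ℤ => (p.1, q.1, p.2, q.2)) ⁻¹' S := rfl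
    rw [this]
    apply Set.Finite.preimage _ hSfin
    intro q _ q' _ he
    simp only [Prod.mk.injEq] at he
    exact Prod.ext he.2.1 he.2.2.2
  have hGcard : ∀ p, ((G p).ncard : ℝ) ≤ (4 * KB α c₀ + 6) * Me := by
    intro p
    have hinj : Set.InjOn Prod.fst (G p) := by
      rintro q hq q' hq' he
      have h1 := (hmem _ hq).1
      have h2 := (hmem _ hq').1
      simp only at h1 h2
      have : q.2 = q'.2 := by omega
      exact Prod.ext he this
    have hsub : Prod.fst '' (G p) ⊆
        TBset α c₀ N₁ N₃ (p.1 + p.2) ((|(p.1 : ℝ)|) ^ α + (|(p.2 : ℝ)|) ^ α + m) := by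
      rintro c ⟨q, hq, rfl⟩
      simp only [hG, Set.mem_setOf_eq, hSdef] at hq
      exact fiberB (p := (p.1, q.1, p.2, q.2)) hq
    have hTB := countB hα1 hα2 hc₀ hN₁ hN₃ (p.1 + p.2)
      ((|(p.1 : ℝ)|) ^ α + (|(p.2 : ℝ)|) ^ α + m)
    have h1 : (G p).ncard = (Prod.fst '' (G p)).ncard := (Set.ncard_image_of_injOn hinj).symm
    have h2 := Set.ncard_le_ncard hsub hTB.1
    calc ((G p).ncard : ℝ) = ((Prod.fst '' (G p)).ncard : ℝ) := by exact_mod_cast h1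
      _ ≤ ((TBset α c₀ N₁ N₃ (p.1 + p.2)
            ((|(p.1 : ℝ)|) ^ α + (|(p.2 : ℝ)|) ^ α + m)).ncard : ℝ) := by exact_mod_cast h2
      _ ≤ (4 * KB α c₀ + 6) * Me := hTB.2
  -- finset setup
  set P : Finset (ℤ × ℤ) := ha.toFinset with hP
  set Q : Finset (ℤ × ℤ) := (hSfin.image (fun p => (p.2.1, p.2.2.2))).toFinset with hQ
  set Fq : (ℤ × ℤ) → Finset (ℤ × ℤ) := fun q => (hFfin q).toFinset with hFq
  -- outer finsum reduction
  have houter : ∑ᶠ q : ℤ × ℤ, ‖∑ᶠ p ∈ F q, a p‖ ^ 2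
      = ∑ q ∈ Q, ‖∑ᶠ p ∈ F q, a p‖ ^ 2 := by
    apply finsum_eq_sum_of_support_subset
    intro q hq
    rw [Function.mem_support] at hq
    have hne : F q ≠ ∅ := by
      intro he
      apply hq
      rw [he]
      simp [finsum_mem_empty]
    obtain ⟨p, hp⟩ := Set.nonempty_iff_ne_empty.mpr hne
    have : (q.1, q.2) ∈ (fun p : ℤ × ℤ × ℤ × ℤ => (p.2.1, p.2.2.2)) '' S :=
      ⟨(p.1, q.1, p.2, q.2), hp, rfl⟩
    simp only [hQ, Finset.coe_sort_coe, Set.Finite.coe_toFinset, Set.Finite.mem_toFinset]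
    simpa using this
  have hinner : ∀ q, ∑ᶠ p ∈ F q, a p = ∑ p ∈ Fq q, a p := by
    intro q
    exact finsum_mem_eq_finite_toFinset_sum a (hFfin q)
  -- Cauchy-Schwarz per q
  have hCS : ∀ q, ‖∑ p ∈ Fq q, a p‖ ^ 2 ≤ (14 * c₀) * ∑ p ∈ Fq q, ‖a p‖ ^ 2 := by
    intro q
    have n1 : ‖∑ p ∈ Fq q, a p‖ ≤ ∑ p ∈ Fq q, ‖a p‖ := norm_sum_le _ _
    have n2 : ‖∑ p ∈ Fq q, a p‖ ^ 2 ≤ (∑ p ∈ Fq q, ‖a p‖) ^ 2 :=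
      pow_le_pow_left₀ (norm_nonneg _) n1 2
    have n3 : (∑ p ∈ Fq q, ‖a p‖) ^ 2 ≤ ((Fq q).card : ℝ) * ∑ p ∈ Fq q, ‖a p‖ ^ 2 :=
      sq_sum_le_card_mul_sum_sq
    have n4 : ((Fq q).card : ℝ) ≤ 14 * c₀ := by
      have : (F q).ncard = (Fq q).card := Set.ncard_eq_toFinset_card _ (hFfin q)
      rw [← this]
      exact hFcard q
    have n5 : (0:ℝ) ≤ ∑ p ∈ Fq q, ‖a p‖ ^ 2 :=
      Finset.sum_nonneg fun p _ => by positivity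
    calc ‖∑ p ∈ Fq q, a p‖ ^ 2 ≤ (∑ p ∈ Fq q, ‖a p‖) ^ 2 := n2
      _ ≤ ((Fq q).card : ℝ) * ∑ p ∈ Fq q, ‖a p‖ ^ 2 := n3
      _ ≤ (14 * c₀) * ∑ p ∈ Fq q, ‖a p‖ ^ 2 := mul_le_mul_of_nonneg_right n4 n5
  -- restrict inner sums to the support
  have hrestrict : ∀ q, ∑ p ∈ Fq q, ‖a p‖ ^ 2 = ∑ p ∈ P, if p ∈ Fq q then ‖a p‖ ^ 2 else 0 := by
    intro q
    rw [← Finset.sum_filter]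
    apply (Finset.sum_subset ?_ ?_).symm
    · intro p hp
      exact (Finset.mem_filter.mp hp).2
    · intro p hp hnp
      have : p ∉ P := by
        intro hPp
        exact hnp (Finset.mem_filter.mpr ⟨hPp, hp⟩)
      have : a p = 0 := by
        by_contra hne
        exact this (by simp [hP, Set.Finite.mem_toFinset, Function.mem_support, hne])
      rw [this]
      simp
  -- double counting
  have hdouble : ∑ q ∈ Q, ∑ p ∈ P, (if p ∈ Fq q then ‖a p‖ ^ 2 else 0)
      ≤ ((4 * KB α c₀ + 6) * Me) * ∑ p ∈ P, ‖a p‖ ^ 2 := by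
    rw [Finset.sum_comm]
    have hterm : ∀ p ∈ P, ∑ q ∈ Q, (if p ∈ Fq q then ‖a p‖ ^ 2 else 0)
        ≤ ((4 * KB α c₀ + 6) * Me) * ‖a p‖ ^ 2 := by
      intro p _
      rw [← Finset.sum_filter]
      rw [Finset.sum_const]
      have hcard : (((Q.filter (fun q => p ∈ Fq q)).card : ℕ) : ℝ) ≤ (4 * KB α c₀ + 6) * Me := by
        have hsub2 : Q.filter (fun q => p ∈ Fq q) ⊆ (hGfin p).toFinset := by
          intro q hq2
          have := (Finset.mem_filter.mp hq2).2
          rw [Set.Finite.mem_toFinset]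
          simp only [hFq, Set.Finite.mem_toFinset] at this
          exact this
        have := Finset.card_le_card hsub2
        have hc2 : ((hGfin p).toFinset.card : ℝ) ≤ (4 * KB α c₀ + 6) * Me := by
          rw [← Set.ncard_eq_toFinset_card _ (hGfin p)]
          exact hGcard p
        calc (((Q.filter (fun q => p ∈ Fq q)).card : ℕ) : ℝ)
            ≤ ((hGfin p).toFinset.card : ℝ) := by exact_mod_cast this
          _ ≤ (4 * KB α c₀ + 6) * Me := hc2
      have hnn : (0:ℝ) ≤ ‖a p‖ ^ 2 := by positivity
      rw [nsmul_eq_mul]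
      exact mul_le_mul_of_nonneg_right hcard hnn
    calc ∑ p ∈ P, ∑ q ∈ Q, (if p ∈ Fq q then ‖a p‖ ^ 2 else 0)
        ≤ ∑ p ∈ P, ((4 * KB α c₀ + 6) * Me) * ‖a p‖ ^ 2 := Finset.sum_le_sum hterm
      _ = ((4 * KB α c₀ + 6) * Me) * ∑ p ∈ P, ‖a p‖ ^ 2 := by
          rw [Finset.mul_sum]
  -- RHS finsum
  have hRHS : ∑ᶠ p : ℤ × ℤ, ‖a p‖ ^ 2 = ∑ p ∈ P, ‖a p‖ ^ 2 := by
    apply finsum_eq_sum_of_support_subset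
    intro p hp
    rw [Function.mem_support] at hp
    have : a p ≠ 0 := by
      intro h0
      apply hp
      rw [h0]
      simp
    simp [hP, Set.Finite.mem_toFinset, Function.mem_support, this]
  have hSnn : (0:ℝ) ≤ ∑ p ∈ P, ‖a p‖ ^ 2 := Finset.sum_nonneg fun p _ => by positivity
  have hCfin : (14 * c₀) * ((4 * KB α c₀ + 6) * Me) ≤ C * Me := by
    have h1 : 14 * c₀ * (4 * KB α c₀ + 6) ≤ C := by
      rw [hC]
      nlinarith [hKB1, hc0]
    nlinarith [hMe1, h1, hc0, hKB1]
  calc ∑ᶠ q : ℤ × ℤ, ‖∑ᶠ p ∈ F q, a p‖ ^ 2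
      = ∑ q ∈ Q, ‖∑ᶠ p ∈ F q, a p‖ ^ 2 := houter
    _ = ∑ q ∈ Q, ‖∑ p ∈ Fq q, a p‖ ^ 2 := by
        apply Finset.sum_congr rfl
        intro q _
        rw [hinner q]
    _ ≤ ∑ q ∈ Q, (14 * c₀) * ∑ p ∈ Fq q, ‖a p‖ ^ 2 :=
        Finset.sum_le_sum fun q _ => hCS q
    _ = (14 * c₀) * ∑ q ∈ Q, ∑ p ∈ Fq q, ‖a p‖ ^ 2 := by rw [Finset.mul_sum]
    _ = (14 * c₀) * ∑ q ∈ Q, ∑ p ∈ P, (if p ∈ Fq q then ‖a p‖ ^ 2 else 0) := by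
        congr 1
        exact Finset.sum_congr rfl fun q _ => hrestrict q
    _ ≤ (14 * c₀) * (((4 * KB α c₀ + 6) * Me) * ∑ p ∈ P, ‖a p‖ ^ 2) := by
        apply mul_le_mul_of_nonneg_left hdouble (by linarith)
    _ = ((14 * c₀) * ((4 * KB α c₀ + 6) * Me)) * ∑ p ∈ P, ‖a p‖ ^ 2 := by ring
    _ ≤ (C * Me) * ∑ p ∈ P, ‖a p‖ ^ 2 := mul_le_mul_of_nonneg_right hCfin hSnn
    _ = C * Me * ∑ᶠ p : ℤ × ℤ, ‖a p‖ ^ 2 := by rw [hRHS]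
end

section
/- Let h⁽¹⁾, h⁽²⁾ : ℤ × ℤ → ℂ be finitely supported, and let C₁, C₂ ≥ 0 be such that for every square-summable a : ℤ → ℂ one has ( Σ_{k₁} | Σ_{k'} h⁽¹⁾(k₁,k')·a(k') |² )^{1/2} ≤ C₁·(Σ_{k'}|a(k')|²)^{1/2} and ( Σ_{k₂} | Σ_{k'} h⁽²⁾(k₂,k')·a(k') |² )^{1/2} ≤ C₂·(Σ_{k'}|a(k')|²)^{1/2}. Then for every square-summable a : ℤ → ℂ, ( Σ_{(k₁,k₂)∈ℤ²} | Σ_{k'} h⁽¹⁾(k₁,k')·h⁽²⁾(k₂,k')·a(k') |² )^{1/2} ≤ C₁·C₂·(Σ_{k'}|a(k')|²)^{1/2}. -/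
/-- From `√x ≤ c·√y` with everything nonneg, conclude `x ≤ c²·y`. -/
private lemma sq_of_sqrt_le {x c y : ℝ} (hx : 0 ≤ x) (hy : 0 ≤ y)
    (h : Real.sqrt x ≤ c * Real.sqrt y) : x ≤ c ^ 2 * y := by
  have h1 : Real.sqrt x ^ 2 ≤ (c * Real.sqrt y) ^ 2 :=
    pow_le_pow_left₀ (Real.sqrt_nonneg x) h 2
  rwa [Real.sq_sqrt hx, mul_pow, Real.sq_sqrt hy] at h1

set_option maxHeartbeats 1000000 in
/-- Semi-product of two kernels sharing the column index: the operator
`k' ↦ (k₁,k₂)` with kernel `h⁽¹⁾(k₁,k')·h⁽²⁾(k₂,k')` has `ℓ² → ℓ²` norm at most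
the product of the `ℓ² → ℓ²` norms of `h⁽¹⁾` and `h⁽²⁾`. -/
theorem semiproduct_shared_column (h₁ h₂ : ℤ × ℤ → ℂ)
    (hfin₁ : (Function.support h₁).Finite) (hfin₂ : (Function.support h₂).Finite)
    (C₁ C₂ : ℝ) (hC₁ : 0 ≤ C₁) (hC₂ : 0 ≤ C₂)
    (hop₁ : ∀ a : ℤ → ℂ, Summable (fun k : ℤ => ‖a k‖ ^ 2) →
      Real.sqrt (∑' k₁ : ℤ, ‖∑' k' : ℤ, h₁ (k₁, k') * a k'‖ ^ 2) ≤
        C₁ * Real.sqrt (∑' k' : ℤ, ‖a k'‖ ^ 2))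
    (hop₂ : ∀ a : ℤ → ℂ, Summable (fun k : ℤ => ‖a k‖ ^ 2) →
      Real.sqrt (∑' k₂ : ℤ, ‖∑' k' : ℤ, h₂ (k₂, k') * a k'‖ ^ 2) ≤
        C₂ * Real.sqrt (∑' k' : ℤ, ‖a k'‖ ^ 2)) :
    ∀ a : ℤ → ℂ, Summable (fun k : ℤ => ‖a k‖ ^ 2) →
      Real.sqrt (∑' p : ℤ × ℤ, ‖∑' k' : ℤ, h₁ (p.1, k') * h₂ (p.2, k') * a k'‖ ^ 2) ≤
        C₁ * C₂ * Real.sqrt (∑' k' : ℤ, ‖a k'‖ ^ 2) := by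
  intro a ha
  classical
  set S₁ : Finset ℤ := hfin₁.toFinset.image Prod.fst with hS₁def
  set S₂ : Finset ℤ := hfin₂.toFinset.image Prod.fst with hS₂def
  set T : Finset ℤ := hfin₂.toFinset.image Prod.snd with hTdef
  -- vanishing lemmas
  have hz₁ : ∀ k₁ ∉ S₁, ∀ k', h₁ (k₁, k') = 0 := by
    intro k₁ hk₁ k'
    by_contra hne
    exact hk₁ (Finset.mem_image.2 ⟨(k₁, k'), hfin₁.mem_toFinset.2 hne, rfl⟩)
  have hz₂ : ∀ k₂ ∉ S₂, ∀ k', h₂ (k₂, k') = 0 := by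
    intro k₂ hk₂ k'
    by_contra hne
    exact hk₂ (Finset.mem_image.2 ⟨(k₂, k'), hfin₂.mem_toFinset.2 hne, rfl⟩)
  have hzT : ∀ k' ∉ T, ∀ k₂, h₂ (k₂, k') = 0 := by
    intro k' hk' k₂
    by_contra hne
    exact hk' (Finset.mem_image.2 ⟨(k₂, k'), hfin₂.mem_toFinset.2 hne, rfl⟩)
  -- Step A: column bound for h₂ via delta functions
  have hcol : ∀ k' : ℤ, (∑' k₂ : ℤ, ‖h₂ (k₂, k')‖ ^ 2) ≤ C₂ ^ 2 := by
    intro k'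
    set e : ℤ → ℂ := fun j => if j = k' then 1 else 0 with hedef
    have he_sum : Summable (fun k : ℤ => ‖e k‖ ^ 2) := by
      apply summable_of_ne_finset_zero (s := {k'})
      intro b hb
      simp only [hedef, Finset.mem_singleton] at hb ⊢
      simp [hb]
    have he_norm : (∑' k : ℤ, ‖e k‖ ^ 2) = 1 := by
      rw [tsum_eq_single k' (by intro b hb; simp [hedef, hb])]
      simp [hedef]
    have hrow : ∀ k₂ : ℤ, (∑' k'' : ℤ, h₂ (k₂, k'') * e k'') = h₂ (k₂, k') := by
      intro k₂
      rw [tsum_eq_single k' (by intro b hb; simp [hedef, hb])]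
      simp [hedef]
    have := hop₂ e he_sum
    rw [he_norm, Real.sqrt_one, mul_one] at this
    have h2 : Real.sqrt (∑' k₂ : ℤ, ‖h₂ (k₂, k')‖ ^ 2) ≤ C₂ := by
      have heq : (∑' k₂ : ℤ, ‖h₂ (k₂, k')‖ ^ 2)
          = ∑' k₂ : ℤ, ‖∑' k'' : ℤ, h₂ (k₂, k'') * e k''‖ ^ 2 :=
        tsum_congr fun k₂ => by rw [hrow]
      rw [heq]; exact this
    have hx : 0 ≤ ∑' k₂ : ℤ, ‖h₂ (k₂, k')‖ ^ 2 :=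
      tsum_nonneg fun _ => by positivity
    have := sq_of_sqrt_le hx zero_le_one
      (by simpa using h2)
    simpa using this
  -- the summand of the double sum
  set g : ℤ × ℤ → ℝ := fun p => ‖∑' k' : ℤ, h₁ (p.1, k') * h₂ (p.2, k') * a k'‖ ^ 2
    with hgdef
  have hg_nonneg : ∀ p, 0 ≤ g p := fun p => by positivity
  have hg_zero : ∀ p : ℤ × ℤ, p ∉ S₁ ×ˢ S₂ → g p = 0 := by
    intro p hp
    rw [Finset.mem_product] at hp
    push_neg at hp
    by_cases h1 : p.1 ∈ S₁
    · have h2 := hp h1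
      simp only [hgdef]
      rw [tsum_congr fun k' => by rw [hz₂ p.2 h2 k', mul_zero, zero_mul] ;]
      simp
    · simp only [hgdef]
      rw [tsum_congr fun k' => by rw [hz₁ p.1 h1 k', zero_mul, zero_mul] ;]
      simp
  -- Step B: row bound for fixed k₂
  have hrowB : ∀ k₂ : ℤ, (∑' k₁ : ℤ, g (k₁, k₂)) ≤
      C₁ ^ 2 * ∑' k' : ℤ, ‖h₂ (k₂, k') * a k'‖ ^ 2 := by
    intro k₂
    set b : ℤ → ℂ := fun k' => h₂ (k₂, k') * a k' with hbdef
    have hb_sum : Summable (fun k' : ℤ => ‖b k'‖ ^ 2) := by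
      apply summable_of_ne_finset_zero (s := T)
      intro k' hk'
      simp [hbdef, hzT k' hk' k₂]
    have key := hop₁ b hb_sum
    have heq : (∑' k₁ : ℤ, g (k₁, k₂)) = ∑' k₁ : ℤ, ‖∑' k' : ℤ, h₁ (k₁, k') * b k'‖ ^ 2 :=
      tsum_congr fun k₁ => by
        simp only [hgdef, hbdef]
        rw [tsum_congr fun k' => (mul_assoc (h₁ (k₁, k')) (h₂ (k₂, k')) (a k'))]
    have hx : 0 ≤ ∑' k₁ : ℤ, g (k₁, k₂) := tsum_nonneg fun _ => hg_nonneg _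
    exact sq_of_sqrt_le (c := C₁) (y := ∑' k' : ℤ, ‖b k'‖ ^ 2) hx
      (tsum_nonneg fun _ => by positivity) (by rw [heq]; exact key)
  -- summability of g restricted to rows / the whole plane
  have hgrow_sum : ∀ k₂ : ℤ, Summable (fun k₁ => g (k₁, k₂)) := by
    intro k₂
    apply summable_of_ne_finset_zero (s := S₁)
    intro k₁ hk₁
    exact hg_zero (k₁, k₂) (by simp [Finset.mem_product, hk₁])
  -- Step D: reorganize the double sum
  have hDsum : (∑' p : ℤ × ℤ, g p) = ∑ k₂ ∈ S₂, ∑' k₁ : ℤ, g (k₁, k₂) := by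
    rw [tsum_eq_sum (s := S₁ ×ˢ S₂) hg_zero, Finset.sum_product_right]
    refine Finset.sum_congr rfl fun k₂ _ => ?_
    rw [tsum_eq_sum (s := S₁) (fun k₁ hk₁ =>
      hg_zero (k₁, k₂) (by simp [Finset.mem_product, hk₁]))]
  -- Step E: bound the resulting sum
  have hE : (∑ k₂ ∈ S₂, ∑' k' : ℤ, ‖h₂ (k₂, k') * a k'‖ ^ 2) ≤
      C₂ ^ 2 * ∑' k' : ℤ, ‖a k'‖ ^ 2 := by
    have hinner : ∀ k₂ : ℤ, (∑' k' : ℤ, ‖h₂ (k₂, k') * a k'‖ ^ 2)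
        = ∑ k' ∈ T, ‖h₂ (k₂, k')‖ ^ 2 * ‖a k'‖ ^ 2 := by
      intro k₂
      rw [tsum_eq_sum (s := T) (fun k' hk' => by simp [hzT k' hk' k₂])]
      exact Finset.sum_congr rfl fun k' _ => by rw [norm_mul, mul_pow]
    calc (∑ k₂ ∈ S₂, ∑' k' : ℤ, ‖h₂ (k₂, k') * a k'‖ ^ 2)
        = ∑ k' ∈ T, ∑ k₂ ∈ S₂, ‖h₂ (k₂, k')‖ ^ 2 * ‖a k'‖ ^ 2 := by
          rw [Finset.sum_congr rfl fun k₂ _ => hinner k₂, Finset.sum_comm]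
      _ ≤ ∑ k' ∈ T, C₂ ^ 2 * ‖a k'‖ ^ 2 := by
          refine Finset.sum_le_sum fun k' _ => ?_
          rw [← Finset.sum_mul]
          refine mul_le_mul_of_nonneg_right ?_ (by positivity)
          calc (∑ k₂ ∈ S₂, ‖h₂ (k₂, k')‖ ^ 2)
              = ∑' k₂ : ℤ, ‖h₂ (k₂, k')‖ ^ 2 := by
                rw [tsum_eq_sum (s := S₂) (fun k₂ hk₂ => by simp [hz₂ k₂ hk₂ k'])]
            _ ≤ C₂ ^ 2 := hcol k'
      _ = C₂ ^ 2 * ∑ k' ∈ T, ‖a k'‖ ^ 2 := by rw [Finset.mul_sum]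
      _ ≤ C₂ ^ 2 * ∑' k' : ℤ, ‖a k'‖ ^ 2 := by
          refine mul_le_mul_of_nonneg_left ?_ (by positivity)
          exact Summable.sum_le_tsum T (fun k' _ => by positivity) ha
  -- put everything together
  have hmain : (∑' p : ℤ × ℤ, g p) ≤ (C₁ * C₂) ^ 2 * ∑' k' : ℤ, ‖a k'‖ ^ 2 := by
    calc (∑' p : ℤ × ℤ, g p) = ∑ k₂ ∈ S₂, ∑' k₁ : ℤ, g (k₁, k₂) := hDsum
      _ ≤ ∑ k₂ ∈ S₂, C₁ ^ 2 * ∑' k' : ℤ, ‖h₂ (k₂, k') * a k'‖ ^ 2 :=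
          Finset.sum_le_sum fun k₂ _ => hrowB k₂
      _ = C₁ ^ 2 * ∑ k₂ ∈ S₂, ∑' k' : ℤ, ‖h₂ (k₂, k') * a k'‖ ^ 2 := by
          rw [Finset.mul_sum]
      _ ≤ C₁ ^ 2 * (C₂ ^ 2 * ∑' k' : ℤ, ‖a k'‖ ^ 2) :=
          mul_le_mul_of_nonneg_left hE (by positivity)
      _ = (C₁ * C₂) ^ 2 * ∑' k' : ℤ, ‖a k'‖ ^ 2 := by ring
  have hfinal : C₁ * C₂ * Real.sqrt (∑' k' : ℤ, ‖a k'‖ ^ 2)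
      = Real.sqrt ((C₁ * C₂) ^ 2 * ∑' k' : ℤ, ‖a k'‖ ^ 2) := by
    rw [Real.sqrt_mul (by positivity), Real.sqrt_sq (by positivity)]
  rw [hfinal]
  exact Real.sqrt_le_sqrt hmain
end

section
/- Let A₁ and A₂ be finite sets, let C = A₁ ∩ A₂ and A = (A₁ ∪ A₂) \ C. Let h⁽¹⁾ : (A₁ → ℤ) → ℂ and h⁽²⁾ : (A₂ → ℤ) → ℂ be finitely supported tensors, and define the semi-product H : (A → ℤ) → ℂ by H(κ) = Σ_{λ : C → ℤ} h⁽¹⁾(κ|_{A₁∩A} ⊔ λ) · h⁽²⁾(κ|_{A₂∩A} ⊔ λ), where κ|_{A_i∩A} ⊔ λ denotes the function on A_i equal to κ on A_i ∩ A and to λ on C. Then for every partition A = X ⊔ Y, writing X_i = X ∩ A_i and Y_i = Y ∩ A_i for i = 1,2, one has ‖H‖_{X→Y} ≤ ‖h⁽¹⁾‖_{(X₁∪C)→Y₁} · ‖h⁽²⁾‖_{X₂→(C∪Y₂)}. -/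
open Function

namespace SemiProd

variable {ι : Type*} [DecidableEq ι]

/-- Functions vanishing outside `T`. -/
def SS (T : Finset ι) : Set (ι → ℤ) := {f | ∀ x ∉ T, f x = 0}

/-- Restriction of a function to `T`. -/
def PP (T : Finset ι) (f : ι → ℤ) : ι → ℤ := fun x => if x ∈ T then f x else 0

theorem PP_mem (T : Finset ι) (f : ι → ℤ) : PP T f ∈ SS T := fun x hx => if_neg hx

theorem PP_eq_self {T : Finset ι} {f : ι → ℤ} (h : f ∈ SS T) : PP T f = f := by
  funext x
  by_cases hx : x ∈ T
  · simp [PP, hx]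
  · simp [PP, hx, h x hx]

theorem PP_add (T : Finset ι) (f g : ι → ℤ) : PP T (f + g) = PP T f + PP T g := by
  funext x
  by_cases hx : x ∈ T <;> simp [PP, hx]

theorem PP_eq_zero {T T' : Finset ι} (hd : Disjoint T T') {f : ι → ℤ} (h : f ∈ SS T') :
    PP T f = 0 := by
  funext x
  by_cases hx : x ∈ T
  · have : x ∉ T' := fun hx' => (Finset.disjoint_left.mp hd hx) hx'
    simp [PP, hx, h x this]
  · simp [PP, hx]

theorem SS_mono {T T' : Finset ι} (h : T ⊆ T') : SS T ⊆ SS T' :=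
  fun f hf x hx => hf x (fun hxT => hx (h hxT))

theorem add_mem_SS {T₁ T₂ : Finset ι} {f g : ι → ℤ} (hf : f ∈ SS T₁) (hg : g ∈ SS T₂) :
    f + g ∈ SS (T₁ ∪ T₂) := by
  intro x hx
  simp only [Finset.mem_union, not_or] at hx
  show f x + g x = 0
  rw [hf x hx.1, hg x hx.2, add_zero]

theorem PP_sum_eq {T₁ T₂ : Finset ι} (hd : Disjoint T₁ T₂) {f : ι → ℤ}
    (h : f ∈ SS (T₁ ∪ T₂)) : PP T₁ f + PP T₂ f = f := by
  funext x
  show PP T₁ f x + PP T₂ f x = f x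
  by_cases h1 : x ∈ T₁
  · have h2 : x ∉ T₂ := Finset.disjoint_left.mp hd h1
    simp [PP, h1, h2]
  · by_cases h2 : x ∈ T₂
    · simp [PP, h1, h2]
    · have : x ∉ T₁ ∪ T₂ := by simp [h1, h2]
      simp [PP, h1, h2, h x this]

theorem PP_add_left {T₁ T₂ : Finset ι} (hd : Disjoint T₁ T₂) {f g : ι → ℤ}
    (hf : f ∈ SS T₁) (hg : g ∈ SS T₂) : PP T₁ (f + g) = f := by
  rw [PP_add, PP_eq_self hf, PP_eq_zero hd hg, add_zero]

theorem PP_add_right {T₁ T₂ : Finset ι} (hd : Disjoint T₁ T₂) {f g : ι → ℤ}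
    (hf : f ∈ SS T₁) (hg : g ∈ SS T₂) : PP T₂ (f + g) = g := by
  rw [PP_add, PP_eq_self hg, PP_eq_zero hd.symm hf, zero_add]

/-- Support bound: one set version. -/
theorem supp_bound1 {s : Set (ι → ℤ)} {M : Type*} [Zero M] {F : (ι → ℤ) → M}
    {B : Set (ι → ℤ)} (hB : B.Finite) (h : ∀ f ∈ s, F f ≠ 0 → f ∈ B) :
    (s ∩ support F).Finite :=
  hB.subset (fun f hf => h f hf.1 hf.2)

/-- Support bound: two-piece version. -/
theorem supp_bound2 {T₁ T₂ : Finset ι} (hd : Disjoint T₁ T₂) {M : Type*} [Zero M]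
    {F : (ι → ℤ) → M} {B₁ B₂ : Set (ι → ℤ)} (hB₁ : B₁.Finite) (hB₂ : B₂.Finite)
    (h : ∀ f ∈ SS (T₁ ∪ T₂), F f ≠ 0 → PP T₁ f ∈ B₁ ∧ PP T₂ f ∈ B₂) :
    (SS (T₁ ∪ T₂) ∩ support F).Finite := by
  apply (Set.Finite.image2 (· + ·) hB₁ hB₂).subset
  rintro f ⟨hfs, hfsupp⟩
  obtain ⟨h1, h2⟩ := h f hfs hfsupp
  exact ⟨PP T₁ f, h1, PP T₂ f, h2, PP_sum_eq hd hfs⟩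

/-- Splitting a finsum over `SS (T₁ ∪ T₂)` into a double finsum. -/
theorem finsum_SS_union {M : Type*} [AddCommMonoid M] (T₁ T₂ : Finset ι)
    (hd : Disjoint T₁ T₂) (F : (ι → ℤ) → M)
    (hF : (SS (T₁ ∪ T₂) ∩ support F).Finite) :
    ∑ᶠ f ∈ SS (T₁ ∪ T₂), F f = ∑ᶠ f₁ ∈ SS T₁, ∑ᶠ f₂ ∈ SS T₂, F (f₁ + f₂) := by
  classical
  set K : Finset (ι → ℤ) := hF.toFinset with hK
  have hKmem : ∀ f, f ∈ K ↔ f ∈ SS (T₁ ∪ T₂) ∧ F f ≠ 0 := by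
    intro f; simp [hK, Set.Finite.mem_toFinset, support]
  set K₁ : Finset (ι → ℤ) := K.image (PP T₁) with hK₁
  set K₂ : Finset (ι → ℤ) := K.image (PP T₂) with hK₂
  have hK₁S : ∀ f ∈ K₁, f ∈ SS T₁ := by
    intro f hf; rw [hK₁, Finset.mem_image] at hf
    obtain ⟨g, _, rfl⟩ := hf; exact PP_mem _ _
  have hK₂S : ∀ f ∈ K₂, f ∈ SS T₂ := by
    intro f hf; rw [hK₂, Finset.mem_image] at hf
    obtain ⟨g, _, rfl⟩ := hf; exact PP_mem _ _
  -- inner sums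
  have inner : ∀ f₁ ∈ SS T₁,
      (∑ᶠ f₂ ∈ SS T₂, F (f₁ + f₂)) = ∑ f₂ ∈ K₂, F (f₁ + f₂) := by
    intro f₁ hf₁
    apply finsum_mem_eq_sum_of_inter_support_eq
    ext f₂
    constructor
    · rintro ⟨hf₂, hsupp⟩
      refine ⟨?_, hsupp⟩
      have hmem : f₁ + f₂ ∈ K := (hKmem _).mpr ⟨add_mem_SS hf₁ hf₂, hsupp⟩
      have : PP T₂ (f₁ + f₂) = f₂ := PP_add_right hd hf₁ hf₂
      exact Finset.mem_coe.mpr (Finset.mem_image.mpr ⟨f₁ + f₂, hmem, this⟩)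
    · rintro ⟨hf₂, hsupp⟩
      exact ⟨hK₂S _ hf₂, hsupp⟩
  rw [finsum_mem_congr rfl inner]
  have outer : (∑ᶠ f₁ ∈ SS T₁, ∑ f₂ ∈ K₂, F (f₁ + f₂))
      = ∑ f₁ ∈ K₁, ∑ f₂ ∈ K₂, F (f₁ + f₂) := by
    apply finsum_mem_eq_sum_of_inter_support_eq
    ext f₁
    constructor
    · rintro ⟨hf₁, hsupp⟩
      refine ⟨?_, hsupp⟩
      obtain ⟨f₂, hf₂K, hne⟩ := Finset.exists_ne_zero_of_sum_ne_zero hsupp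
      have hf₂ : f₂ ∈ SS T₂ := hK₂S _ hf₂K
      have hmem : f₁ + f₂ ∈ K := (hKmem _).mpr ⟨add_mem_SS hf₁ hf₂, hne⟩
      exact Finset.mem_coe.mpr (Finset.mem_image.mpr ⟨f₁ + f₂, hmem, PP_add_left hd hf₁ hf₂⟩)
    · rintro ⟨hf₁, hsupp⟩
      exact ⟨hK₁S _ hf₁, hsupp⟩
  rw [outer]
  -- now identify ∑ f ∈ K with the double finite sum
  rw [finsum_mem_eq_sum F hF]
  rw [← Finset.sum_product' (f := fun f₁ f₂ => F (f₁ + f₂))]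
  have hinj : ∀ p ∈ K₁ ×ˢ K₂, ∀ q ∈ K₁ ×ˢ K₂,
      p.1 + p.2 = q.1 + q.2 → p = q := by
    rintro ⟨p1, p2⟩ hp ⟨q1, q2⟩ hq hpq
    simp only [Finset.mem_product] at hp hq
    have hp1 : p1 ∈ SS T₁ := hK₁S _ hp.1
    have hp2 : p2 ∈ SS T₂ := hK₂S _ hp.2
    have hq1 : q1 ∈ SS T₁ := hK₁S _ hq.1
    have hq2 : q2 ∈ SS T₂ := hK₂S _ hq.2
    have e1 : p1 = q1 := by
      rw [← PP_add_left hd hp1 hp2, hpq, PP_add_left hd hq1 hq2]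
    have e2 : p2 = q2 := by
      rw [← PP_add_right hd hp1 hp2, hpq, PP_add_right hd hq1 hq2]
    exact Prod.ext e1 e2
  have himg : ∑ f ∈ (K₁ ×ˢ K₂).image (fun p => p.1 + p.2), F f
      = ∑ p ∈ K₁ ×ˢ K₂, F (p.1 + p.2) := Finset.sum_image hinj
  rw [← himg]
  apply Finset.sum_subset
  · intro f hf
    rw [hKmem f] at hf
    rw [Finset.mem_image]
    refine ⟨(PP T₁ f, PP T₂ f), ?_, PP_sum_eq hd hf.1⟩
    rw [Finset.mem_product]
    constructor
    · rw [hK₁, Finset.mem_image]; exact ⟨f, (hKmem f).mpr hf, rfl⟩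
    · rw [hK₂, Finset.mem_image]; exact ⟨f, (hKmem f).mpr hf, rfl⟩
  · intro f hf hfK
    by_contra hne
    apply hfK
    rw [Finset.mem_image] at hf
    obtain ⟨⟨p1, p2⟩, hp, rfl⟩ := hf
    simp only [Finset.mem_product] at hp
    exact (hKmem _).mpr ⟨add_mem_SS (hK₁S _ hp.1) (hK₂S _ hp.2), hne⟩


/-- Swapping two finsums over `SS`-sets with disjoint index supports. -/
theorem finsum_SS_swap {M : Type*} [AddCommMonoid M] (T₁ T₂ : Finset ι)
    (hd : Disjoint T₁ T₂) (F : (ι → ℤ) → (ι → ℤ) → M)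
    (hF : (SS (T₁ ∪ T₂) ∩ support (fun f => F (PP T₁ f) (PP T₂ f))).Finite) :
    ∑ᶠ a ∈ SS T₁, ∑ᶠ b ∈ SS T₂, F a b = ∑ᶠ b ∈ SS T₂, ∑ᶠ a ∈ SS T₁, F a b := by
  have hF' : (SS (T₂ ∪ T₁) ∩ support (fun f => F (PP T₁ f) (PP T₂ f))).Finite := by
    rwa [Finset.union_comm]
  have h1 := finsum_SS_union T₁ T₂ hd (fun f => F (PP T₁ f) (PP T₂ f)) hF
  have h2 := finsum_SS_union T₂ T₁ hd.symm (fun f => F (PP T₁ f) (PP T₂ f)) hF'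
  have e1 : (∑ᶠ f₁ ∈ SS T₁, ∑ᶠ f₂ ∈ SS T₂, F (PP T₁ (f₁ + f₂)) (PP T₂ (f₁ + f₂)))
      = ∑ᶠ a ∈ SS T₁, ∑ᶠ b ∈ SS T₂, F a b := by
    apply finsum_mem_congr rfl
    intro a ha
    apply finsum_mem_congr rfl
    intro b hb
    rw [PP_add_left hd ha hb, PP_add_right hd ha hb]
  have e2 : (∑ᶠ f₂ ∈ SS T₂, ∑ᶠ f₁ ∈ SS T₁, F (PP T₁ (f₂ + f₁)) (PP T₂ (f₂ + f₁)))
      = ∑ᶠ b ∈ SS T₂, ∑ᶠ a ∈ SS T₁, F a b := by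
    apply finsum_mem_congr rfl
    intro b hb
    apply finsum_mem_congr rfl
    intro a ha
    rw [PP_add_left hd.symm hb ha, PP_add_right hd.symm hb ha]
  rw [← e1, ← h1, ← e2, ← h2, Finset.union_comm]

/-- Pulling a constant out of a finsum over a set, on the left. -/
theorem finsum_mem_mul_left' {R : Type*} [NonUnitalNonAssocSemiring R] (c : R)
    {s : Set (ι → ℤ)} {F : (ι → ℤ) → R} (hF : (s ∩ support F).Finite) :
    ∑ᶠ f ∈ s, c * F f = c * ∑ᶠ f ∈ s, F f := by
  rw [finsum_mem_eq_sum F hF, Finset.mul_sum]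
  apply finsum_mem_eq_sum_of_inter_support_eq
  ext f
  simp only [Set.mem_inter_iff, Set.Finite.coe_toFinset, mem_support]
  constructor
  · rintro ⟨hs, hne⟩
    exact ⟨⟨hs, fun h0 => hne (by rw [h0, mul_zero])⟩, hne⟩
  · rintro ⟨⟨hs, _⟩, hne⟩
    exact ⟨hs, hne⟩

/-- Pulling a constant out of a finsum over a set, on the right. -/
theorem finsum_mem_mul_right' {R : Type*} [NonUnitalNonAssocSemiring R] (c : R)
    {s : Set (ι → ℤ)} {F : (ι → ℤ) → R} (hF : (s ∩ support F).Finite) :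
    ∑ᶠ f ∈ s, F f * c = (∑ᶠ f ∈ s, F f) * c := by
  rw [finsum_mem_eq_sum F hF, Finset.sum_mul]
  apply finsum_mem_eq_sum_of_inter_support_eq
  ext f
  simp only [Set.mem_inter_iff, Set.Finite.coe_toFinset, mem_support]
  constructor
  · rintro ⟨hs, hne⟩
    exact ⟨⟨hs, fun h0 => hne (by rw [h0, zero_mul])⟩, hne⟩
  · rintro ⟨⟨hs, _⟩, hne⟩
    exact ⟨hs, hne⟩

/-- Monotonicity of finsums over a common set, with a common finite carrier. -/
theorem finsum_mem_mono' {α : Type*} {s : Set α} {F G : α → ℝ} (B : Finset α)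
    (hBs : ↑B ⊆ s) (hFB : ∀ a ∈ s, F a ≠ 0 → a ∈ B) (hGB : ∀ a ∈ s, G a ≠ 0 → a ∈ B)
    (hle : ∀ a ∈ B, F a ≤ G a) : ∑ᶠ a ∈ s, F a ≤ ∑ᶠ a ∈ s, G a := by
  have e1 : ∑ᶠ a ∈ s, F a = ∑ a ∈ B, F a := by
    apply finsum_mem_eq_sum_of_inter_support_eq
    ext a
    exact ⟨fun ⟨hs, hne⟩ => ⟨hFB a hs hne, hne⟩, fun ⟨hB, hne⟩ => ⟨hBs hB, hne⟩⟩
  have e2 : ∑ᶠ a ∈ s, G a = ∑ a ∈ B, G a := by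
    apply finsum_mem_eq_sum_of_inter_support_eq
    ext a
    exact ⟨fun ⟨hs, hne⟩ => ⟨hGB a hs hne, hne⟩, fun ⟨hB, hne⟩ => ⟨hBs hB, hne⟩⟩
  rw [e1, e2]
  exact Finset.sum_le_sum hle

theorem finsum_mem_nonneg' {α : Type*} {s : Set α} {F : α → ℝ}
    (h : ∀ a ∈ s, 0 ≤ F a) : 0 ≤ ∑ᶠ a ∈ s, F a := by
  rw [finsum_mem_def]
  apply finsum_nonneg
  intro a
  by_cases ha : a ∈ s
  · rw [Set.indicator_of_mem ha]; exact h a ha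
  · rw [Set.indicator_of_notMem ha]

theorem exists_of_finsum_mem_ne_zero {α M : Type*} [AddCommMonoid M] {s : Set α}
    {F : α → M} (h : ∑ᶠ a ∈ s, F a ≠ 0) : ∃ a ∈ s, F a ≠ 0 := by
  by_contra hc
  push_neg at hc
  exact h (finsum_mem_eq_zero_of_forall_eq_zero hc)


noncomputable def wf (X₂ : Finset ι) (h₂ z : (ι → ℤ) → ℂ) (f₁ μ : ι → ℤ) : ℂ :=
  ∑ᶠ f₂ ∈ SS X₂, h₂ (f₂ + μ) * z (f₁ + f₂)

open Classical in
noncomputable def uf (X₁ C X₂ : Finset ι) (h₂ z : (ι → ℤ) → ℂ) (g₂ f' : ι → ℤ) : ℂ :=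
  if f' ∈ SS (X₁ ∪ C) then wf X₂ h₂ z (PP X₁ f') (PP C f' + g₂) else 0

theorem uf_eq_zero {X₁ C X₂ : Finset ι} {h₂ z : (ι → ℤ) → ℂ} {g₂ f' : ι → ℤ}
    (h : f' ∉ SS (X₁ ∪ C)) : uf X₁ C X₂ h₂ z g₂ f' = 0 := by
  rw [uf, if_neg h]

theorem uf_eq {X₁ C X₂ : Finset ι} {h₂ z : (ι → ℤ) → ℂ} {g₂ f' : ι → ℤ}
    (h : f' ∈ SS (X₁ ∪ C)) :
    uf X₁ C X₂ h₂ z g₂ f' = wf X₂ h₂ z (PP X₁ f') (PP C f' + g₂) := by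
  rw [uf, if_pos h]

/-- If `uf ... g₂ f' ≠ 0` then we can extract a witness `f₂`. -/
theorem uf_ne_zero_elim {X₁ C X₂ : Finset ι} {h₂ z : (ι → ℤ) → ℂ} {g₂ f' : ι → ℤ}
    (h : uf X₁ C X₂ h₂ z g₂ f' ≠ 0) :
    f' ∈ SS (X₁ ∪ C) ∧ ∃ f₂ ∈ SS X₂,
      h₂ (f₂ + (PP C f' + g₂)) ≠ 0 ∧ z (PP X₁ f' + f₂) ≠ 0 := by
  by_cases hf' : f' ∈ SS (X₁ ∪ C)
  · refine ⟨hf', ?_⟩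
    rw [uf_eq hf'] at h
    obtain ⟨f₂, hf₂, hne⟩ := exists_of_finsum_mem_ne_zero h
    exact ⟨f₂, hf₂, fun h0 => hne (by rw [h0, zero_mul]),
      fun h0 => hne (by rw [h0, mul_zero])⟩
  · exact absurd (uf_eq_zero hf') h

theorem wf_ne_zero_elim {X₂ : Finset ι} {h₂ z : (ι → ℤ) → ℂ} {f₁ μ : ι → ℤ}
    (h : wf X₂ h₂ z f₁ μ ≠ 0) :
    ∃ f₂ ∈ SS X₂, h₂ (f₂ + μ) ≠ 0 ∧ z (f₁ + f₂) ≠ 0 := by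
  rw [wf] at h
  obtain ⟨f₂, hf₂, hne⟩ := exists_of_finsum_mem_ne_zero h
  exact ⟨f₂, hf₂, fun h0 => hne (by rw [h0, zero_mul]),
    fun h0 => hne (by rw [h0, mul_zero])⟩

end SemiProd

open SemiProd

/-- Semi-product tensor estimate (Deng–Nahmod–Yue). Tensors with index
sets `A₁`, `A₂` are represented as finitely supported functions `h : (ι → ℤ) → ℂ` that
vanish unless the argument vanishes outside `A₁` (resp. `A₂`); the gluing `k_B ⊔ k_D` of
configurations with disjoint supports is realized as pointwise addition. With
`C = A₁ ∩ A₂` and `A = (A₁ ∪ A₂) \ C` partitioned as `A = X ⊔ Y`, the semi-product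
`H(κ) = Σ_{λ on C} h⁽¹⁾(κ|_{A₁∩A} ⊔ λ) h⁽²⁾(κ|_{A₂∩A} ⊔ λ)` satisfies
`‖H‖_{X→Y} ≤ ‖h⁽¹⁾‖_{(X₁∪C)→Y₁} ‖h⁽²⁾‖_{X₂→(C∪Y₂)}`, stated here in applied
(operator-bound) form. -/
theorem semiproduct_tensor_estimate {ι : Type*} [DecidableEq ι] (A₁ A₂ : Finset ι)
    (h₁ h₂ : (ι → ℤ) → ℂ)
    (hfin₁ : (Function.support h₁).Finite) (hfin₂ : (Function.support h₂).Finite)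
    (hv₁ : ∀ f : ι → ℤ, h₁ f ≠ 0 → ∀ x ∉ A₁, f x = 0)
    (hv₂ : ∀ f : ι → ℤ, h₂ f ≠ 0 → ∀ x ∉ A₂, f x = 0)
    (X Y : Finset ι) (hdisj : Disjoint X Y) (hXY : X ∪ Y = (A₁ ∪ A₂) \ (A₁ ∩ A₂))
    (C₁ C₂ : ℝ) (hC₁ : 0 ≤ C₁) (hC₂ : 0 ≤ C₂)
    (hop₁ : ∀ z : (ι → ℤ) → ℂ, (Function.support z).Finite →
      ∑ᶠ g ∈ {g : ι → ℤ | ∀ x ∉ Y ∩ A₁, g x = 0},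
          ‖∑ᶠ f ∈ {f : ι → ℤ | ∀ x ∉ X ∩ A₁ ∪ A₁ ∩ A₂, f x = 0}, h₁ (f + g) * z f‖ ^ 2 ≤
        C₁ ^ 2 * ∑ᶠ f ∈ {f : ι → ℤ | ∀ x ∉ X ∩ A₁ ∪ A₁ ∩ A₂, f x = 0}, ‖z f‖ ^ 2)
    (hop₂ : ∀ z : (ι → ℤ) → ℂ, (Function.support z).Finite →
      ∑ᶠ g ∈ {g : ι → ℤ | ∀ x ∉ A₁ ∩ A₂ ∪ Y ∩ A₂, g x = 0},
          ‖∑ᶠ f ∈ {f : ι → ℤ | ∀ x ∉ X ∩ A₂, f x = 0}, h₂ (f + g) * z f‖ ^ 2 ≤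
        C₂ ^ 2 * ∑ᶠ f ∈ {f : ι → ℤ | ∀ x ∉ X ∩ A₂, f x = 0}, ‖z f‖ ^ 2) :
    ∀ z : (ι → ℤ) → ℂ, (Function.support z).Finite →
      ∑ᶠ g ∈ {g : ι → ℤ | ∀ x ∉ Y, g x = 0},
          ‖∑ᶠ f ∈ {f : ι → ℤ | ∀ x ∉ X, f x = 0},
              (∑ᶠ lam ∈ {lam : ι → ℤ | ∀ x ∉ A₁ ∩ A₂, lam x = 0},
                h₁ ((fun x => if x ∈ A₁ then (f + g) x else 0) + lam) *
                  h₂ ((fun x => if x ∈ A₂ then (f + g) x else 0) + lam)) * z f‖ ^ 2 ≤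
        (C₁ * C₂) ^ 2 * ∑ᶠ f ∈ {f : ι → ℤ | ∀ x ∉ X, f x = 0}, ‖z f‖ ^ 2 := by
  classical
  intro z hz
  show (∑ᶠ g ∈ SS Y, ‖∑ᶠ f ∈ SS X,
        (∑ᶠ lam ∈ SS (A₁ ∩ A₂),
          h₁ (PP A₁ (f + g) + lam) * h₂ (PP A₂ (f + g) + lam)) * z f‖ ^ 2)
      ≤ (C₁ * C₂) ^ 2 * ∑ᶠ f ∈ SS X, ‖z f‖ ^ 2
  -- basic membership facts
  have hXmem : ∀ x ∈ X, x ∈ A₁ ∪ A₂ ∧ x ∉ A₁ ∩ A₂ := by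
    intro x hx
    have hx' : x ∈ (A₁ ∪ A₂) \ (A₁ ∩ A₂) := hXY ▸ Finset.mem_union_left Y hx
    exact Finset.mem_sdiff.mp hx'
  have hYmem : ∀ x ∈ Y, x ∈ A₁ ∪ A₂ ∧ x ∉ A₁ ∩ A₂ := by
    intro x hx
    have hx' : x ∈ (A₁ ∪ A₂) \ (A₁ ∩ A₂) := hXY ▸ Finset.mem_union_right X hx
    exact Finset.mem_sdiff.mp hx'
  have dXC : Disjoint X (A₁ ∩ A₂) := by
    rw [Finset.disjoint_left]
    intro a hx hC
    exact (hXmem a hx).2 hC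
  have dYC : Disjoint Y (A₁ ∩ A₂) := by
    rw [Finset.disjoint_left]
    intro a hx hC
    exact (hYmem a hx).2 hC
  have dX12 : Disjoint (X ∩ A₁) (X ∩ A₂) := by
    rw [Finset.disjoint_left]
    intro a h1 h2
    rw [Finset.mem_inter] at h1 h2
    exact (hXmem a h1.1).2 (Finset.mem_inter.mpr ⟨h1.2, h2.2⟩)
  have dY12 : Disjoint (Y ∩ A₁) (Y ∩ A₂) := by
    rw [Finset.disjoint_left]
    intro a h1 h2
    rw [Finset.mem_inter] at h1 h2
    exact (hYmem a h1.1).2 (Finset.mem_inter.mpr ⟨h1.2, h2.2⟩)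
  have hXun : X ∩ A₁ ∪ X ∩ A₂ = X := by
    ext a
    simp only [Finset.mem_union, Finset.mem_inter]
    constructor
    · rintro (⟨h, _⟩ | ⟨h, _⟩) <;> exact h
    · intro ha
      rcases Finset.mem_union.mp (hXmem a ha).1 with h | h
      · exact Or.inl ⟨ha, h⟩
      · exact Or.inr ⟨ha, h⟩
  have hYun : Y ∩ A₁ ∪ Y ∩ A₂ = Y := by
    ext a
    simp only [Finset.mem_union, Finset.mem_inter]
    constructor
    · rintro (⟨h, _⟩ | ⟨h, _⟩) <;> exact h
    · intro ha
      rcases Finset.mem_union.mp (hYmem a ha).1 with h | h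
      · exact Or.inl ⟨ha, h⟩
      · exact Or.inr ⟨ha, h⟩
  have d2 : Disjoint (X ∩ A₁) (A₁ ∩ A₂) := dXC.mono_left Finset.inter_subset_left
  have d4 : Disjoint (X ∩ A₂) (A₁ ∩ A₂) := dXC.mono_left Finset.inter_subset_left
  have d5 : Disjoint (X ∩ A₂) (Y ∩ A₂) :=
    hdisj.mono Finset.inter_subset_left Finset.inter_subset_left
  have d7 : Disjoint (Y ∩ A₂) (A₁ ∩ A₂) := dYC.mono_left Finset.inter_subset_left
  have d12 : Disjoint (Y ∩ A₁) (A₁ ∩ A₂) := dYC.mono_left Finset.inter_subset_left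
  have dY1X1 : Disjoint (Y ∩ A₁) (X ∩ A₁) :=
    (hdisj.mono Finset.inter_subset_left Finset.inter_subset_left).symm
  have dY2X1 : Disjoint (Y ∩ A₂) (X ∩ A₁) :=
    (hdisj.mono Finset.inter_subset_left Finset.inter_subset_left).symm
  have d1 : Disjoint (Y ∩ A₁) (X ∩ A₁ ∪ A₁ ∩ A₂) :=
    Finset.disjoint_union_right.mpr ⟨dY1X1, d12⟩
  have d8 : Disjoint (X ∩ A₂) (A₁ ∩ A₂ ∪ Y ∩ A₂) :=
    Finset.disjoint_union_right.mpr ⟨d4, d5⟩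
  -- finite image sets
  have fB1 : (PP (Y ∩ A₁) '' Function.support h₁).Finite := hfin₁.image _
  have fB2 : (PP (Y ∩ A₂) '' Function.support h₂).Finite := hfin₂.image _
  have fB3 : (PP (A₁ ∩ A₂) '' Function.support h₂).Finite := hfin₂.image _
  have fB4 : (PP (X ∩ A₁) '' Function.support z).Finite := hz.image _
  have fB5 : (PP (A₁ ∩ A₂ ∪ Y ∩ A₂) '' Function.support h₂).Finite := hfin₂.image _
  have ftrans : ∀ (a : ι → ℤ) (S : Set (ι → ℤ)), S.Finite → ((fun t => a + t) ⁻¹' S).Finite :=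
    fun a S hS => hS.preimage (fun x _ y _ h => by simpa using h)
  -- finite support of `uf`
  have usupp : ∀ g₂ ∈ SS (Y ∩ A₂),
      (Function.support (uf (X ∩ A₁) (A₁ ∩ A₂) (X ∩ A₂) h₂ z g₂)).Finite := by
    intro g₂ hg₂
    apply (Set.Finite.image2 (· + ·) fB4 fB3).subset
    intro f' hf'
    obtain ⟨hf'S, f₂, hf₂, hh₂, hzz⟩ := uf_ne_zero_elim hf'
    refine ⟨PP (X ∩ A₁) f', ?_, PP (A₁ ∩ A₂) f', ?_, PP_sum_eq d2 hf'S⟩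
    · refine ⟨PP (X ∩ A₁) f' + f₂, hzz, ?_⟩
      rw [PP_add, PP_eq_self (PP_mem _ _), PP_eq_zero dX12 hf₂, add_zero]
    · refine ⟨f₂ + (PP (A₁ ∩ A₂) f' + g₂), hh₂, ?_⟩
      rw [PP_add, PP_eq_zero d4.symm hf₂, zero_add, PP_add,
        PP_eq_self (PP_mem _ _), PP_eq_zero d7.symm hg₂, add_zero]
  have uproj : ∀ a ∈ SS (Y ∩ A₂), ∀ f' : ι → ℤ,
      uf (X ∩ A₁) (A₁ ∩ A₂) (X ∩ A₂) h₂ z a f' ≠ 0 →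
      a ∈ PP (Y ∩ A₂) '' Function.support h₂ := by
    intro a ha f' hne
    obtain ⟨hf'S, f₂, hf₂, hh₂, -⟩ := uf_ne_zero_elim hne
    refine ⟨f₂ + (PP (A₁ ∩ A₂) f' + a), hh₂, ?_⟩
    rw [PP_add, PP_eq_zero d5.symm hf₂, zero_add, PP_add,
      PP_eq_zero d7 (PP_mem _ _), PP_eq_self ha, zero_add]
  -- Step A : rewrite the inner double sum
  have keyg : ∀ g ∈ SS Y,
      (∑ᶠ f ∈ SS X, (∑ᶠ lam ∈ SS (A₁ ∩ A₂),
          h₁ (PP A₁ (f + g) + lam) * h₂ (PP A₂ (f + g) + lam)) * z f)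
      = ∑ᶠ f' ∈ SS (X ∩ A₁ ∪ A₁ ∩ A₂),
          h₁ (f' + PP (Y ∩ A₁) g) *
            uf (X ∩ A₁) (A₁ ∩ A₂) (X ∩ A₂) h₂ z (PP (Y ∩ A₂) g) f' := by
    intro g hg
    have hdA1 : Disjoint (X ∩ A₂) A₁ := by
      rw [Finset.disjoint_left]
      intro a hx h2
      rw [Finset.mem_inter] at hx
      exact Finset.disjoint_left.mp dXC hx.1 (Finset.mem_inter.mpr ⟨h2, hx.2⟩)
    have hdA2 : Disjoint (X ∩ A₁) A₂ := by
      rw [Finset.disjoint_left]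
      intro a hx h2
      rw [Finset.mem_inter] at hx
      exact Finset.disjoint_left.mp dXC hx.1 (Finset.mem_inter.mpr ⟨hx.2, h2⟩)
    have proj : ∀ (B B' : Finset ι), Disjoint (X ∩ B') B →
        ∀ f₁ ∈ SS (X ∩ B), ∀ f₂ ∈ SS (X ∩ B'),
        PP B (f₁ + f₂ + g) = f₁ + PP (Y ∩ B) g := by
      intro B B' hd f₁ hf₁ f₂ hf₂
      funext x
      simp only [PP, Pi.add_apply]
      by_cases hxB : x ∈ B
      · rw [if_pos hxB]
        have hf₂x : f₂ x = 0 := hf₂ x (fun hm => Finset.disjoint_left.mp hd hm hxB)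
        by_cases hxY : x ∈ Y
        · rw [if_pos (Finset.mem_inter.mpr ⟨hxY, hxB⟩), hf₂x]
          ring
        · rw [if_neg (fun hm => hxY (Finset.mem_inter.mp hm).1), hg x hxY, hf₂x]
          ring
      · rw [if_neg hxB, if_neg (fun hm => hxB (Finset.mem_inter.mp hm).2),
          hf₁ x (fun hm => hxB (Finset.mem_inter.mp hm).2)]
        ring
    calc (∑ᶠ f ∈ SS X, (∑ᶠ lam ∈ SS (A₁ ∩ A₂),
            h₁ (PP A₁ (f + g) + lam) * h₂ (PP A₂ (f + g) + lam)) * z f)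
        = ∑ᶠ f ∈ SS (X ∩ A₁ ∪ X ∩ A₂), (∑ᶠ lam ∈ SS (A₁ ∩ A₂),
            h₁ (PP A₁ (f + g) + lam) * h₂ (PP A₂ (f + g) + lam)) * z f := by
          rw [hXun]
      _ = ∑ᶠ f₁ ∈ SS (X ∩ A₁), ∑ᶠ f₂ ∈ SS (X ∩ A₂),
            (∑ᶠ lam ∈ SS (A₁ ∩ A₂),
              h₁ (PP A₁ (f₁ + f₂ + g) + lam) * h₂ (PP A₂ (f₁ + f₂ + g) + lam)) *
              z (f₁ + f₂) := by
          apply finsum_SS_union _ _ dX12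
          apply supp_bound1 hz
          intro f _ hne
          exact fun h0 => hne (by simp [h0])
      _ = ∑ᶠ f₁ ∈ SS (X ∩ A₁), ∑ᶠ f₂ ∈ SS (X ∩ A₂), ∑ᶠ lam ∈ SS (A₁ ∩ A₂),
            h₁ (f₁ + PP (Y ∩ A₁) g + lam) * h₂ (f₂ + PP (Y ∩ A₂) g + lam) *
              z (f₁ + f₂) := by
          apply finsum_mem_congr rfl
          intro f₁ hf₁
          apply finsum_mem_congr rfl
          intro f₂ hf₂
          have e₁ : PP A₁ (f₁ + f₂ + g) = f₁ + PP (Y ∩ A₁) g :=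
            proj A₁ A₂ hdA1 f₁ hf₁ f₂ hf₂
          have e₂ : PP A₂ (f₁ + f₂ + g) = f₂ + PP (Y ∩ A₂) g := by
            rw [show f₁ + f₂ + g = f₂ + f₁ + g from by ring]
            exact proj A₂ A₁ hdA2 f₂ hf₂ f₁ hf₁
          rw [e₁, e₂]
          have hfin : (SS (A₁ ∩ A₂) ∩ Function.support (fun lam =>
              h₁ (f₁ + PP (Y ∩ A₁) g + lam) *
                h₂ (f₂ + PP (Y ∩ A₂) g + lam))).Finite := by
            apply supp_bound1 (ftrans (f₁ + PP (Y ∩ A₁) g) _ hfin₁)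
            intro lam _ hne
            exact fun h0 => hne (by simp [h0])
          exact (finsum_mem_mul_right' (z (f₁ + f₂)) hfin).symm
      _ = ∑ᶠ f₁ ∈ SS (X ∩ A₁), ∑ᶠ lam ∈ SS (A₁ ∩ A₂), ∑ᶠ f₂ ∈ SS (X ∩ A₂),
            h₁ (f₁ + PP (Y ∩ A₁) g + lam) * h₂ (f₂ + PP (Y ∩ A₂) g + lam) *
              z (f₁ + f₂) := by
          apply finsum_mem_congr rfl
          intro f₁ hf₁
          apply finsum_SS_swap _ _ d4 (fun f₂ lam =>
            h₁ (f₁ + PP (Y ∩ A₁) g + lam) * h₂ (f₂ + PP (Y ∩ A₂) g + lam) *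
              z (f₁ + f₂))
          apply supp_bound2 d4 (ftrans f₁ _ hz) fB3
          intro f hfS hne
          have hzz : z (f₁ + PP (X ∩ A₂) f) ≠ 0 := fun h0 => hne (by simp [h0])
          have hh₂ : h₂ (PP (X ∩ A₂) f + PP (Y ∩ A₂) g + PP (A₁ ∩ A₂) f) ≠ 0 :=
            fun h0 => hne (by simp [h0])
          constructor
          · exact hzz
          · refine ⟨PP (X ∩ A₂) f + PP (Y ∩ A₂) g + PP (A₁ ∩ A₂) f, hh₂, ?_⟩
            rw [PP_add, PP_add, PP_eq_zero d4.symm (PP_mem _ _),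
              PP_eq_zero d7.symm (PP_mem _ _), PP_eq_self (PP_mem _ _),
              zero_add, zero_add]
      _ = ∑ᶠ f₁ ∈ SS (X ∩ A₁), ∑ᶠ lam ∈ SS (A₁ ∩ A₂),
            h₁ (f₁ + PP (Y ∩ A₁) g + lam) *
              (∑ᶠ f₂ ∈ SS (X ∩ A₂),
                h₂ (f₂ + PP (Y ∩ A₂) g + lam) * z (f₁ + f₂)) := by
          apply finsum_mem_congr rfl
          intro f₁ hf₁
          apply finsum_mem_congr rfl
          intro lam hlam
          have hfin : (SS (X ∩ A₂) ∩ Function.support (fun f₂ =>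
              h₂ (f₂ + PP (Y ∩ A₂) g + lam) * z (f₁ + f₂))).Finite := by
            apply supp_bound1 (ftrans f₁ _ hz)
            intro f₂ _ hne
            exact fun h0 => hne (by simp [h0])
          calc (∑ᶠ f₂ ∈ SS (X ∩ A₂),
                h₁ (f₁ + PP (Y ∩ A₁) g + lam) * h₂ (f₂ + PP (Y ∩ A₂) g + lam) *
                  z (f₁ + f₂))
              = ∑ᶠ f₂ ∈ SS (X ∩ A₂),
                  h₁ (f₁ + PP (Y ∩ A₁) g + lam) *
                    (h₂ (f₂ + PP (Y ∩ A₂) g + lam) * z (f₁ + f₂)) :=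
                finsum_mem_congr rfl (fun f₂ _ => mul_assoc _ _ _)
            _ = h₁ (f₁ + PP (Y ∩ A₁) g + lam) *
                  ∑ᶠ f₂ ∈ SS (X ∩ A₂),
                    h₂ (f₂ + PP (Y ∩ A₂) g + lam) * z (f₁ + f₂) :=
                finsum_mem_mul_left' _ hfin
      _ = ∑ᶠ f' ∈ SS (X ∩ A₁ ∪ A₁ ∩ A₂),
            h₁ (f' + PP (Y ∩ A₁) g) * uf (X ∩ A₁) (A₁ ∩ A₂) (X ∩ A₂) h₂ z (PP (Y ∩ A₂) g) f' := by
          have hfinF : (SS (X ∩ A₁ ∪ A₁ ∩ A₂) ∩ Function.support (fun f' =>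
              h₁ (f' + PP (Y ∩ A₁) g) * uf (X ∩ A₁) (A₁ ∩ A₂) (X ∩ A₂) h₂ z (PP (Y ∩ A₂) g) f')).Finite := by
            apply supp_bound1 (hfin₁.image (PP (X ∩ A₁ ∪ A₁ ∩ A₂)))
            intro f' hf'S hne
            have hh₁ : h₁ (f' + PP (Y ∩ A₁) g) ≠ 0 := fun h0 => hne (by simp [h0])
            refine ⟨f' + PP (Y ∩ A₁) g, hh₁, ?_⟩
            rw [PP_add, PP_eq_self hf'S, PP_eq_zero d1.symm (PP_mem _ _), add_zero]
          rw [finsum_SS_union _ _ d2 _ hfinF]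
          apply finsum_mem_congr rfl
          intro f₁ hf₁
          apply finsum_mem_congr rfl
          intro lam hlam
          rw [uf_eq (add_mem_SS hf₁ hlam), PP_add_left d2 hf₁ hlam,
            PP_add_right d2 hf₁ hlam,
            show f₁ + lam + PP (Y ∩ A₁) g = f₁ + PP (Y ∩ A₁) g + lam from by ring]
          congr 1
          show (∑ᶠ f₂ ∈ SS (X ∩ A₂), h₂ (f₂ + PP (Y ∩ A₂) g + lam) * z (f₁ + f₂))
              = ∑ᶠ f₂ ∈ SS (X ∩ A₂),
                  h₂ (f₂ + (lam + PP (Y ∩ A₂) g)) * z (f₁ + f₂)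
          apply finsum_mem_congr rfl
          intro f₂ _
          rw [show f₂ + PP (Y ∩ A₂) g + lam = f₂ + (lam + PP (Y ∩ A₂) g) from by ring]
  have eqA : (∑ᶠ g ∈ SS Y, ‖∑ᶠ f ∈ SS X,
        (∑ᶠ lam ∈ SS (A₁ ∩ A₂),
          h₁ (PP A₁ (f + g) + lam) * h₂ (PP A₂ (f + g) + lam)) * z f‖ ^ 2)
      = ∑ᶠ g₂ ∈ SS (Y ∩ A₂), ∑ᶠ g₁ ∈ SS (Y ∩ A₁),
          ‖∑ᶠ f' ∈ SS (X ∩ A₁ ∪ A₁ ∩ A₂),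
            h₁ (f' + g₁) * uf (X ∩ A₁) (A₁ ∩ A₂) (X ∩ A₂) h₂ z g₂ f'‖ ^ 2 := by
    have hSY : (SS Y : Set (ι → ℤ)) = SS (Y ∩ A₂ ∪ Y ∩ A₁) := by
      rw [Finset.union_comm, hYun]
    have e0 : (∑ᶠ g ∈ SS Y, ‖∑ᶠ f ∈ SS X,
          (∑ᶠ lam ∈ SS (A₁ ∩ A₂),
            h₁ (PP A₁ (f + g) + lam) * h₂ (PP A₂ (f + g) + lam)) * z f‖ ^ 2)
        = ∑ᶠ g ∈ SS (Y ∩ A₂ ∪ Y ∩ A₁),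
            ‖∑ᶠ f' ∈ SS (X ∩ A₁ ∪ A₁ ∩ A₂),
              h₁ (f' + PP (Y ∩ A₁) g) *
                uf (X ∩ A₁) (A₁ ∩ A₂) (X ∩ A₂) h₂ z (PP (Y ∩ A₂) g) f'‖ ^ 2 := by
      apply finsum_mem_congr hSY
      intro g hg
      rw [keyg g (by rw [hSY]; exact hg)]
    rw [e0]
    have hfin : (SS (Y ∩ A₂ ∪ Y ∩ A₁) ∩ Function.support (fun g =>
        ‖∑ᶠ f' ∈ SS (X ∩ A₁ ∪ A₁ ∩ A₂),
          h₁ (f' + PP (Y ∩ A₁) g) *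
            uf (X ∩ A₁) (A₁ ∩ A₂) (X ∩ A₂) h₂ z (PP (Y ∩ A₂) g) f'‖ ^ 2)).Finite := by
      apply supp_bound2 dY12.symm fB2 fB1
      intro g hgS hne
      have hne' : (∑ᶠ f' ∈ SS (X ∩ A₁ ∪ A₁ ∩ A₂),
          h₁ (f' + PP (Y ∩ A₁) g) *
            uf (X ∩ A₁) (A₁ ∩ A₂) (X ∩ A₂) h₂ z (PP (Y ∩ A₂) g) f') ≠ 0 := by
        intro h0
        exact hne (by rw [h0]; simp)
      obtain ⟨f', hf'S, hprod⟩ := exists_of_finsum_mem_ne_zero hne'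
      have hh₁ : h₁ (f' + PP (Y ∩ A₁) g) ≠ 0 := fun h0 => hprod (by rw [h0, zero_mul])
      have hu : uf (X ∩ A₁) (A₁ ∩ A₂) (X ∩ A₂) h₂ z (PP (Y ∩ A₂) g) f' ≠ 0 :=
        fun h0 => hprod (by rw [h0, mul_zero])
      constructor
      · exact uproj _ (PP_mem _ _) f' hu
      · refine ⟨f' + PP (Y ∩ A₁) g, hh₁, ?_⟩
        rw [PP_add, PP_eq_zero d1 hf'S, zero_add, PP_eq_self (PP_mem _ _)]
    rw [finsum_SS_union _ _ dY12.symm _ hfin]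
    apply finsum_mem_congr rfl
    intro g₂ hg₂
    apply finsum_mem_congr rfl
    intro g₁ hg₁
    rw [PP_add_right dY12.symm hg₂ hg₁, PP_add_left dY12.symm hg₂ hg₁]
  have ineqB : (∑ᶠ g₂ ∈ SS (Y ∩ A₂), ∑ᶠ g₁ ∈ SS (Y ∩ A₁),
          ‖∑ᶠ f' ∈ SS (X ∩ A₁ ∪ A₁ ∩ A₂),
            h₁ (f' + g₁) * uf (X ∩ A₁) (A₁ ∩ A₂) (X ∩ A₂) h₂ z g₂ f'‖ ^ 2)
      ≤ ∑ᶠ g₂ ∈ SS (Y ∩ A₂), C₁ ^ 2 * ∑ᶠ f' ∈ SS (X ∩ A₁ ∪ A₁ ∩ A₂),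
          ‖uf (X ∩ A₁) (A₁ ∩ A₂) (X ∩ A₂) h₂ z g₂ f'‖ ^ 2 := by
    have hBfin : (SS (Y ∩ A₂) ∩ PP (Y ∩ A₂) '' Function.support h₂).Finite :=
      fB2.subset Set.inter_subset_right
    apply finsum_mem_mono' hBfin.toFinset
    · intro a ha
      exact ((Set.Finite.mem_toFinset hBfin).mp (Finset.mem_coe.mp ha)).1
    · intro a haS hne
      obtain ⟨g₁, hg₁, hne₁⟩ := exists_of_finsum_mem_ne_zero hne
      have hne₂ : (∑ᶠ f' ∈ SS (X ∩ A₁ ∪ A₁ ∩ A₂),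
          h₁ (f' + g₁) * uf (X ∩ A₁) (A₁ ∩ A₂) (X ∩ A₂) h₂ z a f') ≠ 0 := by
        intro h0
        exact hne₁ (by rw [h0]; simp)
      obtain ⟨f', hf'S, hprod⟩ := exists_of_finsum_mem_ne_zero hne₂
      have hu : uf (X ∩ A₁) (A₁ ∩ A₂) (X ∩ A₂) h₂ z a f' ≠ 0 :=
        fun h0 => hprod (by rw [h0, mul_zero])
      rw [Set.Finite.mem_toFinset]
      exact ⟨haS, uproj a haS f' hu⟩
    · intro a haS hne
      have hne' : (∑ᶠ f' ∈ SS (X ∩ A₁ ∪ A₁ ∩ A₂),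
          ‖uf (X ∩ A₁) (A₁ ∩ A₂) (X ∩ A₂) h₂ z a f'‖ ^ 2) ≠ 0 := by
        intro h0
        rw [h0, mul_zero] at hne
        exact hne rfl
      obtain ⟨f', hf'S, hne₁⟩ := exists_of_finsum_mem_ne_zero hne'
      have hu : uf (X ∩ A₁) (A₁ ∩ A₂) (X ∩ A₂) h₂ z a f' ≠ 0 := by
        intro h0
        exact hne₁ (by rw [h0]; simp)
      rw [Set.Finite.mem_toFinset]
      exact ⟨haS, uproj a haS f' hu⟩
    · intro a ha
      rw [Set.Finite.mem_toFinset] at ha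
      exact hop₁ (uf (X ∩ A₁) (A₁ ∩ A₂) (X ∩ A₂) h₂ z a) (usupp a ha.1)
  have eqC : (∑ᶠ g₂ ∈ SS (Y ∩ A₂), C₁ ^ 2 * ∑ᶠ f' ∈ SS (X ∩ A₁ ∪ A₁ ∩ A₂),
          ‖uf (X ∩ A₁) (A₁ ∩ A₂) (X ∩ A₂) h₂ z g₂ f'‖ ^ 2)
      = C₁ ^ 2 * ∑ᶠ f₁ ∈ SS (X ∩ A₁), ∑ᶠ μ ∈ SS (A₁ ∩ A₂ ∪ Y ∩ A₂),
          ‖wf (X ∩ A₂) h₂ z f₁ μ‖ ^ 2 := by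
    have hQfin : (SS (Y ∩ A₂) ∩ Function.support (fun g₂ =>
        ∑ᶠ f' ∈ SS (X ∩ A₁ ∪ A₁ ∩ A₂), ‖uf (X ∩ A₁) (A₁ ∩ A₂) (X ∩ A₂) h₂ z g₂ f'‖ ^ 2)).Finite := by
      apply supp_bound1 fB2
      intro g₂ hg₂ hne
      obtain ⟨f', -, hne'⟩ := exists_of_finsum_mem_ne_zero hne
      have hu : uf (X ∩ A₁) (A₁ ∩ A₂) (X ∩ A₂) h₂ z g₂ f' ≠ 0 := fun h0 => hne' (by rw [h0]; simp)
      exact uproj g₂ hg₂ f' hu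
    rw [finsum_mem_mul_left' (C₁ ^ 2 : ℝ) hQfin]
    congr 1
    calc (∑ᶠ g₂ ∈ SS (Y ∩ A₂), ∑ᶠ f' ∈ SS (X ∩ A₁ ∪ A₁ ∩ A₂), ‖uf (X ∩ A₁) (A₁ ∩ A₂) (X ∩ A₂) h₂ z g₂ f'‖ ^ 2)
        = ∑ᶠ g₂ ∈ SS (Y ∩ A₂), ∑ᶠ f₁ ∈ SS (X ∩ A₁), ∑ᶠ lam ∈ SS (A₁ ∩ A₂),
            ‖wf (X ∩ A₂) h₂ z f₁ (lam + g₂)‖ ^ 2 := by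
          apply finsum_mem_congr rfl
          intro g₂ hg₂
          have hfin : (SS (X ∩ A₁ ∪ A₁ ∩ A₂) ∩ Function.support (fun f' =>
              ‖uf (X ∩ A₁) (A₁ ∩ A₂) (X ∩ A₂) h₂ z g₂ f'‖ ^ 2)).Finite := by
            apply supp_bound1 (usupp g₂ hg₂)
            intro f' _ hne
            exact fun h0 => hne (by rw [h0]; simp)
          rw [finsum_SS_union _ _ d2 _ hfin]
          apply finsum_mem_congr rfl
          intro f₁ hf₁
          apply finsum_mem_congr rfl
          intro lam hlam
          rw [uf_eq (add_mem_SS hf₁ hlam), PP_add_left d2 hf₁ hlam,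
            PP_add_right d2 hf₁ hlam]
      _ = ∑ᶠ f₁ ∈ SS (X ∩ A₁), ∑ᶠ g₂ ∈ SS (Y ∩ A₂), ∑ᶠ lam ∈ SS (A₁ ∩ A₂),
            ‖wf (X ∩ A₂) h₂ z f₁ (lam + g₂)‖ ^ 2 := by
          apply finsum_SS_swap _ _ dY2X1 (fun g₂ f₁ =>
            ∑ᶠ lam ∈ SS (A₁ ∩ A₂), ‖wf (X ∩ A₂) h₂ z f₁ (lam + g₂)‖ ^ 2)
          apply supp_bound2 dY2X1 fB2 fB4
          intro f hfS hne
          obtain ⟨lam, hlam, hne'⟩ := exists_of_finsum_mem_ne_zero hne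
          have hw : wf (X ∩ A₂) h₂ z (PP (X ∩ A₁) f) (lam + PP (Y ∩ A₂) f) ≠ 0 :=
            fun h0 => hne' (by rw [h0]; simp)
          obtain ⟨f₂, hf₂, hh₂, hzz⟩ := wf_ne_zero_elim hw
          constructor
          · refine ⟨f₂ + (lam + PP (Y ∩ A₂) f), hh₂, ?_⟩
            rw [PP_add, PP_eq_zero d5.symm hf₂, zero_add, PP_add,
              PP_eq_zero d7 hlam, zero_add, PP_eq_self (PP_mem _ _)]
          · refine ⟨PP (X ∩ A₁) f + f₂, hzz, ?_⟩
            rw [PP_add, PP_eq_self (PP_mem _ _), PP_eq_zero dX12 hf₂, add_zero]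
      _ = ∑ᶠ f₁ ∈ SS (X ∩ A₁), ∑ᶠ lam ∈ SS (A₁ ∩ A₂), ∑ᶠ g₂ ∈ SS (Y ∩ A₂),
            ‖wf (X ∩ A₂) h₂ z f₁ (lam + g₂)‖ ^ 2 := by
          apply finsum_mem_congr rfl
          intro f₁ hf₁
          apply finsum_SS_swap _ _ d7 (fun g₂ lam =>
            ‖wf (X ∩ A₂) h₂ z f₁ (lam + g₂)‖ ^ 2)
          apply supp_bound2 d7 fB2 fB3
          intro f hfS hne
          have hw : wf (X ∩ A₂) h₂ z f₁ (PP (A₁ ∩ A₂) f + PP (Y ∩ A₂) f) ≠ 0 :=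
            fun h0 => hne (by rw [h0]; simp)
          obtain ⟨f₂, hf₂, hh₂, -⟩ := wf_ne_zero_elim hw
          constructor
          · refine ⟨f₂ + (PP (A₁ ∩ A₂) f + PP (Y ∩ A₂) f), hh₂, ?_⟩
            rw [PP_add, PP_eq_zero d5.symm hf₂, zero_add, PP_add,
              PP_eq_zero d7 (PP_mem _ _), zero_add, PP_eq_self (PP_mem _ _)]
          · refine ⟨f₂ + (PP (A₁ ∩ A₂) f + PP (Y ∩ A₂) f), hh₂, ?_⟩
            rw [PP_add, PP_eq_zero d4.symm hf₂, zero_add, PP_add,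
              PP_eq_self (PP_mem _ _), PP_eq_zero d7.symm (PP_mem _ _), add_zero]
      _ = ∑ᶠ f₁ ∈ SS (X ∩ A₁), ∑ᶠ μ ∈ SS (A₁ ∩ A₂ ∪ Y ∩ A₂),
            ‖wf (X ∩ A₂) h₂ z f₁ μ‖ ^ 2 := by
          apply finsum_mem_congr rfl
          intro f₁ hf₁
          refine (finsum_SS_union (A₁ ∩ A₂) (Y ∩ A₂) d7.symm
            (fun μ => ‖wf (X ∩ A₂) h₂ z f₁ μ‖ ^ 2) ?_).symm
          apply supp_bound1 fB5
          intro μ hμ hne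
          have hw : wf (X ∩ A₂) h₂ z f₁ μ ≠ 0 := fun h0 => hne (by rw [h0]; simp)
          obtain ⟨f₂, hf₂, hh₂, -⟩ := wf_ne_zero_elim hw
          refine ⟨f₂ + μ, hh₂, ?_⟩
          rw [PP_add, PP_eq_zero d8.symm hf₂, zero_add, PP_eq_self hμ]
  have ineqD : (∑ᶠ f₁ ∈ SS (X ∩ A₁), ∑ᶠ μ ∈ SS (A₁ ∩ A₂ ∪ Y ∩ A₂),
          ‖wf (X ∩ A₂) h₂ z f₁ μ‖ ^ 2)
      ≤ C₂ ^ 2 * ∑ᶠ f ∈ SS X, ‖z f‖ ^ 2 := by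
    have hBfin : (SS (X ∩ A₁) ∩ PP (X ∩ A₁) '' Function.support z).Finite :=
      fB4.subset Set.inter_subset_right
    have hproj : ∀ f₁ ∈ SS (X ∩ A₁), ∀ f₂ ∈ SS (X ∩ A₂), z (f₁ + f₂) ≠ 0 →
        f₁ ∈ PP (X ∩ A₁) '' Function.support z := by
      intro f₁ hf₁ f₂ hf₂ hzz
      refine ⟨f₁ + f₂, hzz, ?_⟩
      rw [PP_add, PP_eq_self hf₁, PP_eq_zero dX12 hf₂, add_zero]
    have step1 : (∑ᶠ f₁ ∈ SS (X ∩ A₁), ∑ᶠ μ ∈ SS (A₁ ∩ A₂ ∪ Y ∩ A₂),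
          ‖wf (X ∩ A₂) h₂ z f₁ μ‖ ^ 2)
        ≤ ∑ᶠ f₁ ∈ SS (X ∩ A₁), C₂ ^ 2 * ∑ᶠ f₂ ∈ SS (X ∩ A₂), ‖z (f₁ + f₂)‖ ^ 2 := by
      apply finsum_mem_mono' hBfin.toFinset
      · intro a ha
        exact ((Set.Finite.mem_toFinset hBfin).mp (Finset.mem_coe.mp ha)).1
      · intro f₁ hf₁S hne
        obtain ⟨μ, -, hne'⟩ := exists_of_finsum_mem_ne_zero hne
        have hw : wf (X ∩ A₂) h₂ z f₁ μ ≠ 0 := fun h0 => hne' (by rw [h0]; simp)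
        obtain ⟨f₂, hf₂, -, hzz⟩ := wf_ne_zero_elim hw
        rw [Set.Finite.mem_toFinset]
        exact ⟨hf₁S, hproj f₁ hf₁S f₂ hf₂ hzz⟩
      · intro f₁ hf₁S hne
        have hne' : (∑ᶠ f₂ ∈ SS (X ∩ A₂), ‖z (f₁ + f₂)‖ ^ 2) ≠ 0 := by
          intro h0
          rw [h0, mul_zero] at hne
          exact hne rfl
        obtain ⟨f₂, hf₂, hne₂⟩ := exists_of_finsum_mem_ne_zero hne'
        have hzz : z (f₁ + f₂) ≠ 0 := fun h0 => hne₂ (by rw [h0]; simp)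
        rw [Set.Finite.mem_toFinset]
        exact ⟨hf₁S, hproj f₁ hf₁S f₂ hf₂ hzz⟩
      · intro f₁ hf₁
        exact hop₂ (fun f₂ => z (f₁ + f₂)) (ftrans f₁ _ hz)
    refine le_trans step1 (le_of_eq ?_)
    have hfin1 : (SS (X ∩ A₁) ∩ Function.support (fun f₁ =>
        ∑ᶠ f₂ ∈ SS (X ∩ A₂), ‖z (f₁ + f₂)‖ ^ 2)).Finite := by
      apply supp_bound1 fB4
      intro f₁ hf₁ hne
      obtain ⟨f₂, hf₂, hne₂⟩ := exists_of_finsum_mem_ne_zero hne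
      have hzz : z (f₁ + f₂) ≠ 0 := fun h0 => hne₂ (by rw [h0]; simp)
      exact hproj f₁ hf₁ f₂ hf₂ hzz
    rw [finsum_mem_mul_left' (C₂ ^ 2 : ℝ) hfin1]
    congr 1
    have hfin2 : (SS (X ∩ A₁ ∪ X ∩ A₂) ∩ Function.support
        (fun f : ι → ℤ => ‖z f‖ ^ 2)).Finite := by
      apply supp_bound1 hz
      intro f _ hne
      exact fun h0 => hne (by rw [h0]; simp)
    calc (∑ᶠ f₁ ∈ SS (X ∩ A₁), ∑ᶠ f₂ ∈ SS (X ∩ A₂), ‖z (f₁ + f₂)‖ ^ 2)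
        = ∑ᶠ f ∈ SS (X ∩ A₁ ∪ X ∩ A₂), ‖z f‖ ^ 2 :=
          (finsum_SS_union _ _ dX12 _ hfin2).symm
      _ = ∑ᶠ f ∈ SS X, ‖z f‖ ^ 2 := by rw [hXun]
  calc (∑ᶠ g ∈ SS Y, ‖∑ᶠ f ∈ SS X,
        (∑ᶠ lam ∈ SS (A₁ ∩ A₂),
          h₁ (PP A₁ (f + g) + lam) * h₂ (PP A₂ (f + g) + lam)) * z f‖ ^ 2)
      = ∑ᶠ g₂ ∈ SS (Y ∩ A₂), ∑ᶠ g₁ ∈ SS (Y ∩ A₁),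
          ‖∑ᶠ f' ∈ SS (X ∩ A₁ ∪ A₁ ∩ A₂),
            h₁ (f' + g₁) * uf (X ∩ A₁) (A₁ ∩ A₂) (X ∩ A₂) h₂ z g₂ f'‖ ^ 2 := eqA
    _ ≤ ∑ᶠ g₂ ∈ SS (Y ∩ A₂), C₁ ^ 2 * ∑ᶠ f' ∈ SS (X ∩ A₁ ∪ A₁ ∩ A₂),
          ‖uf (X ∩ A₁) (A₁ ∩ A₂) (X ∩ A₂) h₂ z g₂ f'‖ ^ 2 := ineqB
    _ = C₁ ^ 2 * ∑ᶠ f₁ ∈ SS (X ∩ A₁), ∑ᶠ μ ∈ SS (A₁ ∩ A₂ ∪ Y ∩ A₂),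
          ‖wf (X ∩ A₂) h₂ z f₁ μ‖ ^ 2 := eqC
    _ ≤ C₁ ^ 2 * (C₂ ^ 2 * ∑ᶠ f ∈ SS X, ‖z f‖ ^ 2) := by
        apply mul_le_mul_of_nonneg_left ineqD (by positivity)
    _ = (C₁ * C₂) ^ 2 * ∑ᶠ f ∈ SS X, ‖z f‖ ^ 2 := by ring
end
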